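/- arXiv:1409.6276 — 11 statements merged into one kernel-verified Lean document; each statement's English description precedes it below -/
import Mathlib

section
/- Let X₁, …, Xₙ be i.i.d. random variables with the beta distribution of parameters α > 0, β > 0, let X̄ₙ = (1/n)∑_{i=1}^n Xᵢ, and let μ = α/(α+β). For z ∈ (0,1), define α̂ = βz/(1−z) and β̂ = α(1−z)/z. Then: (i) for 0 < z ≤ μ, Pr{X̄ₙ ≤ z} ≤ [ (B(α̂,β)/B(α,β)) · z^α / z^{α̂} ]ⁿ; (ii) for μ ≤ z < 1, Pr{X̄ₙ ≥ z} ≤ [ (B(α,β̂)/B(α,β)) · (1−z)^β / (1−z)^{β̂} ]ⁿ. -/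
open MeasureTheory ProbabilityTheory Real

/-- The Beta function `B(a,b) = Γ(a)Γ(b)/Γ(a+b)`. -/
noncomputable def betaFn (a b : ℝ) : ℝ := Real.Gamma a * Real.Gamma b / Real.Gamma (a + b)

/-!
A Chernoff bound with the multiplicative moments `E[X^p (1-X)^q] = B(α+p, β+q) / B(α, β)` in
place of exponential ones. On `{X̄ₙ ≤ z}`, AM–GM gives `∏ Xᵢ ≤ zⁿ`, hence `∏ Xᵢ^p ≥ z^{np}` for
`p = α̂ - α ≤ 0`; Markov's inequality and independence then bound the probability by
`(B(α̂, β) / B(α, β))ⁿ z^{-np}`. The upper tail is the same argument for `1 - Xᵢ` with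
`q = β̂ - β ≤ 0`. The bound holds for every `0 < α̂ ≤ α`; the stated `α̂` is the one for which
Beta(α̂, β) has mean `z`.
-/

open scoped ENNReal
open Set

lemma betaFn_eq_beta : betaFn = ProbabilityTheory.beta := rfl

lemma withDensity_eq_betaMeasure (α β : ℝ) :
    volume.withDensity (fun x => ENNReal.ofReal
      (if 0 < x ∧ x < 1 then x ^ (α - 1) * (1 - x) ^ (β - 1) / betaFn α β else 0)) =
      betaMeasure α β := by
  rw [betaMeasure, betaFn_eq_beta]
  congr with x
  rw [betaPDF_eq]
  congr 2
  ring

lemma ae_mem_Ioo_betaMeasure (α β : ℝ) : ∀ᵐ x ∂betaMeasure α β, x ∈ Ioo 0 1 := by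
  rw [betaMeasure, ae_withDensity_iff (by unfold betaPDF; fun_prop)]
  refine Filter.Eventually.of_forall fun x hx => ?_
  contrapose! hx
  simp [betaPDF_eq, show ¬(0 < x ∧ x < 1) from hx]

lemma betaPDF_mul_rpow_mul_one_sub_rpow {α β : ℝ} (hα : 0 < α) (hβ : 0 < β) {p q : ℝ}
    (hp : 0 < α + p) (hq : 0 < β + q) (x : ℝ) :
    betaPDF α β x * ENNReal.ofReal (x ^ p * (1 - x) ^ q) =
      ENNReal.ofReal (beta (α + p) (β + q) / beta α β) * betaPDF (α + p) (β + q) x := by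
  by_cases hx : 0 < x ∧ x < 1
  · obtain ⟨hx0, hx1⟩ := hx
    have hx' : 0 < 1 - x := by linarith
    have hB := beta_pos hα hβ
    have hB' := beta_pos hp hq
    rw [betaPDF_of_pos_lt_one hx0 hx1, betaPDF_of_pos_lt_one hx0 hx1,
      ← ENNReal.ofReal_mul, ← ENNReal.ofReal_mul, add_sub_right_comm,
      add_sub_right_comm β, rpow_add hx0, rpow_add hx']
    · congr 1
      field_simp
    exacts [(div_pos hB' hB).le, by positivity]
  · simp [betaPDF_eq, hx]

lemma lintegral_rpow_mul_one_sub_rpow_betaMeasure {α β : ℝ} (hα : 0 < α) (hβ : 0 < β)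
    {p q : ℝ} (hp : 0 < α + p) (hq : 0 < β + q) :
    ∫⁻ x, ENNReal.ofReal (x ^ p * (1 - x) ^ q) ∂betaMeasure α β =
      ENNReal.ofReal (beta (α + p) (β + q) / beta α β) := by
  rw [betaMeasure, lintegral_withDensity_eq_lintegral_mul _ (by unfold betaPDF; fun_prop)
    (by fun_prop)]
  simp only [Pi.mul_apply, betaPDF_mul_rpow_mul_one_sub_rpow hα hβ hp hq]
  rw [lintegral_const_mul _ (by unfold betaPDF; fun_prop), lintegral_betaPDF_eq_one hp hq, mul_one]

section Chernoff

variable {Ω ι : Type*} [MeasurableSpace Ω] {P : Measure Ω} [Fintype ι] {X : ι → Ω → ℝ}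
  {μ : Measure ℝ}

lemma lintegral_prod_comp_eq_pow (hmeas : ∀ i, Measurable (X i)) (hindep : iIndepFun X P)
    (hlaw : ∀ i, P.map (X i) = μ) {g : ℝ → ℝ≥0∞} (hg : Measurable g) :
    ∫⁻ ω, ∏ i, g (X i ω) ∂P = (∫⁻ x, g x ∂μ) ^ Fintype.card ι := by
  refine (lintegral_prod_eq_prod_lintegral_of_indepFun _ (fun i => g ∘ X i)
    (hindep.comp _ fun _ => hg) fun i => hg.comp (hmeas i)).trans ?_
  simp [← lintegral_map hg (hmeas _), hlaw]

lemma measure_le_lintegral_pow_div (hmeas : ∀ i, Measurable (X i)) (hindep : iIndepFun X P)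
    (hlaw : ∀ i, P.map (X i) = μ) {g : ℝ → ℝ≥0∞} (hg : Measurable g) {E : Set Ω}
    {c : ℝ≥0∞} (hc : c ≠ 0) (hc' : c ≠ ∞) (hE : ∀ᵐ ω ∂P, ω ∈ E → c ≤ ∏ i, g (X i ω)) :
    P E ≤ (∫⁻ x, g x ∂μ) ^ Fintype.card ι / c := by
  rw [← lintegral_prod_comp_eq_pow hmeas hindep hlaw hg]
  exact (measure_mono_ae hE).trans <| meas_ge_le_lintegral_div
    (Finset.measurable_prod _ fun i _ => hg.comp (hmeas i)).aemeasurable hc hc'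

end Chernoff

lemma prod_le_mean_pow {ι : Type*} [Fintype ι] {x : ι → ℝ} (hx : ∀ i, 0 ≤ x i) :
    ∏ i, x i ≤ ((∑ i, x i) / Fintype.card ι) ^ Fintype.card ι := by
  rcases isEmpty_or_nonempty ι with hι | hι
  · simp
  have hn : (0 : ℝ) < Fintype.card ι := by exact_mod_cast Fintype.card_pos
  have hgm := geom_mean_le_arith_mean Finset.univ (fun _ => 1) x (fun _ _ => zero_le_one)
    (by simpa using hn) fun i _ => hx i
  simp only [rpow_one, Finset.sum_const, Finset.card_univ, nsmul_eq_mul, mul_one, one_mul] at hgm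
  calc ∏ i, x i = ((∏ i, x i) ^ (Fintype.card ι : ℝ)⁻¹) ^ Fintype.card ι := by
        rw [← rpow_natCast, ← rpow_mul (Finset.prod_nonneg fun i _ => hx i),
          inv_mul_cancel₀ hn.ne', rpow_one]
    _ ≤ _ := pow_le_pow_left₀ (rpow_nonneg (Finset.prod_nonneg fun i _ => hx i) _) hgm _

lemma pow_rpow_le_prod_rpow {ι : Type*} [Fintype ι] {x : ι → ℝ} (hx : ∀ i, 0 < x i)
    {z p : ℝ} (hz : 0 < z) (hp : p ≤ 0) (hmean : (∑ i, x i) / Fintype.card ι ≤ z) :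
    (z ^ p) ^ Fintype.card ι ≤ ∏ i, x i ^ p := by
  calc (z ^ p) ^ Fintype.card ι = (z ^ Fintype.card ι) ^ p := by
        rw [← rpow_mul_natCast hz.le, ← rpow_natCast, ← rpow_mul hz.le, mul_comm]
    _ ≤ (∏ i, x i) ^ p := by
        refine rpow_le_rpow_of_nonpos (Finset.prod_pos fun i _ => hx i) ?_ hp
        have hmean_nonneg : 0 ≤ (∑ i, x i) / Fintype.card ι :=
          div_nonneg (Finset.sum_nonneg fun i _ => (hx i).le) (Nat.cast_nonneg _)
        exact (prod_le_mean_pow fun i => (hx i).le).trans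
          (pow_le_pow_left₀ hmean_nonneg hmean _)
    _ = ∏ i, x i ^ p := (finsetProd_rpow _ _ (fun i _ => (hx i).le) _).symm

section BetaSample

variable {Ω ι : Type*} [MeasurableSpace Ω] {P : Measure Ω} [Fintype ι] {X : ι → Ω → ℝ}
  {α β : ℝ}

lemma ae_forall_mem_Ioo_of_map_eq_betaMeasure (hmeas : ∀ i, Measurable (X i))
    (hlaw : ∀ i, P.map (X i) = betaMeasure α β) : ∀ᵐ ω ∂P, ∀ i, X i ω ∈ Ioo 0 1 :=
  ae_all_iff.2 fun i => ae_of_ae_map (hmeas i).aemeasurable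
    ((hlaw i).symm ▸ ae_mem_Ioo_betaMeasure α β)

lemma measure_le_of_le_prod_rpow_mul_one_sub_rpow (hmeas : ∀ i, Measurable (X i))
    (hindep : iIndepFun X P) (hlaw : ∀ i, P.map (X i) = betaMeasure α β) (hα : 0 < α)
    (hβ : 0 < β) {p q : ℝ} (hp : 0 < α + p) (hq : 0 < β + q) {E : Set Ω} {c : ℝ} (hc : 0 < c)
    (hE : ∀ ω ∈ E, (∀ i, X i ω ∈ Ioo 0 1) → c ≤ ∏ i, X i ω ^ p * (1 - X i ω) ^ q) :
    P E ≤ ENNReal.ofReal ((beta (α + p) (β + q) / beta α β) ^ Fintype.card ι / c) := by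
  have hbound := measure_le_lintegral_pow_div hmeas hindep hlaw
    (g := fun x => ENNReal.ofReal (x ^ p * (1 - x) ^ q)) (by fun_prop)
    (ENNReal.ofReal_pos.2 hc).ne' ENNReal.ofReal_ne_top (E := E) ?_
  · rwa [lintegral_rpow_mul_one_sub_rpow_betaMeasure hα hβ hp hq,
      ← ENNReal.ofReal_pow (div_pos (beta_pos hp hq) (beta_pos hα hβ)).le,
      ← ENNReal.ofReal_div_of_pos hc] at hbound
  · filter_upwards [ae_forall_mem_Ioo_of_map_eq_betaMeasure hmeas hlaw] with ω hX hω
    rw [← ENNReal.ofReal_prod_of_nonneg fun i _ => ?_]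
    · exact ENNReal.ofReal_le_ofReal (hE ω hω hX)
    · obtain ⟨hX0, hX1⟩ := hX i
      have : 0 < 1 - X i ω := by linarith
      positivity

lemma measure_mean_le_le_of_map_eq_betaMeasure (hmeas : ∀ i, Measurable (X i))
    (hindep : iIndepFun X P) (hlaw : ∀ i, P.map (X i) = betaMeasure α β) (hα : 0 < α)
    (hβ : 0 < β) {a z : ℝ} (ha : 0 < a) (haα : a ≤ α) (hz : 0 < z) :
    P {ω | (∑ i, X i ω) / Fintype.card ι ≤ z} ≤
      ENNReal.ofReal ((beta a β / beta α β * z ^ α / z ^ a) ^ Fintype.card ι) := by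
  have hchernoff := measure_le_of_le_prod_rpow_mul_one_sub_rpow hmeas hindep hlaw hα hβ
    (p := a - α) (q := 0) (by linarith) (by linarith)
    (E := {ω | (∑ i, X i ω) / Fintype.card ι ≤ z}) (c := (z ^ (a - α)) ^ Fintype.card ι)
    (by positivity) fun ω hω hX => ?_
  · convert hchernoff using 2
    rw [add_sub_cancel, add_zero, rpow_sub hz, ← div_pow]
    congr 1
    field_simp
  · simpa only [rpow_zero, mul_one] using
      pow_rpow_le_prod_rpow (fun i => (hX i).1) hz (by linarith) hω

lemma measure_le_mean_le_of_map_eq_betaMeasure [Nonempty ι] (hmeas : ∀ i, Measurable (X i))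
    (hindep : iIndepFun X P) (hlaw : ∀ i, P.map (X i) = betaMeasure α β) (hα : 0 < α)
    (hβ : 0 < β) {b z : ℝ} (hb : 0 < b) (hbβ : b ≤ β) (hz : z < 1) :
    P {ω | z ≤ (∑ i, X i ω) / Fintype.card ι} ≤
      ENNReal.ofReal ((beta α b / beta α β * (1 - z) ^ β / (1 - z) ^ b) ^ Fintype.card ι) := by
  have hz' : 0 < 1 - z := by linarith
  have hchernoff := measure_le_of_le_prod_rpow_mul_one_sub_rpow hmeas hindep hlaw hα hβ
    (p := 0) (q := b - β) (by linarith) (by linarith)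
    (E := {ω | z ≤ (∑ i, X i ω) / Fintype.card ι}) (c := ((1 - z) ^ (b - β)) ^ Fintype.card ι)
    (by positivity) fun ω hω hX => ?_
  · convert hchernoff using 2
    rw [add_sub_cancel, add_zero, rpow_sub hz', ← div_pow]
    congr 1
    field_simp
  · have hmean : (∑ i, (1 - X i ω)) / Fintype.card ι ≤ 1 - z := by
      have hn : (Fintype.card ι : ℝ) ≠ 0 := by exact_mod_cast Fintype.card_ne_zero
      rw [Finset.sum_sub_distrib, sub_div]
      simp only [Finset.sum_const, Finset.card_univ, nsmul_eq_mul, mul_one, div_self hn]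
      exact sub_le_sub_left hω 1
    simpa only [rpow_zero, one_mul] using
      pow_rpow_le_prod_rpow (fun i => sub_pos.2 (hX i).2) hz' (by linarith) hmean

end BetaSample

theorem beta_sample_mean_tail_general
    {Ω : Type*} [MeasurableSpace Ω] (P : Measure Ω)
    (n : ℕ) (hn : 0 < n) (X : Fin n → Ω → ℝ) (α β : ℝ) (hα : 0 < α) (hβ : 0 < β)
    (hmeas : ∀ i, Measurable (X i))
    (hindep : iIndepFun X P)
    (hdist : ∀ i, Measure.map (X i) P =
      volume.withDensity (fun x => ENNReal.ofReal
        (if 0 < x ∧ x < 1 then x ^ (α - 1) * (1 - x) ^ (β - 1) / betaFn α β else 0)))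
    (z : ℝ) (hz0 : 0 < z) (hz1 : z < 1) :
    (z ≤ α / (α + β) →
      P {ω | (∑ i, X i ω) / n ≤ z} ≤
        ENNReal.ofReal
          ((betaFn (β * z / (1 - z)) β / betaFn α β * z ^ α / z ^ (β * z / (1 - z))) ^ n)) ∧
    (α / (α + β) ≤ z →
      P {ω | z ≤ (∑ i, X i ω) / n} ≤
        ENNReal.ofReal
          ((betaFn α (α * (1 - z) / z) / betaFn α β
            * (1 - z) ^ β / (1 - z) ^ (α * (1 - z) / z)) ^ n)) := by
  have hlaw i : P.map (X i) = betaMeasure α β := (hdist i).trans (withDensity_eq_betaMeasure α β)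
  have : Nonempty (Fin n) := ⟨⟨0, hn⟩⟩
  have hz1' : 0 < 1 - z := by linarith
  have hαβ : 0 < α + β := by linarith
  rw [betaFn_eq_beta]
  constructor
  · intro hzμ
    have haα : β * z / (1 - z) ≤ α := by
      rw [le_div_iff₀ hαβ] at hzμ
      rw [div_le_iff₀ hz1']
      linarith
    simpa only [Fintype.card_fin] using measure_mean_le_le_of_map_eq_betaMeasure hmeas hindep
      hlaw hα hβ (by positivity) haα hz0
  · intro hzμ
    have hbβ : α * (1 - z) / z ≤ β := by
      rw [div_le_iff₀ hαβ] at hzμ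
      rw [div_le_iff₀ hz0]
      linarith
    simpa only [Fintype.card_fin] using measure_le_mean_le_of_map_eq_betaMeasure hmeas hindep
      hlaw hα hβ (by positivity) hbβ hz1

/-- Tail bounds for the sample mean of `n` i.i.d. Beta(α,β) random variables. -/
theorem beta_sample_mean_tail
    {Ω : Type*} [MeasurableSpace Ω] (P : Measure Ω) [IsProbabilityMeasure P]
    (n : ℕ) (hn : 0 < n) (X : Fin n → Ω → ℝ) (α β : ℝ) (hα : 0 < α) (hβ : 0 < β)
    (hmeas : ∀ i, Measurable (X i))
    (hindep : iIndepFun X P)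
    (hdist : ∀ i, Measure.map (X i) P =
      volume.withDensity (fun x => ENNReal.ofReal
        (if 0 < x ∧ x < 1 then x ^ (α - 1) * (1 - x) ^ (β - 1) / betaFn α β else 0)))
    (z : ℝ) (hz0 : 0 < z) (hz1 : z < 1) :
    (z ≤ α / (α + β) →
      P {ω | (∑ i, X i ω) / n ≤ z} ≤
        ENNReal.ofReal
          ((betaFn (β * z / (1 - z)) β / betaFn α β * z ^ α / z ^ (β * z / (1 - z))) ^ n)) ∧
    (α / (α + β) ≤ z →
      P {ω | z ≤ (∑ i, X i ω) / n} ≤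
        ENNReal.ofReal
          ((betaFn α (α * (1 - z) / z) / betaFn α β
            * (1 - z) ^ β / (1 - z) ^ (α * (1 - z) / z)) ^ n)) :=
  beta_sample_mean_tail_general P n hn X α β hα hβ hmeas hindep hdist z hz0 hz1
end

section
/- Let X₁, …, Xₙ be i.i.d. random variables with the beta distribution of parameters α > 0 and β = 1, and let X̄ₙ = (1/n)∑_{i=1}^n Xᵢ. Then for all z with 0 < z < exp(−1/α), Pr{X̄ₙ ≤ z} ≤ ( e·α·z^α·ln(1/z) )ⁿ. -/
/-!
Chernoff's method with negative moments. If `X̄ₙ ≤ z` then by AM-GM `∏ Xᵢ ≤ zⁿ`, so for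
`s ≥ 0` Markov's inequality applied to `∏ Xᵢ^(-s)` and independence give
`Pr{X̄ₙ ≤ z} ≤ (E[X^(-s)] z^s)ⁿ`. For `X ~ Beta(α,1)`, with density `α x^(α-1)` on
`(0,1)`, `E[X^(-s)] = α/(α-s)` when `s < α`. The choice `s = α - 1/ln(1/z)`, which lies in
`[0, α)` because `z < exp(-1/α)`, gives `α/(α-s) = α ln(1/z)` and `z^s = e z^α`.
-/

open MeasureTheory ProbabilityTheory Real

open Finset in
theorem Real.prod_le_pow_card_of_sum_div_card_le {ι : Type*} (s : Finset ι) {x : ι → ℝ}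
    {z : ℝ} (hx : ∀ i ∈ s, 0 ≤ x i) (hmean : (∑ i ∈ s, x i) / #s ≤ z) :
    ∏ i ∈ s, x i ≤ z ^ #s := by
  rcases s.eq_empty_or_nonempty with rfl | hs
  · simp
  have hcard : (0 : ℝ) < #s := by exact_mod_cast hs.card_pos
  have amgm := geom_mean_le_arith_mean s (fun _ => 1) x (fun _ _ => zero_le_one)
    (by simpa using hcard) hx
  simp only [rpow_one, one_mul, sum_const, nsmul_eq_mul, mul_one] at amgm
  calc ∏ i ∈ s, x i = ((∏ i ∈ s, x i) ^ ((#s : ℝ)⁻¹)) ^ #s :=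
        (rpow_inv_natCast_pow (prod_nonneg hx) hs.card_pos.ne').symm
    _ ≤ z ^ #s := pow_le_pow_left₀ (rpow_nonneg (prod_nonneg hx) _) (amgm.trans hmean) _

theorem ProbabilityTheory.iIndepFun.measure_prod_le_le_prod_lintegral_rpow_div {Ω ι : Type*}
    [MeasurableSpace Ω] [Fintype ι] {P : Measure Ω} {X : ι → Ω → ℝ}
    (hX : ∀ i, Measurable (X i)) (hind : iIndepFun X P) (hpos : ∀ᵐ ω ∂P, ∀ i, 0 < X i ω)
    {t c : ℝ} (ht : t ≤ 0) (hc : 0 < c) :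
    P {ω | ∏ i, X i ω ≤ c} ≤
      (∏ i, ∫⁻ ω, ENNReal.ofReal (X i ω ^ t) ∂P) / ENNReal.ofReal (c ^ t) := by
  set Y : ι → Ω → ENNReal := fun i ω => ENNReal.ofReal (X i ω ^ t)
  have hg : Measurable fun x : ℝ => ENNReal.ofReal (x ^ t) := by fun_prop
  have hY (i : ι) : Measurable (Y i) := hg.comp (hX i)
  have hsub :
      {ω | ∏ i, X i ω ≤ c} ≤ᵐ[P] {ω | ENNReal.ofReal (c ^ t) ≤ ∏ i, Y i ω} := by
    filter_upwards [hpos] with ω hω (hle : ∏ i, X i ω ≤ c)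
    have hprod : ∏ i, Y i ω = ENNReal.ofReal ((∏ i, X i ω) ^ t) := by
      rw [← finsetProd_rpow _ _ fun i _ => (hω i).le,
        ENNReal.ofReal_prod_of_nonneg fun i _ => rpow_nonneg (hω i).le _]
    show ENNReal.ofReal (c ^ t) ≤ ∏ i, Y i ω
    rw [hprod]
    exact ENNReal.ofReal_le_ofReal
      (rpow_le_rpow_of_nonpos (Finset.prod_pos fun i _ => hω i) hle ht)
  calc P {ω | ∏ i, X i ω ≤ c} ≤ P {ω | ENNReal.ofReal (c ^ t) ≤ ∏ i, Y i ω} :=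
        measure_mono_ae hsub
    _ ≤ (∫⁻ ω, ∏ i, Y i ω ∂P) / ENNReal.ofReal (c ^ t) :=
        meas_ge_le_lintegral_div (Finset.measurable_prod _ fun i _ => hY i).aemeasurable
          (by simpa using rpow_pos_of_pos hc t) ENNReal.ofReal_ne_top
    _ = (∏ i, ∫⁻ ω, Y i ω ∂P) / ENNReal.ofReal (c ^ t) := by
        rw [lintegral_prod_eq_prod_lintegral_of_indepFun _ Y (hind.comp _ fun _ => hg) hY]

lemma betaFn_one_right {α : ℝ} (hα : 0 < α) : betaFn α 1 = α⁻¹ := by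
  rw [betaFn, Gamma_one, Gamma_add_one hα.ne']
  field_simp [(Gamma_pos_of_pos hα).ne']

noncomputable def powerFunctionDistribution (α : ℝ) : Measure ℝ :=
  (volume.restrict (Set.Ioo 0 1)).withDensity fun x => ENNReal.ofReal (α * x ^ (α - 1))

lemma withDensity_betaDensity_one_right {α : ℝ} (hα : 0 < α) :
    volume.withDensity (fun x => ENNReal.ofReal
      (if 0 < x ∧ x < 1 then x ^ (α - 1) * (1 - x) ^ ((1 : ℝ) - 1) / betaFn α 1 else 0)) =
      powerFunctionDistribution α := by
  rw [powerFunctionDistribution, ← withDensity_indicator measurableSet_Ioo]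
  congr 1
  funext x
  by_cases hx : 0 < x ∧ x < 1
  · simp [hx, betaFn_one_right hα, mul_comm]
  · simp [hx, Set.indicator, Set.mem_Ioo]

lemma ae_mem_Ioo_powerFunctionDistribution (α : ℝ) :
    ∀ᵐ x ∂powerFunctionDistribution α, x ∈ Set.Ioo 0 1 :=
  (withDensity_absolutelyContinuous _ _).ae_le (ae_restrict_mem measurableSet_Ioo)

lemma lintegral_rpow_powerFunctionDistribution {α t : ℝ} (hα : 0 ≤ α) (ht : -α < t) :
    ∫⁻ x, ENNReal.ofReal (x ^ t) ∂powerFunctionDistribution α =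
      ENNReal.ofReal (α / (α + t)) := by
  have hexp : -1 < α + t - 1 := by linarith
  have hint : IntegrableOn (fun x : ℝ => α * x ^ (α + t - 1)) (Set.Ioo 0 1) :=
    ((intervalIntegral.intervalIntegrable_rpow' hexp).const_mul α).1.mono_set
      Set.Ioo_subset_Ioc_self
  rw [powerFunctionDistribution, lintegral_withDensity_eq_lintegral_mul _ (by fun_prop)
    (by fun_prop)]
  calc ∫⁻ x in Set.Ioo 0 1, ENNReal.ofReal (α * x ^ (α - 1)) * ENNReal.ofReal (x ^ t)
      = ∫⁻ x in Set.Ioo 0 1, ENNReal.ofReal (α * x ^ (α + t - 1)) := by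
        refine setLIntegral_congr_fun measurableSet_Ioo fun x hx => ?_
        rw [← ENNReal.ofReal_mul (mul_nonneg hα (rpow_nonneg hx.1.le _)), mul_assoc,
          ← rpow_add hx.1]
        ring_nf
    _ = ENNReal.ofReal (∫ x in (0 : ℝ)..1, α * x ^ (α + t - 1)) := by
        rw [← ofReal_integral_eq_lintegral_ofReal hint, intervalIntegral.integral_of_le
          zero_le_one, integral_Ioc_eq_integral_Ioo]
        exact (ae_restrict_iff' measurableSet_Ioo).2
          (.of_forall fun x hx => mul_nonneg hα (rpow_nonneg hx.1.le _))
    _ = ENNReal.ofReal (α / (α + t)) := by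
        rw [intervalIntegral.integral_const_mul, integral_rpow (.inl hexp), sub_add_cancel,
          one_rpow, zero_rpow (by linarith), sub_zero, mul_one_div]

theorem measure_sum_div_card_le_le_of_map_eq_powerFunctionDistribution {Ω ι : Type*}
    [MeasurableSpace Ω] [Fintype ι] {P : Measure Ω} {X : ι → Ω → ℝ} {α s z : ℝ}
    (hX : ∀ i, Measurable (X i)) (hind : iIndepFun X P)
    (hlaw : ∀ i, P.map (X i) = powerFunctionDistribution α) (hs : 0 ≤ s) (hsα : s < α)
    (hz : 0 < z) :
    P {ω | (∑ i, X i ω) / Fintype.card ι ≤ z} ≤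
      ENNReal.ofReal ((α / (α - s) * z ^ s) ^ Fintype.card ι) := by
  have hpos : ∀ᵐ ω ∂P, ∀ i, 0 < X i ω := ae_all_iff.2 fun i =>
    ae_of_ae_map (hX i).aemeasurable <| by
      rw [hlaw]; exact (ae_mem_Ioo_powerFunctionDistribution α).mono fun _ hx => hx.1
  have hmoment (i : ι) : ∫⁻ ω, ENNReal.ofReal (X i ω ^ (-s)) ∂P =
      ENNReal.ofReal (α / (α - s)) := by
    refine (lintegral_map (f := fun x => ENNReal.ofReal (x ^ (-s))) (by fun_prop)
      (hX i)).symm.trans ?_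
    rw [hlaw, lintegral_rpow_powerFunctionDistribution (by linarith) (by linarith),
      ← sub_eq_add_neg]
  have hgeom : {ω | (∑ i, X i ω) / Fintype.card ι ≤ z} ≤ᵐ[P]
      {ω | ∏ i, X i ω ≤ z ^ Fintype.card ι} := by
    filter_upwards [hpos] with ω hω hmean
    exact prod_le_pow_card_of_sum_div_card_le Finset.univ (fun i _ => (hω i).le) hmean
  calc P {ω | (∑ i, X i ω) / Fintype.card ι ≤ z}
      ≤ P {ω | ∏ i, X i ω ≤ z ^ Fintype.card ι} := measure_mono_ae hgeom
    _ ≤ (∏ i, ∫⁻ ω, ENNReal.ofReal (X i ω ^ (-s)) ∂P) /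
          ENNReal.ofReal ((z ^ Fintype.card ι) ^ (-s)) :=
        hind.measure_prod_le_le_prod_lintegral_rpow_div hX hpos (neg_nonpos.2 hs) (by positivity)
    _ = ENNReal.ofReal ((α / (α - s) * z ^ s) ^ Fintype.card ι) := by
        have hm : 0 ≤ α / (α - s) := div_nonneg (by linarith) (by linarith)
        rw [Finset.prod_congr rfl fun i _ => hmoment i, Finset.prod_const, Finset.card_univ,
          ← ENNReal.ofReal_pow hm, rpow_neg (by positivity), ← rpow_pow_comm hz.le,
          ← ENNReal.ofReal_div_of_pos (by positivity), div_inv_eq_mul, mul_pow]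

theorem beta_one_sample_mean_tail_general
    {Ω : Type*} [MeasurableSpace Ω] (P : Measure Ω)
    (n : ℕ) (X : Fin n → Ω → ℝ) (α β : ℝ) (hα : 0 < α) (hβ : β = 1)
    (hmeas : ∀ i, Measurable (X i))
    (hindep : iIndepFun X P)
    (hdist : ∀ i, Measure.map (X i) P =
      volume.withDensity (fun x => ENNReal.ofReal
        (if 0 < x ∧ x < 1 then x ^ (α - 1) * (1 - x) ^ (β - 1) / betaFn α β else 0)))
    (z : ℝ) (hz0 : 0 < z) (hz1 : z < Real.exp (-(1 / α))) :
    P {ω | (∑ i, X i ω) / n ≤ z} ≤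
      ENNReal.ofReal ((Real.exp 1 * α * z ^ α * Real.log (1 / z)) ^ n) := by
  subst hβ
  have hlaw (i : Fin n) : P.map (X i) = powerFunctionDistribution α := by
    rw [hdist i, withDensity_betaDensity_one_right hα]
  have hlogz : log z < -α⁻¹ := by simpa [one_div] using log_lt_log hz0 hz1
  have hlogz_neg : log z < 0 := hlogz.trans (neg_neg_of_pos (inv_pos.2 hα))
  -- `s` minimises `α / (α - s) * z ^ s`.
  set s := α + (log z)⁻¹ with hs
  have hs_nonneg : 0 ≤ s := by
    have : -α < (log z)⁻¹ := by
      simpa using (inv_lt_inv_of_neg (neg_neg_of_pos (inv_pos.2 hα)) hlogz_neg).2 hlogz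
    linarith
  have hsα : s < α := by linarith [inv_lt_zero.2 hlogz_neg]
  have hzs : z ^ s = exp 1 * z ^ α := by
    rw [hs, rpow_add hz0, rpow_inv_log hz0 ((log_neg_iff hz0).1 hlogz_neg).ne, mul_comm]
  have hαs : α / (α - s) = α * log (1 / z) := by
    rw [show α - s = -(log z)⁻¹ by ring, one_div, log_inv]
    field_simp
  have hchernoff := measure_sum_div_card_le_le_of_map_eq_powerFunctionDistribution hmeas hindep
    hlaw hs_nonneg hsα hz0
  rw [hzs, hαs, Fintype.card_fin] at hchernoff
  exact hchernoff.trans_eq (by ring_nf)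

/-- Tail bound for the sample mean of `n` i.i.d. Beta(α,1) random variables. -/
theorem beta_one_sample_mean_tail
    {Ω : Type*} [MeasurableSpace Ω] (P : Measure Ω) [IsProbabilityMeasure P]
    (n : ℕ) (hn : 0 < n) (X : Fin n → Ω → ℝ) (α β : ℝ) (hα : 0 < α) (hβ : β = 1)
    (hmeas : ∀ i, Measurable (X i))
    (hindep : iIndepFun X P)
    (hdist : ∀ i, Measure.map (X i) P =
      volume.withDensity (fun x => ENNReal.ofReal
        (if 0 < x ∧ x < 1 then x ^ (α - 1) * (1 - x) ^ (β - 1) / betaFn α β else 0)))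
    (z : ℝ) (hz0 : 0 < z) (hz1 : z < Real.exp (-(1 / α))) :
    P {ω | (∑ i, X i ω) / n ≤ z} ≤
      ENNReal.ofReal ((Real.exp 1 * α * z ^ α * Real.log (1 / z)) ^ n) :=
  beta_one_sample_mean_tail_general P n X α β hα hβ hmeas hindep hdist z hz0 hz1
end

section
/- Let X₁, …, Xₙ be i.i.d. random variables with the beta-prime distribution of parameters α > 0 and β > 1, and let X̄ₙ = (1/n)∑_{i=1}^n Xᵢ. Then for all z with 0 < z ≤ α/(β−1): (i) Pr{X̄ₙ ≤ z} ≤ [ (z/(1+z))^{α+z−βz} · B(βz−z, β)/B(α,β) ]ⁿ; (ii) Pr{X̄ₙ ≤ z} ≤ [ (B(α, 1+α/z)/B(α,β)) · (1+z)^{1+α/z−β} ]ⁿ. -/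
open MeasureTheory ProbabilityTheory Real

/-!
A Chernoff bound. Substituting `x = u / (1 - u)` in the beta integral gives the moments
`E[X ^ e * (1 + X) ^ f] = B(α + e, β - e - f) / B(α, β)` of the beta-prime law. For `e ≤ 0` and
`e + f ≤ 0`, `ψ x = e * log x + f * log (1 + x)` is convex and nonincreasing on `(0, ∞)`, so its
tangent line at `z` gives `∏ g (Xᵢ) ≥ g z ^ n` for `g = exp ∘ ψ` whenever `X̄ₙ ≤ z`. Markov's
inequality and independence then give `P(X̄ₙ ≤ z) ≤ (E[g X] / g z) ^ n`. Bound (i) is the choice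
`(e, f) = (-r, r)` with `r = α + z - β z ≥ 0`, bound (ii) is `(e, f) = (0, -(1 + α / z - β))`.
-/

open Set
open scoped ENNReal

lemma lintegral_rpow_mul_one_sub_rpow_Ioo {a b : ℝ} (ha : 0 < a) (hb : 0 < b) :
    ∫⁻ u in Ioo 0 1, ENNReal.ofReal (u ^ (a - 1) * (1 - u) ^ (b - 1)) =
      ENNReal.ofReal (betaFn a b) := by
  -- `betaFn` unfolds to `ProbabilityTheory.beta`, the normalizing constant of `betaPDF`.
  have hB := beta_pos ha hb
  have h := lintegral_betaPDF_eq_one ha hb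
  simp_rw [lintegral_betaPDF, mul_assoc, ENNReal.ofReal_mul (one_div_pos.2 hB).le] at h
  rw [lintegral_const_mul' _ _ ENNReal.ofReal_ne_top, mul_comm] at h
  rw [ENNReal.eq_inv_of_mul_eq_one_left h, one_div, ENNReal.ofReal_inv_of_pos hB, inv_inv]
  rfl

lemma image_div_one_sub_Ioo : (fun u : ℝ => u / (1 - u)) '' Ioo 0 1 = Ioi 0 := by
  refine Subset.antisymm (image_subset_iff.2 fun u hu => div_pos hu.1 (sub_pos.2 hu.2))
    fun x (hx : 0 < x) => ⟨x / (1 + x), ⟨by positivity, ?_⟩, ?_⟩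
  · rw [div_lt_one (by positivity)]
    linarith
  · have : 1 + x ≠ 0 := by positivity
    simp only
    field_simp
    ring

lemma injOn_div_one_sub : InjOn (fun u : ℝ => u / (1 - u)) (Ioo 0 1) := by
  intro u hu w hw h
  have hu' : 1 - u ≠ 0 := (sub_pos.2 hu.2).ne'
  have hw' : 1 - w ≠ 0 := (sub_pos.2 hw.2).ne'
  field_simp at h
  linarith

lemma hasDerivAt_div_one_sub {u : ℝ} (hu : u ≠ 1) :
    HasDerivAt (fun u : ℝ => u / (1 - u)) ((1 - u) ^ 2)⁻¹ u := by
  have hu' : 1 - u ≠ 0 := sub_ne_zero.2 hu.symm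
  refine ((hasDerivAt_id' u).div ((hasDerivAt_id' u).const_sub 1) hu').congr_deriv ?_
  field_simp
  ring

lemma inv_sq_mul_rpow_div_one_sub {c d u : ℝ} (hu0 : 0 < u) (hu1 : u < 1) :
    ((1 - u) ^ 2)⁻¹ * ((u / (1 - u)) ^ (c - 1) * (1 + u / (1 - u)) ^ (-c - d)) =
      u ^ (c - 1) * (1 - u) ^ (d - 1) := by
  have hv : 0 < 1 - u := sub_pos.2 hu1
  have h1 : 1 + u / (1 - u) = (1 - u)⁻¹ := by field_simp; ring
  have h2 : ((1 - u) ^ 2)⁻¹ = (1 - u) ^ (-2 : ℝ) := by rw [rpow_neg hv.le, rpow_two]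
  rw [h1, h2, div_rpow hu0.le hv.le, inv_rpow hv.le, ← rpow_neg hv.le, div_eq_mul_inv,
    ← rpow_neg hv.le, mul_comm ((1 - u) ^ _), mul_assoc, mul_assoc, ← rpow_add hv,
    ← rpow_add hv]
  ring_nf

lemma lintegral_rpow_mul_one_add_rpow_Ioi {a b : ℝ} (ha : 0 < a) (hb : 0 < b) :
    ∫⁻ x in Ioi 0, ENNReal.ofReal (x ^ (a - 1) * (1 + x) ^ (-a - b)) =
      ENNReal.ofReal (betaFn a b) := by
  rw [← image_div_one_sub_Ioo, lintegral_image_eq_lintegral_abs_deriv_mul measurableSet_Ioo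
    (fun u hu => (hasDerivAt_div_one_sub hu.2.ne).hasDerivWithinAt) injOn_div_one_sub,
    ← lintegral_rpow_mul_one_sub_rpow_Ioo ha hb]
  refine setLIntegral_congr_fun measurableSet_Ioo fun u hu => ?_
  rw [abs_of_nonneg (by positivity), ← ENNReal.ofReal_mul (by positivity),
    inv_sq_mul_rpow_div_one_sub hu.1 hu.2]

noncomputable def betaPrimeMeasure (α β : ℝ) : Measure ℝ :=
  volume.withDensity fun x => ENNReal.ofReal
    (if 0 < x then x ^ (α - 1) * (1 + x) ^ (-α - β) / betaFn α β else 0)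

lemma ae_pos_betaPrimeMeasure (α β : ℝ) : ∀ᵐ x ∂betaPrimeMeasure α β, 0 < x := by
  simp_rw [ae_iff, not_lt]
  change betaPrimeMeasure α β (Iic 0) = 0
  rw [betaPrimeMeasure, withDensity_apply _ measurableSet_Iic]
  exact setLIntegral_eq_zero measurableSet_Iic fun x (hx : x ≤ 0) => by simp [hx.not_gt]

lemma lintegral_rpow_mul_one_add_rpow_betaPrimeMeasure {α β e f : ℝ} (hα : 0 < α)
    (hβ : 0 < β) (hc : 0 < α + e) (hd : 0 < β - e - f) :
    ∫⁻ x, ENNReal.ofReal (x ^ e * (1 + x) ^ f) ∂betaPrimeMeasure α β =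
      ENNReal.ofReal (betaFn (α + e) (β - e - f) / betaFn α β) := by
  have hB : 0 < betaFn α β := beta_pos hα hβ
  rw [betaPrimeMeasure, lintegral_withDensity_eq_lintegral_mul _
      (Measurable.ite measurableSet_Ioi (by fun_prop) measurable_const).ennreal_ofReal
      (by fun_prop),
    ← lintegral_add_compl _ measurableSet_Iic,
    setLIntegral_eq_zero measurableSet_Iic fun x (hx : x ≤ 0) => by simp [hx.not_gt], zero_add,
    compl_Iic, ENNReal.ofReal_div_of_pos hB, ← lintegral_rpow_mul_one_add_rpow_Ioi hc hd,
    div_eq_mul_inv, ← lintegral_mul_const' _ _ (by simpa using hB),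
    ← ENNReal.ofReal_inv_of_pos hB]
  refine setLIntegral_congr_fun measurableSet_Ioi fun x (hx : 0 < x) => ?_
  rw [Pi.mul_apply, if_pos hx, ← ENNReal.ofReal_mul (by positivity),
    ← ENNReal.ofReal_mul (by positivity)]
  congr 1
  rw [div_eq_mul_inv, mul_right_comm, mul_mul_mul_comm, ← rpow_add hx,
    ← rpow_add (by linarith)]
  ring_nf

lemma log_one_add_le_tangent {x z : ℝ} (hx : -1 < x) (hz : -1 < z) :
    log (1 + x) ≤ log (1 + z) + (x - z) / (1 + z) := by
  have hx' : 0 < 1 + x := by linarith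
  have hz' : 0 < 1 + z := by linarith
  have h := log_le_sub_one_of_pos (div_pos hx' hz')
  rw [log_div hx'.ne' hz'.ne', div_sub_one hz'.ne', add_sub_add_left_eq_sub] at h
  linarith

lemma log_one_add_sub_log_ge_tangent {x z : ℝ} (hx : 0 < x) (hz : 0 < z) :
    log (1 + z) - log z - (x - z) / (z * (1 + z)) ≤ log (1 + x) - log x := by
  have h := log_le_sub_one_of_pos (by positivity : 0 < x * (1 + z) / (z * (1 + x)))
  rw [log_div (by positivity) (by positivity), log_mul hx.ne' (by positivity),
    log_mul hz.ne' (by positivity)] at h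
  have hsq : x * (1 + z) / (z * (1 + x)) - 1 ≤ (x - z) / (z * (1 + z)) := by
    rw [div_sub_one (by positivity), div_le_div_iff₀ (by positivity) (by positivity)]
    nlinarith [mul_nonneg hz.le (sq_nonneg (x - z))]
  linarith

lemma div_add_div_one_add_nonpos {e f z : ℝ} (he : e ≤ 0) (hef : e + f ≤ 0) (hz : 0 < z) :
    e / z + f / (1 + z) ≤ 0 := by
  have h : e / z + f / (1 + z) = e / (z * (1 + z)) + (e + f) / (1 + z) := by
    field_simp
    ring
  rw [h]
  exact add_nonpos (div_nonpos_of_nonpos_of_nonneg he (by positivity))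
    (div_nonpos_of_nonpos_of_nonneg hef (by positivity))

lemma mul_log_add_mul_log_one_add_ge_tangent {e f x z : ℝ} (he : e ≤ 0) (hef : e + f ≤ 0)
    (hx : 0 < x) (hz : 0 < z) :
    e * log z + f * log (1 + z) + (e / z + f / (1 + z)) * (x - z) ≤
      e * log x + f * log (1 + x) := by
  have h₁ := mul_le_mul_of_nonpos_left
    (log_one_add_le_tangent (x := x) (z := z) (by linarith) (by linarith)) hef
  have h₂ := mul_le_mul_of_nonneg_left (log_one_add_sub_log_ge_tangent hx hz) (neg_nonneg.2 he)
  have hslope : (e / z + f / (1 + z)) * (x - z) =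
      (e + f) * ((x - z) / (1 + z)) + e * ((x - z) / (z * (1 + z))) := by
    field_simp
    ring
  linarith

lemma card_mul_le_sum_of_tangent_le {ι : Type*} (s : Finset ι) {ψ : ℝ → ℝ} {x : ι → ℝ}
    {z m : ℝ} (hm : m ≤ 0) (htan : ∀ i ∈ s, ψ z + m * (x i - z) ≤ ψ (x i))
    (hmean : (∑ i ∈ s, x i) / s.card ≤ z) :
    s.card * ψ z ≤ ∑ i ∈ s, ψ (x i) := by
  rcases s.eq_empty_or_nonempty with rfl | hs
  · simp
  have hsum : ∑ i ∈ s, x i ≤ s.card * z := by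
    rwa [div_le_iff₀' (by simpa using hs.card_pos)] at hmean
  calc (s.card : ℝ) * ψ z ≤ s.card * ψ z + m * (∑ i ∈ s, x i - s.card * z) :=
        le_add_of_nonneg_right (mul_nonneg_of_nonpos_of_nonpos hm (by linarith))
    _ = ∑ i ∈ s, (ψ z + m * (x i - z)) := by
        simp only [Finset.sum_add_distrib, ← Finset.mul_sum, Finset.sum_sub_distrib,
          Finset.sum_const, nsmul_eq_mul]
    _ ≤ ∑ i ∈ s, ψ (x i) := Finset.sum_le_sum htan

lemma rpow_mul_one_add_rpow_eq_exp {x : ℝ} (hx : 0 < x) (e f : ℝ) :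
    x ^ e * (1 + x) ^ f = exp (e * log x + f * log (1 + x)) := by
  rw [rpow_def_of_pos hx, rpow_def_of_pos (by linarith), ← exp_add]
  ring_nf

lemma pow_le_prod_rpow_mul_one_add_rpow {ι : Type*} (s : Finset ι) {x : ι → ℝ} {e f z : ℝ}
    (he : e ≤ 0) (hef : e + f ≤ 0) (hz : 0 < z) (hx : ∀ i ∈ s, 0 < x i)
    (hmean : (∑ i ∈ s, x i) / s.card ≤ z) :
    (z ^ e * (1 + z) ^ f) ^ s.card ≤ ∏ i ∈ s, x i ^ e * (1 + x i) ^ f := by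
  rw [rpow_mul_one_add_rpow_eq_exp hz, ← exp_nat_mul,
    Finset.prod_congr rfl fun i hi => rpow_mul_one_add_rpow_eq_exp (hx i hi) e f, ← exp_sum]
  exact exp_le_exp.2 <| card_mul_le_sum_of_tangent_le s
    (ψ := fun y => e * log y + f * log (1 + y)) (div_add_div_one_add_nonpos he hef hz)
    (fun i hi => mul_log_add_mul_log_one_add_ge_tangent he hef (hx i hi) hz) hmean

lemma ProbabilityTheory.iIndepFun.meas_ge_prod_le_lintegral_pow_div {Ω ι 𝓧 : Type*}
    [MeasurableSpace Ω] [MeasurableSpace 𝓧] [Fintype ι] {P : Measure Ω} {μ : Measure 𝓧}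
    {X : ι → Ω → 𝓧} (hmeas : ∀ i, Measurable (X i)) (hindep : iIndepFun X P) (hdist : ∀ i, P.map (X i) = μ)
    {g : 𝓧 → ℝ≥0∞} (hg : Measurable g) {c : ℝ≥0∞} (hc₀ : c ≠ 0) (hc : c ≠ ∞) :
    P {ω | c ≤ ∏ i, g (X i ω)} ≤ (∫⁻ x, g x ∂μ) ^ Fintype.card ι / c := by
  have hprod : ∫⁻ ω, ∏ i, g (X i ω) ∂P = (∫⁻ x, g x ∂μ) ^ Fintype.card ι := by
    rw [lintegral_prod_eq_prod_lintegral_of_indepFun _ (fun i ω => g (X i ω))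
      (hindep.comp _ fun _ => hg) fun i => hg.comp (hmeas i)]
    simp_rw [← lintegral_map hg (hmeas _), hdist, Finset.prod_const, Finset.card_univ]
  rw [← hprod]
  exact meas_ge_le_lintegral_div
    (Finset.aemeasurable_fun_prod _ fun i _ => (hg.comp (hmeas i)).aemeasurable) hc₀ hc

theorem betaPrime_measure_mean_le_pow {Ω ι : Type*} [MeasurableSpace Ω] [Fintype ι]
    {P : Measure Ω} {X : ι → Ω → ℝ} {α β : ℝ} (hα : 0 < α) (hβ : 0 < β)
    (hmeas : ∀ i, Measurable (X i)) (hindep : iIndepFun X P) (hdist : ∀ i, P.map (X i) = betaPrimeMeasure α β)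
    {z e f : ℝ} (hz : 0 < z) (he : e ≤ 0) (hef : e + f ≤ 0) (hc : 0 < α + e) :
    P {ω | (∑ i, X i ω) / Fintype.card ι ≤ z} ≤ ENNReal.ofReal
      ((betaFn (α + e) (β - e - f) / betaFn α β / (z ^ e * (1 + z) ^ f)) ^ Fintype.card ι) := by
  set n := Fintype.card ι
  set g : ℝ → ℝ≥0∞ := fun x => ENNReal.ofReal (x ^ e * (1 + x) ^ f)
  set c := ENNReal.ofReal ((z ^ e * (1 + z) ^ f) ^ n)
  have hpos : ∀ᵐ ω ∂P, ∀ i, 0 < X i ω := ae_all_iff.2 fun i =>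
    ae_of_ae_map (hmeas i).aemeasurable (hdist i ▸ ae_pos_betaPrimeMeasure α β)
  have hsub : {ω | (∑ i, X i ω) / n ≤ z} ≤ᵐ[P] {ω | c ≤ ∏ i, g (X i ω)} := by
    filter_upwards [hpos] with ω hω (hmean : (∑ i, X i ω) / n ≤ z)
    change c ≤ ∏ i, g (X i ω)
    rw [← ENNReal.ofReal_prod_of_nonneg fun i _ => by have := hω i; positivity]
    exact ENNReal.ofReal_le_ofReal
      (pow_le_prod_rpow_mul_one_add_rpow Finset.univ he hef hz (fun i _ => hω i) hmean)
  have hB : 0 < betaFn (α + e) (β - e - f) / betaFn α β :=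
    div_pos (beta_pos hc (by linarith)) (beta_pos hα hβ)
  calc P {ω | (∑ i, X i ω) / n ≤ z} ≤ P {ω | c ≤ ∏ i, g (X i ω)} := measure_mono_ae hsub
    _ ≤ (∫⁻ x, g x ∂betaPrimeMeasure α β) ^ n / c :=
        hindep.meas_ge_prod_le_lintegral_pow_div hmeas hdist (by fun_prop)
          (ENNReal.ofReal_pos.2 (by positivity)).ne' ENNReal.ofReal_ne_top
    _ = _ := by
        rw [lintegral_rpow_mul_one_add_rpow_betaPrimeMeasure hα hβ hc (by linarith),
          ← ENNReal.ofReal_pow hB.le, ← ENNReal.ofReal_div_of_pos (by positivity), ← div_pow]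

theorem betaPrime_sample_mean_tail_general
    {Ω : Type*} [MeasurableSpace Ω] (P : Measure Ω)
    (n : ℕ) (X : Fin n → Ω → ℝ) (α β : ℝ) (hα : 0 < α) (hβ : 1 < β)
    (hmeas : ∀ i, Measurable (X i))
    (hindep : iIndepFun X P)
    (hdist : ∀ i, Measure.map (X i) P =
      volume.withDensity (fun x => ENNReal.ofReal
        (if 0 < x then x ^ (α - 1) * (1 + x) ^ (-α - β) / betaFn α β else 0)))
    (z : ℝ) (hz0 : 0 < z) (hz : z ≤ α / (β - 1)) :
    P {ω | (∑ i, X i ω) / n ≤ z} ≤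
      ENNReal.ofReal
        (((z / (1 + z)) ^ (α + z - β * z) * betaFn (β * z - z) β / betaFn α β) ^ n) ∧
    P {ω | (∑ i, X i ω) / n ≤ z} ≤
      ENNReal.ofReal
        ((betaFn α (1 + α / z) / betaFn α β * (1 + z) ^ (1 + α / z - β)) ^ n) := by
  have hzα : z * (β - 1) ≤ α := (le_div_iff₀ (sub_pos.2 hβ)).1 hz
  have hbound (e f : ℝ) (he : e ≤ 0) (hef : e + f ≤ 0) (hc : 0 < α + e) :
      P {ω | (∑ i, X i ω) / n ≤ z} ≤ ENNReal.ofReal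
        ((betaFn (α + e) (β - e - f) / betaFn α β / (z ^ e * (1 + z) ^ f)) ^ n) := by
    simpa only [Fintype.card_fin] using
      betaPrime_measure_mean_le_pow hα (by linarith) hmeas hindep hdist hz0 he hef hc
  constructor
  · convert hbound (-(α + z - β * z)) (α + z - β * z) (by linarith) (by simp) (by nlinarith)
      using 3
    have hc : α + -(α + z - β * z) = β * z - z := by ring
    have hd : β - -(α + z - β * z) - (α + z - β * z) = β := by ring
    rw [hc, hd, rpow_neg hz0.le, div_rpow hz0.le (by positivity)]
    field_simp
  · convert hbound 0 (-(1 + α / z - β)) le_rfl ?_ (by simpa using hα) using 3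
    · rw [add_zero, sub_zero, sub_neg_eq_add, add_sub_cancel, rpow_zero, one_mul,
        rpow_neg (by positivity), div_inv_eq_mul]
    · have : β - 1 ≤ α / z := (le_div_iff₀ hz0).2 (by linarith)
      linarith

/-- Lower tail bounds for the sample mean of `n` i.i.d. beta-prime random variables
with parameters `α > 0`, `β > 1`. -/
theorem betaPrime_sample_mean_tail
    {Ω : Type*} [MeasurableSpace Ω] (P : Measure Ω) [IsProbabilityMeasure P]
    (n : ℕ) (hn : 0 < n) (X : Fin n → Ω → ℝ) (α β : ℝ) (hα : 0 < α) (hβ : 1 < β)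
    (hmeas : ∀ i, Measurable (X i))
    (hindep : iIndepFun X P)
    (hdist : ∀ i, Measure.map (X i) P =
      volume.withDensity (fun x => ENNReal.ofReal
        (if 0 < x then x ^ (α - 1) * (1 + x) ^ (-α - β) / betaFn α β else 0)))
    (z : ℝ) (hz0 : 0 < z) (hz : z ≤ α / (β - 1)) :
    P {ω | (∑ i, X i ω) / n ≤ z} ≤
      ENNReal.ofReal
        (((z / (1 + z)) ^ (α + z - β * z) * betaFn (β * z - z) β / betaFn α β) ^ n) ∧
    P {ω | (∑ i, X i ω) / n ≤ z} ≤
      ENNReal.ofReal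
        ((betaFn α (1 + α / z) / betaFn α β * (1 + z) ^ (1 + α / z - β)) ^ n) :=
  betaPrime_sample_mean_tail_general P n X α β hα hβ hmeas hindep hdist z hz0 hz
end

section
/- Let X₁, …, Xₙ be i.i.d. random variables with the inverse gamma distribution of parameters α > 0 and β > 0, and let X̄ₙ = (1/n)∑_{i=1}^n Xᵢ. Then: (i) if α > 1 and 0 < z ≤ β/(α−1), Pr{X̄ₙ ≤ z} ≤ [ (Γ(β/z + 1)/Γ(α)) · (z/β)^{β/z − α + 1} ]ⁿ; (ii) if 0 < z ≤ β/α, Pr{X̄ₙ ≤ z} ≤ [ (β/(αz))^α · exp((αz−β)/z) ]ⁿ. -/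
open MeasureTheory ProbabilityTheory Real Set
open scoped ENNReal Finset

/-!
On the event `X̄ₙ ≤ z`, the tangent lines at `z` of the concave `log` and of the convex `x ↦ x⁻¹`
give `∑ log Xᵢ ≤ n log z` and `∑ Xᵢ⁻¹ ≥ n / z`. Both events are bounded by the Chernoff bound for
i.i.d. sums, using `E[X⁻ˢ] = Γ(α + s) / (Γ(α) βˢ)` with `s = β / z - α + 1` for (i) and
`E[exp (t / X)] = (β / (β - t))^α` with `t = β - α z` for (ii). The substitution `x ↦ x⁻¹` turns
both moments into Gamma integrals.
-/

namespace Finset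

variable {ι : Type*} {s : Finset ι} {x : ι → ℝ} {z : ℝ}

theorem sum_le_card_mul_of_sum_div_card_le (h : (∑ i ∈ s, x i) / #s ≤ z) :
    ∑ i ∈ s, x i ≤ #s * z := by
  rcases s.eq_empty_or_nonempty with rfl | hs
  · simp
  · rwa [div_le_iff₀ (by exact_mod_cast hs.card_pos), mul_comm] at h

theorem sum_log_le_card_mul_log (hx : ∀ i ∈ s, 0 < x i) (hz : 0 < z)
    (h : (∑ i ∈ s, x i) / #s ≤ z) : ∑ i ∈ s, log (x i) ≤ #s * log z := by
  have htangent : ∀ i ∈ s, log (x i) ≤ log z + (x i / z - 1) := fun i hi => by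
    have := log_le_sub_one_of_pos (div_pos (hx i hi) hz)
    rw [log_div (hx i hi).ne' hz.ne'] at this
    linarith
  have hmean : (∑ i ∈ s, x i) / z ≤ #s := by
    rw [div_le_iff₀ hz]; exact sum_le_card_mul_of_sum_div_card_le h
  calc ∑ i ∈ s, log (x i) ≤ ∑ i ∈ s, (log z + (x i / z - 1)) := sum_le_sum htangent
    _ = #s * log z + ((∑ i ∈ s, x i) / z - #s) := by
      simp [sum_add_distrib, sum_sub_distrib, sum_div]
    _ ≤ #s * log z := by linarith

theorem card_div_le_sum_inv (hx : ∀ i ∈ s, 0 < x i) (hz : 0 < z)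
    (h : (∑ i ∈ s, x i) / #s ≤ z) : #s / z ≤ ∑ i ∈ s, (x i)⁻¹ := by
  have htangent : ∀ i ∈ s, 2 / z - x i / z ^ 2 ≤ (x i)⁻¹ := fun i hi => by
    have hxi := hx i hi
    rw [div_sub_div _ _ hz.ne' (by positivity), div_le_iff₀ (by positivity), inv_mul_eq_div,
      le_div_iff₀ hxi]
    nlinarith [sq_nonneg (x i - z)]
  have hmean : (∑ i ∈ s, x i) / z ^ 2 ≤ #s / z := by
    rw [div_le_div_iff₀ (by positivity) hz]
    nlinarith [sum_le_card_mul_of_sum_div_card_le h]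
  calc (#s : ℝ) / z = 2 * #s / z - #s / z := by ring
    _ ≤ 2 * #s / z - (∑ i ∈ s, x i) / z ^ 2 := by linarith
    _ = ∑ i ∈ s, (2 / z - x i / z ^ 2) := by
      simp [sum_sub_distrib, sum_div]; ring
    _ ≤ ∑ i ∈ s, (x i)⁻¹ := sum_le_sum htangent

end Finset

theorem rpow_neg_sub_one_mul_exp_neg_div_eq_inv_subst {a r x : ℝ} (hx : 0 < x) :
    (|(-1 : ℝ)| * x ^ ((-1 : ℝ) - 1)) • ((x ^ (-1 : ℝ)) ^ (a - 1) * exp (-(r * x ^ (-1 : ℝ))))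
      = x ^ (-a - 1) * exp (-r / x) := by
  rw [abs_neg, abs_one, one_mul, smul_eq_mul, rpow_neg_one, inv_rpow hx.le, ← rpow_neg hx.le,
    ← mul_assoc, ← rpow_add hx]
  ring_nf

theorem integrableOn_rpow_neg_sub_one_mul_exp_neg_div {a r : ℝ} (ha : 0 < a) (hr : 0 < r) :
    IntegrableOn (fun x : ℝ => x ^ (-a - 1) * exp (-r / x)) (Ioi 0) := by
  have hgamma : IntegrableOn (fun y : ℝ => y ^ (a - 1) * exp (-(r * y))) (Ioi 0) := by
    simpa using integrableOn_rpow_mul_exp_neg_mul_rpow (by linarith : -1 < a - 1) one_pos hr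
  refine ((integrableOn_Ioi_comp_rpow_iff _ (by norm_num : (-1 : ℝ) ≠ 0)).2 hgamma).congr_fun
    (fun x hx => ?_) measurableSet_Ioi
  exact rpow_neg_sub_one_mul_exp_neg_div_eq_inv_subst hx

theorem integral_rpow_neg_sub_one_mul_exp_neg_div {a r : ℝ} (ha : 0 < a) (hr : 0 < r) :
    ∫ x in Ioi 0, x ^ (-a - 1) * exp (-r / x) = (1 / r) ^ a * Gamma a := by
  rw [← integral_rpow_mul_exp_neg_mul_Ioi ha hr, ← integral_comp_rpow_Ioi
    (fun y => y ^ (a - 1) * exp (-(r * y))) (by norm_num : (-1 : ℝ) ≠ 0)]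
  exact setIntegral_congr_fun measurableSet_Ioi fun x hx =>
    (rpow_neg_sub_one_mul_exp_neg_div_eq_inv_subst hx).symm

namespace ProbabilityTheory

noncomputable def inverseGammaPDFReal (α β x : ℝ) : ℝ :=
  if 0 < x then β ^ α / Gamma α * x ^ (-α - 1) * exp (-β / x) else 0

noncomputable def inverseGammaMeasure (α β : ℝ) : Measure ℝ :=
  volume.withDensity fun x => ENNReal.ofReal (inverseGammaPDFReal α β x)

section InverseGamma

variable {α β : ℝ}

@[fun_prop]
theorem measurable_inverseGammaPDFReal (α β : ℝ) : Measurable (inverseGammaPDFReal α β) :=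
  Measurable.ite measurableSet_Ioi (by fun_prop) measurable_const

theorem inverseGammaPDFReal_nonneg (hα : 0 < α) (hβ : 0 < β) (x : ℝ) :
    0 ≤ inverseGammaPDFReal α β x := by
  have := Gamma_pos_of_pos hα
  unfold inverseGammaPDFReal
  split_ifs <;> positivity

theorem inverseGammaPDFReal_of_nonpos {x : ℝ} (hx : x ≤ 0) : inverseGammaPDFReal α β x = 0 :=
  if_neg hx.not_gt

theorem ae_pos_inverseGammaMeasure : ∀ᵐ x ∂inverseGammaMeasure α β, 0 < x := by
  rw [inverseGammaMeasure, ae_withDensity_iff (by fun_prop)]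
  refine ae_of_all _ fun x hx => lt_of_not_ge fun hx0 => hx ?_
  rw [inverseGammaPDFReal_of_nonpos hx0, ENNReal.ofReal_zero]

theorem integrable_inverseGammaMeasure_iff (hα : 0 < α) (hβ : 0 < β) {f : ℝ → ℝ} :
    Integrable f (inverseGammaMeasure α β) ↔
      IntegrableOn (fun x => inverseGammaPDFReal α β x * f x) (Ioi 0) := by
  rw [inverseGammaMeasure, integrable_withDensity_iff_integrable_smul' (by fun_prop)
    (ae_of_all _ fun _ => ENNReal.ofReal_lt_top), integrableOn_iff_integrable_of_support_subset]
  · simp [ENNReal.toReal_ofReal (inverseGammaPDFReal_nonneg hα hβ _)]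
  · intro x hx
    by_contra hx0
    simp [inverseGammaPDFReal_of_nonpos (not_lt.1 hx0)] at hx

theorem integral_inverseGammaMeasure (hα : 0 < α) (hβ : 0 < β) (f : ℝ → ℝ) :
    ∫ x, f x ∂inverseGammaMeasure α β = ∫ x in Ioi 0, inverseGammaPDFReal α β x * f x := by
  rw [inverseGammaMeasure, integral_withDensity_eq_integral_toReal_smul (by fun_prop)
    (ae_of_all _ fun _ => ENNReal.ofReal_lt_top), setIntegral_eq_integral_of_forall_compl_eq_zero]
  · simp [ENNReal.toReal_ofReal (inverseGammaPDFReal_nonneg hα hβ _)]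
  · intro x hx
    simp [inverseGammaPDFReal_of_nonpos (not_lt.1 hx)]

theorem inverseGammaPDFReal_mul_rpow_neg_mul_exp {s t x : ℝ} (hx : 0 < x) :
    inverseGammaPDFReal α β x * (x ^ (-s) * exp (t / x)) =
      β ^ α / Gamma α * (x ^ (-(α + s) - 1) * exp (-(β - t) / x)) := by
  have hpow : x ^ (-(α + s) - 1) = x ^ (-α - 1) * x ^ (-s) := by
    rw [← rpow_add hx]; ring_nf
  have hexp : exp (-(β - t) / x) = exp (-β / x) * exp (t / x) := by
    rw [← exp_add]; ring_nf
  rw [inverseGammaPDFReal, if_pos hx, hpow, hexp]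
  ring

variable {s t : ℝ}

theorem integrable_rpow_neg_mul_exp_inverseGammaMeasure (hα : 0 < α) (hβ : 0 < β)
    (hs : 0 < α + s) (ht : t < β) :
    Integrable (fun x => x ^ (-s) * exp (t / x)) (inverseGammaMeasure α β) := by
  rw [integrable_inverseGammaMeasure_iff hα hβ]
  exact IntegrableOn.congr_fun
    ((integrableOn_rpow_neg_sub_one_mul_exp_neg_div hs (sub_pos.2 ht)).const_mul _)
    (fun x hx => (inverseGammaPDFReal_mul_rpow_neg_mul_exp hx).symm) measurableSet_Ioi

theorem integral_rpow_neg_mul_exp_inverseGammaMeasure (hα : 0 < α) (hβ : 0 < β)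
    (hs : 0 < α + s) (ht : t < β) :
    ∫ x, x ^ (-s) * exp (t / x) ∂inverseGammaMeasure α β =
      β ^ α / Gamma α * ((1 / (β - t)) ^ (α + s) * Gamma (α + s)) := by
  rw [integral_inverseGammaMeasure hα hβ, setIntegral_congr_fun measurableSet_Ioi
    fun x hx => inverseGammaPDFReal_mul_rpow_neg_mul_exp hx, integral_const_mul,
    integral_rpow_neg_sub_one_mul_exp_neg_div hs (sub_pos.2 ht)]

end InverseGamma

variable {Ω : Type*} [MeasurableSpace Ω] {P : Measure Ω} {n : ℕ} {X : Fin n → Ω → ℝ}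

theorem iIndepFun.measure_ge_sum_comp_le_exp_mul_integral_pow [IsFiniteMeasure P] {μ : Measure ℝ}
    (hmeas : ∀ i, Measurable (X i)) (hindep : iIndepFun X P)
    (hdist : ∀ i, P.map (X i) = μ) {g : ℝ → ℝ} (hg : Measurable g) {t : ℝ} (ht : 0 ≤ t)
    (hint : Integrable (fun x => exp (t * g x)) μ) (a : ℝ) :
    P {ω | n * a ≤ ∑ i, g (X i ω)} ≤
      ENNReal.ofReal ((exp (-(t * a)) * ∫ x, exp (t * g x) ∂μ) ^ n) := by
  set Y : Fin n → Ω → ℝ := fun i => g ∘ X i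
  have hYmeas : ∀ i, Measurable (Y i) := fun i => hg.comp (hmeas i)
  have hYindep : iIndepFun Y P := hindep.comp _ fun _ => hg
  have hF : Measurable fun x => exp (t * g x) := by fun_prop
  have hYint : ∀ i, Integrable (fun ω => exp (t * Y i ω)) P := fun i =>
    (integrable_map_measure hF.aestronglyMeasurable (hmeas i).aemeasurable).1 (hdist i ▸ hint)
  have hmgf : ∀ i, mgf (Y i) P t = ∫ x, exp (t * g x) ∂μ := fun i => by
    rw [mgf, ← hdist i, integral_map (hmeas i).aemeasurable hF.aestronglyMeasurable]
    rfl
  have hchernoff := measure_ge_le_exp_mul_mgf (X := ∑ i, Y i) (n * a) ht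
    (hYindep.integrable_exp_mul_sum hYmeas fun i _ => hYint i)
  rw [hYindep.mgf_sum hYmeas, Finset.prod_congr rfl fun i _ => hmgf i, Finset.prod_const,
    Finset.card_univ, Fintype.card_fin] at hchernoff
  have hset : {ω | n * a ≤ ∑ i, g (X i ω)} = {ω | n * a ≤ (∑ i, Y i) ω} := by
    simp [Y, Finset.sum_apply]
  rw [hset, ← ofReal_measureReal, mul_pow, ← exp_nat_mul]
  refine ENNReal.ofReal_le_ofReal (hchernoff.trans_eq ?_)
  ring_nf

section SampleMean

variable {α β z : ℝ}

theorem ae_forall_pos_of_map_eq_inverseGammaMeasure (hmeas : ∀ i, Measurable (X i))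
    (hdist : ∀ i, P.map (X i) = inverseGammaMeasure α β) : ∀ᵐ ω ∂P, ∀ i, 0 < X i ω :=
  ae_all_iff.2 fun i =>
    ae_of_ae_map (hmeas i).aemeasurable ((hdist i).symm ▸ ae_pos_inverseGammaMeasure)

variable [IsFiniteMeasure P]

theorem inverseGamma_measure_mean_le_le_neg_moment_bound (hα : 0 < α) (hβ : 0 < β)
    (hmeas : ∀ i, Measurable (X i)) (hindep : iIndepFun X P)
    (hdist : ∀ i, P.map (X i) = inverseGammaMeasure α β) (hz : 0 < z) (hzβ : α - 1 ≤ β / z) :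
    P {ω | (∑ i, X i ω) / n ≤ z} ≤
      ENNReal.ofReal ((Gamma (β / z + 1) / Gamma α * (z / β) ^ (β / z - α + 1)) ^ n) := by
  set s := β / z - α + 1
  have hs : 0 ≤ s := by linarith
  have hαs : α + s = β / z + 1 := by ring
  have hαs_pos : 0 < α + s := by rw [hαs]; positivity
  have hM : (fun x => exp (s * -log x)) =ᵐ[inverseGammaMeasure α β]
      fun x => x ^ (-s) * exp (0 / x) := ae_pos_inverseGammaMeasure.mono fun x hx => by
    dsimp only
    rw [zero_div, exp_zero, mul_one, rpow_def_of_pos hx, mul_comm, mul_neg, neg_mul]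
  have hint := integrable_rpow_neg_mul_exp_inverseGammaMeasure hα hβ hαs_pos hβ
  have halg : exp (-(s * -log z)) * (β ^ α / Gamma α * ((1 / β) ^ (α + s) * Gamma (α + s)))
      = Gamma (β / z + 1) / Gamma α * (z / β) ^ s := by
    rw [mul_neg, neg_neg, mul_comm s, ← rpow_def_of_pos hz, div_rpow hz.le hβ.le, one_div,
      inv_rpow hβ.le, rpow_add hβ, hαs]
    field_simp
  calc P {ω | (∑ i, X i ω) / n ≤ z}
      ≤ P {ω | n * -log z ≤ ∑ i, -log (X i ω)} := by
        refine measure_mono_ae ((ae_forall_pos_of_map_eq_inverseGammaMeasure hmeas hdist).mono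
          fun ω hω (hmean : _ ≤ z) => ?_)
        have := Finset.sum_log_le_card_mul_log (s := Finset.univ) (fun i _ => hω i) hz
          (by simpa using hmean)
        simp only [Finset.card_univ, Fintype.card_fin] at this
        show (n : ℝ) * -log z ≤ ∑ i, -log (X i ω)
        rw [Finset.sum_neg_distrib]
        linarith
    _ ≤ ENNReal.ofReal
          ((exp (-(s * -log z)) * ∫ x, exp (s * -log x) ∂inverseGammaMeasure α β) ^ n) :=
        hindep.measure_ge_sum_comp_le_exp_mul_integral_pow hmeas hdist measurable_log.neg
          hs (hint.congr hM.symm) _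
    _ = ENNReal.ofReal ((Gamma (β / z + 1) / Gamma α * (z / β) ^ s) ^ n) := by
        rw [integral_congr_ae hM, integral_rpow_neg_mul_exp_inverseGammaMeasure hα hβ hαs_pos hβ,
          sub_zero, halg]

theorem inverseGamma_measure_mean_le_le_mgf_inv_bound (hα : 0 < α) (hβ : 0 < β)
    (hmeas : ∀ i, Measurable (X i)) (hindep : iIndepFun X P)
    (hdist : ∀ i, P.map (X i) = inverseGammaMeasure α β) (hz : 0 < z) (hzβ : α * z ≤ β) :
    P {ω | (∑ i, X i ω) / n ≤ z} ≤
      ENNReal.ofReal (((β / (α * z)) ^ α * exp ((α * z - β) / z)) ^ n) := by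
  set t := β - α * z
  have hαz : 0 < α * z := by positivity
  have ht : t < β := sub_lt_self β hαz
  have hα0 : 0 < α + 0 := by rwa [add_zero]
  have hM : (fun x => exp (t * x⁻¹)) = fun x => x ^ (-0 : ℝ) * exp (t / x) := by
    simp [div_eq_mul_inv]
  have hint := integrable_rpow_neg_mul_exp_inverseGammaMeasure hα hβ hα0 ht
  have halg : exp (-(t * z⁻¹)) * (β ^ α / Gamma α * ((1 / (β - t)) ^ α * Gamma α))
      = (β / (α * z)) ^ α * exp ((α * z - β) / z) := by
    rw [show β - t = α * z by ring, show -(t * z⁻¹) = (α * z - β) / z by ring,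
      div_rpow hβ.le hαz.le, one_div, inv_rpow hαz.le]
    field_simp
  calc P {ω | (∑ i, X i ω) / n ≤ z}
      ≤ P {ω | n * z⁻¹ ≤ ∑ i, (X i ω)⁻¹} := by
        refine measure_mono_ae ((ae_forall_pos_of_map_eq_inverseGammaMeasure hmeas hdist).mono
          fun ω hω (hmean : _ ≤ z) => ?_)
        have := Finset.card_div_le_sum_inv (s := Finset.univ) (fun i _ => hω i) hz
          (by simpa using hmean)
        show (n : ℝ) * z⁻¹ ≤ ∑ i, (X i ω)⁻¹
        simpa [div_eq_mul_inv] using this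
    _ ≤ ENNReal.ofReal
          ((exp (-(t * z⁻¹)) * ∫ x, exp (t * x⁻¹) ∂inverseGammaMeasure α β) ^ n) :=
        hindep.measure_ge_sum_comp_le_exp_mul_integral_pow hmeas hdist measurable_inv
          (sub_nonneg.2 hzβ) (hM ▸ hint) _
    _ = ENNReal.ofReal (((β / (α * z)) ^ α * exp ((α * z - β) / z)) ^ n) := by
        rw [hM, integral_rpow_neg_mul_exp_inverseGammaMeasure hα hβ hα0 ht]
        simp only [add_zero, halg]

end SampleMean

end ProbabilityTheory

theorem inverseGamma_sample_mean_tail_general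
    {Ω : Type*} [MeasurableSpace Ω] (P : Measure Ω) [IsProbabilityMeasure P]
    (n : ℕ) (X : Fin n → Ω → ℝ) (α β : ℝ) (hα : 0 < α) (hβ : 0 < β)
    (hmeas : ∀ i, Measurable (X i))
    (hindep : iIndepFun X P)
    (hdist : ∀ i, Measure.map (X i) P =
      volume.withDensity (fun x => ENNReal.ofReal
        (if 0 < x then β ^ α / Real.Gamma α * x ^ (-α - 1) * Real.exp (-β / x) else 0)))
    (z : ℝ) :
    (1 < α → 0 < z → z ≤ β / (α - 1) →
      P {ω | (∑ i, X i ω) / n ≤ z} ≤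
        ENNReal.ofReal
          ((Real.Gamma (β / z + 1) / Real.Gamma α * (z / β) ^ (β / z - α + 1)) ^ n)) ∧
    (0 < z → z ≤ β / α →
      P {ω | (∑ i, X i ω) / n ≤ z} ≤
        ENNReal.ofReal
          (((β / (α * z)) ^ α * Real.exp ((α * z - β) / z)) ^ n)) := by
  have hdist' : ∀ i, P.map (X i) = inverseGammaMeasure α β := hdist
  refine ⟨fun hα1 hz hzβ => ?_, fun hz hzβ => ?_⟩
  · refine inverseGamma_measure_mean_le_le_neg_moment_bound hα hβ hmeas hindep hdist' hz ?_
    rwa [le_div_iff₀ hz, ← le_div_iff₀' (sub_pos.2 hα1)]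
  · refine inverseGamma_measure_mean_le_le_mgf_inv_bound hα hβ hmeas hindep hdist' hz ?_
    rwa [le_div_iff₀' hα] at hzβ

/-- Lower tail bounds for the sample mean of `n` i.i.d. inverse gamma random variables
with parameters `α > 0`, `β > 0`. -/
theorem inverseGamma_sample_mean_tail
    {Ω : Type*} [MeasurableSpace Ω] (P : Measure Ω) [IsProbabilityMeasure P]
    (n : ℕ) (hn : 0 < n) (X : Fin n → Ω → ℝ) (α β : ℝ) (hα : 0 < α) (hβ : 0 < β)
    (hmeas : ∀ i, Measurable (X i))
    (hindep : iIndepFun X P)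
    (hdist : ∀ i, Measure.map (X i) P =
      volume.withDensity (fun x => ENNReal.ofReal
        (if 0 < x then β ^ α / Real.Gamma α * x ^ (-α - 1) * Real.exp (-β / x) else 0)))
    (z : ℝ) :
    (1 < α → 0 < z → z ≤ β / (α - 1) →
      P {ω | (∑ i, X i ω) / n ≤ z} ≤
        ENNReal.ofReal
          ((Real.Gamma (β / z + 1) / Real.Gamma α * (z / β) ^ (β / z - α + 1)) ^ n)) ∧
    (0 < z → z ≤ β / α →
      P {ω | (∑ i, X i ω) / n ≤ z} ≤
        ENNReal.ofReal
          (((β / (α * z)) ^ α * Real.exp ((α * z - β) / z)) ^ n)) :=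
  inverseGamma_sample_mean_tail_general P n X α β hα hβ hmeas hindep hdist z
end

section
/- Let X₁, …, Xₙ be i.i.d. random variables with the inverse Gaussian distribution of parameters λ > 0 and θ > 0, and let X̄ₙ = (1/n)∑_{i=1}^n Xᵢ. Then for all z with 0 < z ≤ θ, Pr{X̄ₙ ≤ z} ≤ [ exp( λ/θ − λ/(2z) − λz/(2θ²) ) ]ⁿ. -/
/-!
Chernoff: `P(∑ Xᵢ ≤ nz) ≤ e^{-tnz} M(t)ⁿ` for `t = λ/(2θ²) - λ/(2z²)`, which is `≤ 0` since
`z ≤ θ`. Exponential tilting by this `t` turns the inverse Gaussian density with mean `θ` into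
`e^{λ/θ - λ/z}` times the one with mean `z`, so `M(t) = e^{λ/θ - λ/z}` as soon as inverse Gaussian
densities are known to integrate to `1`. For that, the substitution `v = c/√x - (c/μ)√x` with
`c² = λ/2` carries `e^{-v²} dv` to `(c/2)(x^{-3/2} + x^{-1/2}/μ) e^{-λ(x-μ)²/(2μ²x)} dx`, and the
inversion `x ↦ μ²/x`, which preserves `e^{-λ(x-μ)²/(2μ²x)}`, shows that both halves contribute
equally.
-/

open MeasureTheory ProbabilityTheory Real Set

section Substitution

variable {c d : ℝ}

lemma hasDerivAt_div_sqrt_sub_mul_sqrt (c d : ℝ) {x : ℝ} (hx : 0 < x) :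
    HasDerivAt (fun y => c / √y - d * √y) (-(c / (2 * x * √x) + d / (2 * √x))) x := by
  have hsx : 0 < √x := sqrt_pos.mpr hx
  refine (((hasDerivAt_const x c).div (hasDerivAt_sqrt hx.ne') hsx.ne').sub
    ((hasDerivAt_sqrt hx.ne').const_mul d)).congr_deriv ?_
  rw [sq_sqrt hx.le]
  field_simp
  ring

lemma strictAntiOn_div_sqrt_sub_mul_sqrt (hc : 0 < c) (hd : 0 < d) :
    StrictAntiOn (fun x => c / √x - d * √x) (Ioi 0) := by
  intro x hx y _ hxy
  have hs : √x < √y := sqrt_lt_sqrt hx.le hxy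
  have : c / √y < c / √x := div_lt_div_of_pos_left hc (sqrt_pos.mpr hx) hs
  have : d * √x < d * √y := mul_lt_mul_of_pos_left hs hd
  dsimp only
  linarith

lemma image_div_sqrt_sub_mul_sqrt_Ioi (hc : 0 < c) (hd : 0 < d) :
    (fun x => c / √x - d * √x) '' Ioi 0 = univ := by
  refine eq_univ_of_forall fun v => ?_
  -- the preimage of `v` is `s²`, where `s` is the positive root of `d s² + v s - c = 0`
  set D := √(v ^ 2 + 4 * c * d)
  have hD : D ^ 2 = v ^ 2 + 4 * c * d := sq_sqrt (by positivity)
  have hvD : v < D := by nlinarith [sqrt_nonneg (v ^ 2 + 4 * c * d), mul_pos hc hd]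
  set s := (D - v) / (2 * d)
  have hs : 0 < s := div_pos (by linarith) (by positivity)
  have hroot : d * s ^ 2 + v * s = c := by
    simp only [s]
    field_simp
    linear_combination hD
  refine ⟨s ^ 2, pow_pos hs 2, ?_⟩
  simp only [sqrt_sq hs.le]
  field_simp
  linear_combination -hroot

lemma abs_deriv_div_sqrt_sub_mul_sqrt (hc : 0 < c) (hd : 0 < d) {x : ℝ} (hx : 0 < x) :
    |-(c / (2 * x * √x) + d / (2 * √x))| = c / (2 * x * √x) + d / (2 * √x) := by
  have := sqrt_pos.mpr hx
  rw [abs_neg, abs_of_pos (by positivity)]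

lemma integrableOn_gaussian_comp_div_sqrt_sub_mul_sqrt (hc : 0 < c) (hd : 0 < d) :
    IntegrableOn (fun x => (c / (2 * x * √x) + d / (2 * √x)) * exp (-(c / √x - d * √x) ^ 2))
      (Ioi 0) := by
  have h := (integrableOn_image_iff_integrableOn_abs_deriv_smul measurableSet_Ioi
    (fun x hx => (hasDerivAt_div_sqrt_sub_mul_sqrt c d hx).hasDerivWithinAt)
    (strictAntiOn_div_sqrt_sub_mul_sqrt hc hd).injOn fun v => exp (-v ^ 2)).mp
  rw [image_div_sqrt_sub_mul_sqrt_Ioi hc hd, integrableOn_univ] at h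
  refine (h (by simpa using integrable_exp_neg_mul_sq one_pos)).congr_fun (fun x hx => ?_)
    measurableSet_Ioi
  simp only [abs_deriv_div_sqrt_sub_mul_sqrt hc hd hx, smul_eq_mul]

lemma integral_gaussian_comp_div_sqrt_sub_mul_sqrt (hc : 0 < c) (hd : 0 < d) :
    ∫ x in Ioi 0, (c / (2 * x * √x) + d / (2 * √x)) * exp (-(c / √x - d * √x) ^ 2) = √π := by
  have h := integral_image_eq_integral_abs_deriv_smul measurableSet_Ioi
    (fun x hx => (hasDerivAt_div_sqrt_sub_mul_sqrt c d hx).hasDerivWithinAt)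
    (strictAntiOn_div_sqrt_sub_mul_sqrt hc hd).injOn fun v => exp (-v ^ 2)
  have hgauss : ∫ v, exp (-v ^ 2) = √π := by simpa using integral_gaussian 1
  rw [image_div_sqrt_sub_mul_sqrt_Ioi hc hd, Measure.restrict_univ, hgauss] at h
  rw [h]
  refine setIntegral_congr_fun measurableSet_Ioi fun x hx => ?_
  rw [abs_deriv_div_sqrt_sub_mul_sqrt hc hd hx, smul_eq_mul]

lemma involutive_const_div (hc : c ≠ 0) : Function.Involutive fun x : ℝ => c / x :=
  fun _ => div_div_cancel₀ hc

lemma image_const_div_Ioi (hc : 0 < c) : (fun x : ℝ => c / x) '' Ioi 0 = Ioi 0 := by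
  rw [(involutive_const_div hc.ne').image_eq_preimage_symm]
  ext x
  simp [div_pos_iff_of_pos_left hc]

lemma abs_deriv_smul_comp_const_div {μ x : ℝ} (f : ℝ → ℝ) (hμ : 0 < μ) (hx : 0 < x) :
    |-(μ ^ 2 / x ^ 2)| • (f (μ ^ 2 / x) / (μ ^ 2 / x * √(μ ^ 2 / x))) =
      f (μ ^ 2 / x) / (μ * √x) := by
  have hsx := sqrt_pos.mpr hx
  rw [abs_neg, abs_of_pos (by positivity), smul_eq_mul, sqrt_div' _ hx.le, sqrt_sq hμ.le]
  field_simp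
  rw [sq_sqrt hx.le]
  ring

lemma hasDerivWithinAt_const_div (c : ℝ) {x : ℝ} (hx : 0 < x) :
    HasDerivWithinAt (fun y => c / y) (-(c / x ^ 2)) (Ioi 0) x := by
  simpa [div_eq_mul_inv] using ((hasDerivAt_inv hx.ne').const_mul c).hasDerivWithinAt

lemma integral_Ioi_div_mul_sqrt_eq_integral_comp_sq_div {μ : ℝ} (f : ℝ → ℝ) (hμ : 0 < μ) :
    ∫ x in Ioi 0, f x / (x * √x) = ∫ x in Ioi 0, f (μ ^ 2 / x) / (μ * √x) := by
  have h := integral_image_eq_integral_abs_deriv_smul measurableSet_Ioi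
    (fun x hx => hasDerivWithinAt_const_div (μ ^ 2) hx)
    (involutive_const_div (by positivity)).injective.injOn fun x => f x / (x * √x)
  rw [image_const_div_Ioi (by positivity)] at h
  rw [h]
  exact setIntegral_congr_fun measurableSet_Ioi fun x hx => abs_deriv_smul_comp_const_div f hμ hx

end Substitution

section Normalization

variable {lam μ : ℝ}

lemma inverseGaussian_exponent_eq_neg_sq {c : ℝ} (hc : c ^ 2 = lam / 2) (hμ : μ ≠ 0) {x : ℝ}
    (hx : 0 < x) :
    -(lam * (x - μ) ^ 2) / (2 * μ ^ 2 * x) = -(c / √x - c / μ * √x) ^ 2 := by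
  have := sqrt_pos.mpr hx
  field_simp
  rw [hc, sq_sqrt hx.le]
  ring

lemma inverseGaussian_exponent_comp_sq_div (hμ : μ ≠ 0) {x : ℝ} (hx : x ≠ 0) :
    -(lam * (μ ^ 2 / x - μ) ^ 2) / (2 * μ ^ 2 * (μ ^ 2 / x)) =
      -(lam * (x - μ) ^ 2) / (2 * μ ^ 2 * x) := by
  field_simp
  ring

theorem integral_Ioi_exp_inverseGaussian_exponent_div_mul_sqrt (hlam : 0 < lam) (hμ : 0 < μ) :
    ∫ x in Ioi 0, exp (-(lam * (x - μ) ^ 2) / (2 * μ ^ 2 * x)) / (x * √x) = √(2 * π / lam) := by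
  set g : ℝ → ℝ := fun x => exp (-(lam * (x - μ) ^ 2) / (2 * μ ^ 2 * x))
  obtain ⟨c, hc, hc2⟩ : ∃ c, 0 < c ∧ c ^ 2 = lam / 2 :=
    ⟨√(lam / 2), sqrt_pos.mpr (by positivity), sq_sqrt (by positivity)⟩
  have hweight : ∀ x ∈ Ioi 0,
      (c / (2 * x * √x) + c / μ / (2 * √x)) * exp (-(c / √x - c / μ * √x) ^ 2) =
        c / 2 * (g x / (x * √x) + g (μ ^ 2 / x) / (μ * √x)) := by
    intro x hx
    have := sqrt_pos.mpr hx
    simp only [g, inverseGaussian_exponent_comp_sq_div hμ.ne' hx.ne',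
      inverseGaussian_exponent_eq_neg_sq hc2 hμ.ne' hx]
    field_simp
  have hsum : IntegrableOn (fun x => g x / (x * √x) + g (μ ^ 2 / x) / (μ * √x)) (Ioi 0) := by
    refine IntegrableOn.congr_fun ((integrableOn_gaussian_comp_div_sqrt_sub_mul_sqrt hc
      (div_pos hc hμ)).const_mul (2 / c)) (fun x hx => ?_) measurableSet_Ioi
    rw [hweight x hx]
    field_simp
  have hF : IntegrableOn (fun x => g x / (x * √x)) (Ioi 0) := by
    refine hsum.mono' (Measurable.aestronglyMeasurable (by fun_prop)) ?_
    refine (ae_restrict_iff' measurableSet_Ioi).2 (ae_of_all _ fun x (hx : 0 < x) => ?_)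
    have := sqrt_pos.mpr hx
    rw [norm_of_nonneg (by positivity)]
    exact le_add_of_nonneg_right (by positivity)
  have hG := (integrable_add_iff_integrable_right' hF).1 hsum
  have h := integral_gaussian_comp_div_sqrt_sub_mul_sqrt hc (div_pos hc hμ)
  rw [setIntegral_congr_fun measurableSet_Ioi hweight, integral_const_mul, integral_add hF hG,
    ← integral_Ioi_div_mul_sqrt_eq_integral_comp_sq_div g hμ] at h
  rw [show 2 * π / lam = π / c ^ 2 by rw [hc2]; field_simp, sqrt_div' _ (sq_nonneg c),
    sqrt_sq hc.le, eq_div_iff hc.ne', ← h]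
  ring

end Normalization

namespace ProbabilityTheory

noncomputable def inverseGaussianPDFReal (lam θ x : ℝ) : ℝ :=
  if 0 < x then √(lam / (2 * π * x ^ 3)) * exp (-(lam * (x - θ) ^ 2) / (2 * θ ^ 2 * x)) else 0

noncomputable def inverseGaussianReal (lam θ : ℝ) : Measure ℝ :=
  volume.withDensity fun x => ENNReal.ofReal (inverseGaussianPDFReal lam θ x)

section InverseGaussian

variable {lam θ μ : ℝ}

lemma inverseGaussianPDFReal_nonneg (lam θ x : ℝ) : 0 ≤ inverseGaussianPDFReal lam θ x := by
  unfold inverseGaussianPDFReal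
  split_ifs <;> positivity

lemma measurable_inverseGaussianPDFReal (lam θ : ℝ) : Measurable (inverseGaussianPDFReal lam θ) :=
  Measurable.ite measurableSet_Ioi (by fun_prop) measurable_const

lemma inverseGaussianPDFReal_of_pos {x : ℝ} (hx : 0 < x) :
    inverseGaussianPDFReal lam θ x =
      √(lam / (2 * π)) * (exp (-(lam * (x - θ) ^ 2) / (2 * θ ^ 2 * x)) / (x * √x)) := by
  have hx3 : √(x ^ 3) = x * √x := by
    rw [pow_succ, sqrt_mul (by positivity), sqrt_sq hx.le]
  rw [inverseGaussianPDFReal, if_pos hx, ← div_div, sqrt_div' _ (by positivity), hx3]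
  ring

lemma inverseGaussianPDFReal_of_nonpos {x : ℝ} (hx : x ≤ 0) : inverseGaussianPDFReal lam θ x = 0 :=
  if_neg hx.not_gt

theorem integral_inverseGaussianPDFReal (hlam : 0 < lam) (hθ : 0 < θ) :
    ∫ x, inverseGaussianPDFReal lam θ x = 1 := by
  rw [← setIntegral_eq_integral_of_forall_compl_eq_zero (s := Ioi 0) fun x hx =>
      inverseGaussianPDFReal_of_nonpos (not_lt.mp hx),
    setIntegral_congr_fun measurableSet_Ioi fun x hx => inverseGaussianPDFReal_of_pos hx,
    integral_const_mul, integral_Ioi_exp_inverseGaussian_exponent_div_mul_sqrt hlam hθ,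
    ← sqrt_mul (by positivity)]
  field_simp
  exact sqrt_one

lemma exp_mul_inverseGaussianPDFReal (hθ : θ ≠ 0) (hμ : μ ≠ 0) (x : ℝ) :
    exp ((lam / (2 * θ ^ 2) - lam / (2 * μ ^ 2)) * x) * inverseGaussianPDFReal lam θ x =
      exp (lam / θ - lam / μ) * inverseGaussianPDFReal lam μ x := by
  rcases le_or_gt x 0 with hx | hx
  · simp [inverseGaussianPDFReal_of_nonpos hx]
  have hexp : (lam / (2 * θ ^ 2) - lam / (2 * μ ^ 2)) * x + -(lam * (x - θ) ^ 2) / (2 * θ ^ 2 * x)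
      = lam / θ - lam / μ + -(lam * (x - μ) ^ 2) / (2 * μ ^ 2 * x) := by
    field_simp
    ring
  simp only [inverseGaussianPDFReal, if_pos hx]
  rw [mul_left_comm, ← exp_add, hexp, exp_add]
  ring

lemma integrable_inverseGaussianReal_iff {f : ℝ → ℝ} :
    Integrable f (inverseGaussianReal lam θ) ↔
      Integrable (fun x => inverseGaussianPDFReal lam θ x * f x) := by
  rw [inverseGaussianReal, integrable_withDensity_iff_integrable_smul'
    (measurable_inverseGaussianPDFReal lam θ).ennreal_ofReal (ae_of_all _ fun _ => by simp)]
  simp only [ENNReal.toReal_ofReal (inverseGaussianPDFReal_nonneg _ _ _), smul_eq_mul]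

lemma integral_inverseGaussianReal_eq (f : ℝ → ℝ) :
    ∫ x, f x ∂inverseGaussianReal lam θ = ∫ x, inverseGaussianPDFReal lam θ x * f x := by
  rw [inverseGaussianReal, integral_withDensity_eq_integral_toReal_smul
    (measurable_inverseGaussianPDFReal lam θ).ennreal_ofReal (ae_of_all _ fun _ => by simp)]
  simp only [ENNReal.toReal_ofReal (inverseGaussianPDFReal_nonneg _ _ _), smul_eq_mul]

lemma integrable_exp_mul_inverseGaussianReal (hlam : 0 < lam) (hθ : 0 < θ) (hμ : 0 < μ) :
    Integrable (fun x => exp ((lam / (2 * θ ^ 2) - lam / (2 * μ ^ 2)) * x))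
      (inverseGaussianReal lam θ) := by
  simp only [integrable_inverseGaussianReal_iff, mul_comm (inverseGaussianPDFReal lam θ _),
    exp_mul_inverseGaussianPDFReal hθ.ne' hμ.ne']
  refine Integrable.const_mul (Integrable.of_integral_ne_zero ?_) _
  simp [integral_inverseGaussianPDFReal hlam hμ]

lemma mgf_id_inverseGaussianReal (hlam : 0 < lam) (hθ : 0 < θ) (hμ : 0 < μ) :
    mgf id (inverseGaussianReal lam θ) (lam / (2 * θ ^ 2) - lam / (2 * μ ^ 2)) =
      exp (lam / θ - lam / μ) := by
  simp only [mgf, id, integral_inverseGaussianReal_eq, mul_comm (inverseGaussianPDFReal lam θ _),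
    exp_mul_inverseGaussianPDFReal hθ.ne' hμ.ne']
  rw [integral_const_mul, integral_inverseGaussianPDFReal hlam hμ, mul_one]

end InverseGaussian

end ProbabilityTheory

theorem inverseGaussian_sample_mean_tail_general
    {Ω : Type*} [MeasurableSpace Ω] (P : Measure Ω) [IsProbabilityMeasure P]
    (n : ℕ) (X : Fin n → Ω → ℝ) (lam θ : ℝ) (hlam : 0 < lam) (hθ : 0 < θ)
    (hmeas : ∀ i, Measurable (X i))
    (hindep : iIndepFun X P)
    (hdist : ∀ i, Measure.map (X i) P =
      volume.withDensity (fun x => ENNReal.ofReal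
        (if 0 < x then
          Real.sqrt (lam / (2 * π * x ^ 3))
            * Real.exp (-(lam * (x - θ) ^ 2) / (2 * θ ^ 2 * x))
        else 0)))
    (z : ℝ) (hz0 : 0 < z) (hz : z ≤ θ) :
    P {ω | (∑ i, X i ω) / n ≤ z} ≤
      ENNReal.ofReal
        ((Real.exp (lam / θ - lam / (2 * z) - lam * z / (2 * θ ^ 2))) ^ n) := by
  change ∀ i, P.map (X i) = inverseGaussianReal lam θ at hdist
  set t := lam / (2 * θ ^ 2) - lam / (2 * z ^ 2)
  have ht : t ≤ 0 := sub_nonpos.2 (by gcongr)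
  have hint (i : Fin n) : Integrable (fun ω => exp (t * X i ω)) P := by
    refine (integrable_map_measure (g := fun x => exp (t * x))
      (Measurable.aestronglyMeasurable (by fun_prop)) (hmeas i).aemeasurable).1 ?_
    rw [hdist i]
    exact integrable_exp_mul_inverseGaussianReal hlam hθ hz0
  have hmgf (i : Fin n) : mgf (X i) P t = exp (lam / θ - lam / z) := by
    rw [← mgf_id_map (hmeas i).aemeasurable, hdist i, mgf_id_inverseGaussianReal hlam hθ hz0]
  have hchernoff := measure_le_le_exp_mul_mgf (n * z) ht
    (hindep.integrable_exp_mul_sum hmeas (s := Finset.univ) fun i _ => hint i)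
  rw [hindep.mgf_sum hmeas, Finset.prod_congr rfl fun i _ => hmgf i, Finset.prod_const,
    Finset.card_univ, Fintype.card_fin] at hchernoff
  have hevent : {ω | (∑ i, X i ω) / n ≤ z} ⊆ {ω | (∑ i, X i) ω ≤ n * z} := by
    intro ω hω
    rcases n.eq_zero_or_pos with rfl | hn
    · simp
    · simpa [div_le_iff₀ (by positivity : (0 : ℝ) < n), mul_comm] using hω
  calc P {ω | (∑ i, X i ω) / n ≤ z} ≤ P {ω | (∑ i, X i) ω ≤ n * z} := measure_mono hevent
    _ = ENNReal.ofReal (P.real {ω | (∑ i, X i) ω ≤ n * z}) := (ofReal_measureReal).symm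
    _ ≤ _ := ENNReal.ofReal_le_ofReal hchernoff
    _ = _ := by
      congr 1
      rw [← exp_nat_mul, ← exp_nat_mul, ← exp_add]
      congr 1
      simp only [t]
      field_simp
      ring

/-- Lower tail bound for the sample mean of `n` i.i.d. inverse Gaussian random variables
with parameters `λ > 0`, `θ > 0`. -/
theorem inverseGaussian_sample_mean_tail
    {Ω : Type*} [MeasurableSpace Ω] (P : Measure Ω) [IsProbabilityMeasure P]
    (n : ℕ) (hn : 0 < n) (X : Fin n → Ω → ℝ) (lam θ : ℝ) (hlam : 0 < lam) (hθ : 0 < θ)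
    (hmeas : ∀ i, Measurable (X i))
    (hindep : iIndepFun X P)
    (hdist : ∀ i, Measure.map (X i) P =
      volume.withDensity (fun x => ENNReal.ofReal
        (if 0 < x then
          Real.sqrt (lam / (2 * π * x ^ 3))
            * Real.exp (-(lam * (x - θ) ^ 2) / (2 * θ ^ 2 * x))
        else 0)))
    (z : ℝ) (hz0 : 0 < z) (hz : z ≤ θ) :
    P {ω | (∑ i, X i ω) / n ≤ z} ≤
      ENNReal.ofReal
        ((Real.exp (lam / θ - lam / (2 * z) - lam * z / (2 * θ ^ 2))) ^ n) :=
  inverseGaussian_sample_mean_tail_general P n X lam θ hlam hθ hmeas hindep hdist z hz0 hz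
end

section
/- Let X₁, …, Xₙ be i.i.d. random variables with the Laplace distribution of location α ∈ ℝ and scale β > 0, and let X̄ₙ = (1/n)∑_{i=1}^n Xᵢ. Then: (i) for all z ≥ α + β, Pr{X̄ₙ ≥ z} ≤ [ ((z−α)/β)·exp(1 − (z−α)/β) ]ⁿ; (ii) for all z ≤ α − β, Pr{X̄ₙ ≤ z} ≤ [ ((α−z)/β)·exp(1 − (α−z)/β) ]ⁿ. -/
/-!
Chernoff's bound. On `|t| < 1/β` the Laplace(α, β) law has moment generating function
`e^{tα} / (1 - β²t²)`, so by independence `P(X̄ₙ ≥ z) ≤ (e^{-t(z-α)} / (1 - β²t²))ⁿ` for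
`0 ≤ t < 1/β`. With `u = z - α ≥ β` and `t = 1/β - 1/u` the base equals
`(u/β) e^{1-u/β} / (2 - β/u)`, which is at most `(u/β) e^{1-u/β}`. The lower tail is the upper
tail of the `-Xᵢ`, whose moment generating function is that of Laplace(-α, β).
-/

open MeasureTheory ProbabilityTheory Real Set

noncomputable def laplacePDFReal (α β x : ℝ) : ℝ := (2 * β)⁻¹ * exp (-|x - α| / β)

noncomputable def laplaceReal (α β : ℝ) : Measure ℝ :=
  volume.withDensity fun x => ENNReal.ofReal (laplacePDFReal α β x)

variable {α β t : ℝ}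

lemma abs_mul_lt_one_of_abs_lt_inv (hβ : 0 < β) (ht : |t| < β⁻¹) : |β * t| < 1 := by
  rw [abs_mul, abs_of_pos hβ, ← mul_inv_cancel₀ hβ.ne']
  exact mul_lt_mul_of_pos_left ht hβ

lemma measurable_laplacePDFReal (α β : ℝ) : Measurable (laplacePDFReal α β) := by
  unfold laplacePDFReal
  fun_prop

lemma laplacePDFReal_nonneg (hβ : 0 ≤ β) (α x : ℝ) : 0 ≤ laplacePDFReal α β x := by
  unfold laplacePDFReal
  positivity

lemma exp_mul_laplacePDFReal_of_lt {x : ℝ} (hβ : 0 < β) (hx : α < x) :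
    exp (t * x) * laplacePDFReal α β x = (2 * β)⁻¹ * exp (α / β) * exp ((t - β⁻¹) * x) := by
  rw [laplacePDFReal, abs_of_pos (sub_pos.2 hx), mul_left_comm, mul_assoc, ← exp_add, ← exp_add]
  congr 2
  field_simp
  ring

lemma exp_mul_laplacePDFReal_of_le {x : ℝ} (hβ : 0 < β) (hx : x ≤ α) :
    exp (t * x) * laplacePDFReal α β x = (2 * β)⁻¹ * exp (-(α / β)) * exp ((t + β⁻¹) * x) := by
  rw [laplacePDFReal, abs_of_nonpos (sub_nonpos.2 hx), mul_left_comm, mul_assoc, ← exp_add,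
    ← exp_add]
  congr 2
  field_simp
  ring

lemma integrable_exp_mul_laplacePDFReal (hβ : 0 < β) (ht : |t| < β⁻¹) :
    Integrable (fun x => exp (t * x) * laplacePDFReal α β x) := by
  obtain ⟨ht₁, ht₂⟩ := abs_lt.1 ht
  rw [← integrableOn_univ, ← Iic_union_Ioi (a := α)]
  refine IntegrableOn.union ?_ ?_
  · exact IntegrableOn.congr_fun
      ((integrableOn_exp_mul_Iic (a := t + β⁻¹) (by linarith) α).const_mul _)
      (fun x hx => (exp_mul_laplacePDFReal_of_le hβ hx).symm) measurableSet_Iic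
  · exact IntegrableOn.congr_fun
      ((integrableOn_exp_mul_Ioi (a := t - β⁻¹) (by linarith) α).const_mul _)
      (fun x hx => (exp_mul_laplacePDFReal_of_lt hβ hx).symm) measurableSet_Ioi

lemma integral_exp_mul_laplacePDFReal (hβ : 0 < β) (ht : |t| < β⁻¹) :
    ∫ x, exp (t * x) * laplacePDFReal α β x = exp (t * α) / (1 - β ^ 2 * t ^ 2) := by
  obtain ⟨ht₁, ht₂⟩ := abs_lt.1 ht
  have hint := integrable_exp_mul_laplacePDFReal (α := α) hβ ht
  rw [← intervalIntegral.integral_Iic_add_Ioi hint.integrableOn hint.integrableOn,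
    setIntegral_congr_fun measurableSet_Iic (fun x hx => exp_mul_laplacePDFReal_of_le hβ hx),
    setIntegral_congr_fun measurableSet_Ioi (fun x hx => exp_mul_laplacePDFReal_of_lt hβ hx),
    integral_const_mul, integral_const_mul, integral_exp_mul_Iic (by linarith),
    integral_exp_mul_Ioi (by linarith)]
  have e₁ : exp (-(α / β)) * exp ((t + β⁻¹) * α) = exp (t * α) := by
    rw [← exp_add]; congr 1; field_simp; ring
  have e₂ : exp (α / β) * exp ((t - β⁻¹) * α) = exp (t * α) := by
    rw [← exp_add]; congr 1; field_simp; ring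
  obtain ⟨h₁, h₂⟩ := abs_lt.1 (abs_mul_lt_one_of_abs_lt_inv hβ ht)
  have h₃ : 1 - β ^ 2 * t ^ 2 ≠ 0 := by nlinarith
  have h₁ : β * t + 1 ≠ 0 := by linarith
  have h₂ : β * t - 1 ≠ 0 := by linarith
  simp only [neg_div, mul_neg, ← mul_div_assoc, mul_assoc, e₁, e₂]
  field_simp
  ring

lemma integrable_exp_mul_laplaceReal (hβ : 0 < β) (ht : |t| < β⁻¹) :
    Integrable (fun x => exp (t * x)) (laplaceReal α β) := by
  rw [laplaceReal, integrable_withDensity_iff (measurable_laplacePDFReal α β).ennreal_ofReal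
    (ae_of_all _ fun _ => ENNReal.ofReal_lt_top)]
  refine (integrable_exp_mul_laplacePDFReal (α := α) hβ ht).congr (ae_of_all _ fun x => ?_)
  simp only [ENNReal.toReal_ofReal (laplacePDFReal_nonneg hβ.le α x)]

lemma mgf_id_laplaceReal (hβ : 0 < β) (ht : |t| < β⁻¹) :
    mgf id (laplaceReal α β) t = exp (t * α) / (1 - β ^ 2 * t ^ 2) := by
  rw [mgf, laplaceReal, integral_withDensity_eq_integral_toReal_smul
    (measurable_laplacePDFReal α β).ennreal_ofReal (ae_of_all _ fun _ => ENNReal.ofReal_lt_top),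
    ← integral_exp_mul_laplacePDFReal hβ ht]
  congr 1 with x
  rw [ENNReal.toReal_ofReal (laplacePDFReal_nonneg hβ.le α x), smul_eq_mul, mul_comm, id]

lemma exp_neg_mul_div_one_sub_sq_le {β u : ℝ} (hβ : 0 < β) (hu : β ≤ u) :
    exp (-(β⁻¹ - u⁻¹) * u) / (1 - β ^ 2 * (β⁻¹ - u⁻¹) ^ 2) ≤ u / β * exp (1 - u / β) := by
  have hu₀ : 0 < u := hβ.trans_le hu
  have hexp : -(β⁻¹ - u⁻¹) * u = 1 - u / β := by field_simp; ring
  have hden : 1 - β ^ 2 * (β⁻¹ - u⁻¹) ^ 2 = β / u * (2 - β / u) := by field_simp; ring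
  have hβu : β / u ≤ 1 := (div_le_one hu₀).2 hu
  have hβu₀ : 0 < β / u := div_pos hβ hu₀
  rw [hexp, hden, div_le_iff₀ (by nlinarith)]
  calc exp (1 - u / β) ≤ exp (1 - u / β) * (2 - β / u) :=
        le_mul_of_one_le_right (exp_pos _).le (by linarith)
    _ = u / β * exp (1 - u / β) * (β / u * (2 - β / u)) := by field_simp

section HasLaplaceMGF

variable {Ω : Type*} [MeasurableSpace Ω] {P : Measure Ω}

def HasLaplaceMGF (Y : Ω → ℝ) (P : Measure Ω) (α β : ℝ) : Prop :=
  ∀ t, |t| < β⁻¹ →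
    Integrable (fun ω => exp (t * Y ω)) P ∧ mgf Y P t = exp (t * α) / (1 - β ^ 2 * t ^ 2)

lemma hasLaplaceMGF_of_map_eq {Y : Ω → ℝ} (hβ : 0 < β) (hY : AEMeasurable Y P)
    (h : P.map Y = laplaceReal α β) : HasLaplaceMGF Y P α β := by
  intro t ht
  refine ⟨?_, by rw [← mgf_id_map hY, h, mgf_id_laplaceReal hβ ht]⟩
  have hint := integrable_exp_mul_laplaceReal (α := α) hβ ht
  rw [← h] at hint
  exact (integrable_map_measure (by fun_prop) hY).1 hint

lemma HasLaplaceMGF.neg {Y : Ω → ℝ} (h : HasLaplaceMGF Y P α β) :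
    HasLaplaceMGF (-Y) P (-α) β := by
  intro t ht
  obtain ⟨hint, hmgf⟩ := h (-t) (by rwa [abs_neg])
  refine ⟨by simpa only [Pi.neg_apply, mul_neg, neg_mul] using hint, ?_⟩
  rw [mgf_neg, hmgf, neg_sq, neg_mul, mul_neg]

variable {ι : Type*} [Fintype ι] {X : ι → Ω → ℝ}

lemma measureReal_sum_ge_le_of_hasLaplaceMGF (hindep : iIndepFun X P)
    (hmeas : ∀ i, Measurable (X i)) (hX : ∀ i, HasLaplaceMGF (X i) P α β)
    (ht₀ : 0 ≤ t) (ht : |t| < β⁻¹) (z : ℝ) :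
    P.real {ω | Fintype.card ι * z ≤ ∑ i, X i ω} ≤
      (exp (-t * (z - α)) / (1 - β ^ 2 * t ^ 2)) ^ Fintype.card ι := by
  have := hindep.isProbabilityMeasure
  have hX' := fun i => hX i t ht
  have hint := hindep.integrable_exp_mul_sum hmeas (s := Finset.univ) fun i _ => (hX' i).1
  have hchernoff := measure_ge_le_exp_mul_mgf (Fintype.card ι * z) ht₀ hint
  simp only [Finset.sum_apply] at hchernoff
  refine hchernoff.trans_eq ?_
  rw [hindep.mgf_sum hmeas, Finset.prod_congr rfl fun i _ => (hX' i).2, Finset.prod_const,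
    Finset.card_univ, div_pow, div_pow, ← mul_div_assoc, ← exp_nat_mul, ← exp_nat_mul,
    ← exp_add]
  congr 2
  ring

variable [Nonempty ι]

lemma measure_mean_ge_le_of_hasLaplaceMGF (hindep : iIndepFun X P)
    (hmeas : ∀ i, Measurable (X i)) (hX : ∀ i, HasLaplaceMGF (X i) P α β) (hβ : 0 < β)
    {z : ℝ} (hz : α + β ≤ z) :
    P {ω | z ≤ (∑ i, X i ω) / Fintype.card ι} ≤
      ENNReal.ofReal (((z - α) / β * exp (1 - (z - α) / β)) ^ Fintype.card ι) := by
  have := hindep.isProbabilityMeasure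
  have hu : β ≤ z - α := by linarith
  have hn : (0 : ℝ) < Fintype.card ι := by exact_mod_cast Fintype.card_pos
  have hset : {ω | z ≤ (∑ i, X i ω) / Fintype.card ι} =
      {ω | Fintype.card ι * z ≤ ∑ i, X i ω} := by
    ext ω
    rw [Set.mem_ofPred_eq, Set.mem_ofPred_eq, le_div_iff₀ hn, mul_comm]
  have ht₀ : 0 ≤ β⁻¹ - (z - α)⁻¹ := sub_nonneg.2 (inv_anti₀ hβ hu)
  have ht : |β⁻¹ - (z - α)⁻¹| < β⁻¹ := by
    rw [abs_of_nonneg ht₀]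
    exact sub_lt_self _ (inv_pos.2 (hβ.trans_le hu))
  have hden : 0 < 1 - β ^ 2 * (β⁻¹ - (z - α)⁻¹) ^ 2 := by
    rw [sub_pos, ← mul_pow, sq_lt_one_iff_abs_lt_one]
    exact abs_mul_lt_one_of_abs_lt_inv hβ ht
  rw [hset, ← ofReal_measureReal]
  refine ENNReal.ofReal_le_ofReal ?_
  calc P.real {ω | Fintype.card ι * z ≤ ∑ i, X i ω}
      ≤ (exp (-(β⁻¹ - (z - α)⁻¹) * (z - α)) / (1 - β ^ 2 * (β⁻¹ - (z - α)⁻¹) ^ 2))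
          ^ Fintype.card ι :=
        measureReal_sum_ge_le_of_hasLaplaceMGF hindep hmeas hX ht₀ ht z
    _ ≤ _ := pow_le_pow_left₀ (div_nonneg (exp_pos _).le hden.le)
        (exp_neg_mul_div_one_sub_sq_le hβ hu) _

lemma measure_mean_le_le_of_hasLaplaceMGF (hindep : iIndepFun X P)
    (hmeas : ∀ i, Measurable (X i)) (hX : ∀ i, HasLaplaceMGF (X i) P α β) (hβ : 0 < β)
    {z : ℝ} (hz : z ≤ α - β) :
    P {ω | (∑ i, X i ω) / Fintype.card ι ≤ z} ≤
      ENNReal.ofReal (((α - z) / β * exp (1 - (α - z) / β)) ^ Fintype.card ι) := by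
  have h := measure_mean_ge_le_of_hasLaplaceMGF (X := fun i => -X i)
    (hindep.comp (fun _ => Neg.neg) fun _ => measurable_neg) (fun i => (hmeas i).neg)
    (fun i => (hX i).neg) hβ (z := -z) (by linarith)
  rw [sub_neg_eq_add, neg_add_eq_sub] at h
  convert h using 2
  ext ω
  simp only [Set.mem_ofPred_eq, Pi.neg_apply, Finset.sum_neg_distrib, neg_div, neg_le_neg_iff]

end HasLaplaceMGF

theorem laplace_sample_mean_tail_general
    {Ω : Type*} [MeasurableSpace Ω] (P : Measure Ω)
    (n : ℕ) (hn : 0 < n) (X : Fin n → Ω → ℝ) (α β : ℝ) (hβ : 0 < β)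
    (hmeas : ∀ i, Measurable (X i))
    (hindep : iIndepFun X P)
    (hdist : ∀ i, Measure.map (X i) P =
      volume.withDensity (fun x => ENNReal.ofReal
        ((2 * β)⁻¹ * Real.exp (-|x - α| / β))))
    (z : ℝ) :
    (α + β ≤ z →
      P {ω | z ≤ (∑ i, X i ω) / n} ≤
        ENNReal.ofReal (((z - α) / β * Real.exp (1 - (z - α) / β)) ^ n)) ∧
    (z ≤ α - β →
      P {ω | (∑ i, X i ω) / n ≤ z} ≤
        ENNReal.ofReal (((α - z) / β * Real.exp (1 - (α - z) / β)) ^ n)) := by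
  have : NeZero n := ⟨hn.ne'⟩
  have hX i : HasLaplaceMGF (X i) P α β :=
    hasLaplaceMGF_of_map_eq hβ (hmeas i).aemeasurable (hdist i)
  constructor
  · simpa only [Fintype.card_fin] using measure_mean_ge_le_of_hasLaplaceMGF hindep hmeas hX hβ
  · simpa only [Fintype.card_fin] using measure_mean_le_le_of_hasLaplaceMGF hindep hmeas hX hβ

/-- Tail bounds for the sample mean of `n` i.i.d. Laplace random variables
with location `α` and scale `β > 0`. -/
theorem laplace_sample_mean_tail
    {Ω : Type*} [MeasurableSpace Ω] (P : Measure Ω) [IsProbabilityMeasure P]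
    (n : ℕ) (hn : 0 < n) (X : Fin n → Ω → ℝ) (α β : ℝ) (hβ : 0 < β)
    (hmeas : ∀ i, Measurable (X i))
    (hindep : iIndepFun X P)
    (hdist : ∀ i, Measure.map (X i) P =
      volume.withDensity (fun x => ENNReal.ofReal
        ((2 * β)⁻¹ * Real.exp (-|x - α| / β))))
    (z : ℝ) :
    (α + β ≤ z →
      P {ω | z ≤ (∑ i, X i ω) / n} ≤
        ENNReal.ofReal (((z - α) / β * Real.exp (1 - (z - α) / β)) ^ n)) ∧
    (z ≤ α - β →
      P {ω | (∑ i, X i ω) / n ≤ z} ≤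
        ENNReal.ofReal (((α - z) / β * Real.exp (1 - (α - z) / β)) ^ n)) :=
  laplace_sample_mean_tail_general P n hn X α β hβ hmeas hindep hdist z
end

section
/- Let X₁, …, Xₙ be i.i.d. random variables with the lognormal distribution of parameters μ ∈ ℝ and σ > 0, and let X̄ₙ = (1/n)∑_{i=1}^n Xᵢ. Then for all z with 0 < z ≤ e^μ, Pr{X̄ₙ ≤ z} ≤ exp( −(n/2)·((μ − ln z)/σ)² ). -/
/-!
The logarithms `Yᵢ = log Xᵢ` are i.i.d. Gaussian with mean `μ` and variance `σ²`, so each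
`μ - Yᵢ` is sub-Gaussian with parameter `σ²`. By concavity of the logarithm (AM–GM),
`X̄ₙ ≤ z` forces `∑ Yᵢ ≤ n log z`, i.e. `∑ (μ - Yᵢ) ≥ n (μ - log z) ≥ 0`, and Hoeffding's
inequality for sums of independent sub-Gaussian variables bounds the probability of this by
`exp (-(n (μ - log z))² / (2 n σ²))`.
-/

open MeasureTheory ProbabilityTheory Real Set
open scoped Finset NNReal

lemma Real.sum_log_le_card_mul_log_mean {ι : Type*} (s : Finset ι) {x : ι → ℝ}
    (hx : ∀ i ∈ s, 0 < x i) :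
    ∑ i ∈ s, log (x i) ≤ #s * log ((∑ i ∈ s, x i) / #s) := by
  rcases s.eq_empty_or_nonempty with rfl | hs
  · simp
  have hcard : (0 : ℝ) < #s := by exact_mod_cast hs.card_pos
  have hjensen := strictConcaveOn_log_Ioi.concaveOn.le_map_sum (t := s)
    (w := fun _ ↦ (#s : ℝ)⁻¹) (p := x) (fun _ _ ↦ by positivity) (by simp [hcard.ne']) hx
  simp only [smul_eq_mul, ← Finset.mul_sum] at hjensen
  rw [div_eq_inv_mul]
  exact (inv_mul_le_iff₀ hcard).1 hjensen

namespace ProbabilityTheory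

variable {Ω : Type*} {mΩ : MeasurableSpace Ω} {P : Measure Ω} {m : ℝ} {v : ℝ≥0}

lemma HasLaw.hasSubgaussianMGF_const_sub {Y : Ω → ℝ} (hY : HasLaw Y (gaussianReal m v) P) :
    HasSubgaussianMGF (fun ω ↦ m - Y ω) v P := by
  have hcentered := gaussianReal_const_sub hY m
  rw [sub_self] at hcentered
  refine ⟨fun t ↦ ?_, fun t ↦ ?_⟩
  · exact (integrable_map_measure (by fun_prop) hcentered.aemeasurable).1
      (hcentered.map_eq ▸ integrable_exp_mul_gaussianReal t)
  · simp [mgf_gaussianReal hcentered.map_eq]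

theorem measureReal_sum_le_card_mul_le_of_iIndepFun_gaussianReal {ι : Type*} {Y : ι → Ω → ℝ}
    (hindep : iIndepFun Y P) (hY : ∀ i, HasLaw (Y i) (gaussianReal m v) P) (s : Finset ι)
    {a : ℝ} (ha : a ≤ m) :
    P.real {ω | ∑ i ∈ s, Y i ω ≤ #s * a} ≤ exp (-(#s * (m - a) ^ 2 / (2 * v))) := by
  have hindep' : iIndepFun (fun i ω ↦ m - Y i ω) P :=
    hindep.comp (fun _ y ↦ m - y) fun _ ↦ by fun_prop
  have hoeffding := HasSubgaussianMGF.measure_sum_ge_le_of_iIndepFun hindep' (s := s)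
    (fun i _ ↦ (hY i).hasSubgaussianMGF_const_sub)
    (mul_nonneg (Nat.cast_nonneg #s) (sub_nonneg.2 ha))
  have hevent :
      {ω | ∑ i ∈ s, Y i ω ≤ #s * a} = {ω | #s * (m - a) ≤ ∑ i ∈ s, (m - Y i ω)} := by
    ext ω
    simp only [mem_ofPred_eq, Finset.sum_sub_distrib, Finset.sum_const, nsmul_eq_mul]
    constructor <;> intro h <;> linarith
  rw [hevent]
  refine hoeffding.trans_eq (congrArg exp ?_)
  rcases eq_or_ne (#s : ℝ) 0 with hs | hs
  · simp [hs]
  · simp only [Finset.sum_const, nsmul_eq_mul, NNReal.coe_mul, NNReal.coe_natCast]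
    field_simp

noncomputable def lognormalPDFReal (μ σ x : ℝ) : ℝ :=
  if 0 < x then (x * √(2 * π) * σ)⁻¹ * exp (-(log x - μ) ^ 2 / (2 * σ ^ 2)) else 0

noncomputable def lognormalReal (μ σ : ℝ) : Measure ℝ :=
  volume.withDensity fun x ↦ ENNReal.ofReal (lognormalPDFReal μ σ x)

variable {μ σ : ℝ}

lemma support_ofReal_lognormalPDFReal_subset :
    Function.support (fun x ↦ ENNReal.ofReal (lognormalPDFReal μ σ x)) ⊆ Ioi 0 := by
  intro x hx
  by_contra hle
  rw [mem_Ioi] at hle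
  exact hx (by simp [lognormalPDFReal, hle])

lemma measurable_lognormalPDFReal : Measurable (lognormalPDFReal μ σ) :=
  Measurable.ite measurableSet_Ioi (by fun_prop) measurable_const

lemma exp_mul_lognormalPDFReal_exp (hσ : 0 < σ) (y : ℝ) :
    exp y * lognormalPDFReal μ σ (exp y) = gaussianPDFReal μ (σ ^ 2).toNNReal y := by
  rw [lognormalPDFReal, if_pos (exp_pos y), log_exp, gaussianPDFReal,
    Real.coe_toNNReal _ (sq_nonneg σ), sqrt_mul' _ (sq_nonneg σ), sqrt_sq hσ.le]
  field_simp

lemma ae_lognormalReal_pos : ∀ᵐ x ∂lognormalReal μ σ, 0 < x := by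
  rw [lognormalReal, ae_withDensity_iff measurable_lognormalPDFReal.ennreal_ofReal]
  exact ae_of_all _ fun _ hx ↦ support_ofReal_lognormalPDFReal_subset hx

theorem map_log_lognormalReal (hσ : 0 < σ) :
    (lognormalReal μ σ).map log = gaussianReal μ (σ ^ 2).toNNReal := by
  ext s hs
  rw [Measure.map_apply measurable_log hs, gaussianReal_of_var_ne_zero _ (by simp [hσ.ne']),
    lognormalReal, withDensity_apply _ (measurable_log hs), withDensity_apply _ hs]
  have himage : exp '' s = Ioi 0 ∩ log ⁻¹' s := by
    ext x
    refine ⟨?_, fun ⟨hx, hxs⟩ ↦ ⟨log x, hxs, exp_log hx⟩⟩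
    rintro ⟨y, hy, rfl⟩
    exact ⟨exp_pos y, by simpa using hy⟩
  calc ∫⁻ x in log ⁻¹' s, ENNReal.ofReal (lognormalPDFReal μ σ x)
      = ∫⁻ x in exp '' s, ENNReal.ofReal (lognormalPDFReal μ σ x) := by
        rw [himage, ← Measure.restrict_restrict measurableSet_Ioi]
        exact (setLIntegral_eq_of_support_subset support_ofReal_lognormalPDFReal_subset).symm
    _ = ∫⁻ y in s, gaussianPDF μ (σ ^ 2).toNNReal y := by
        rw [lintegral_image_eq_lintegral_abs_deriv_mul hs
          (fun y _ ↦ (hasDerivAt_exp y).hasDerivWithinAt) exp_injective.injOn]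
        refine lintegral_congr fun y ↦ ?_
        rw [abs_of_pos (exp_pos y), ← ENNReal.ofReal_mul (exp_pos y).le,
          exp_mul_lognormalPDFReal_exp hσ, gaussianPDF]

lemma HasLaw.log_of_lognormalReal {X : Ω → ℝ} (hX : HasLaw X (lognormalReal μ σ) P)
    (hσ : 0 < σ) :
    HasLaw (fun ω ↦ log (X ω)) (gaussianReal μ (σ ^ 2).toNNReal) P :=
  HasLaw.comp ⟨by fun_prop, map_log_lognormalReal hσ⟩ hX

end ProbabilityTheory

/-- Lower tail bound for the sample mean of `n` i.i.d. lognormal random variables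
with parameters `μ` and `σ > 0`. -/
theorem lognormal_sample_mean_tail
    {Ω : Type*} [MeasurableSpace Ω] (P : Measure Ω) [IsProbabilityMeasure P]
    (n : ℕ) (hn : 0 < n) (X : Fin n → Ω → ℝ) (μ σ : ℝ) (hσ : 0 < σ)
    (hmeas : ∀ i, Measurable (X i))
    (hindep : iIndepFun X P)
    (hdist : ∀ i, Measure.map (X i) P =
      volume.withDensity (fun x => ENNReal.ofReal
        (if 0 < x then
          (x * Real.sqrt (2 * π) * σ)⁻¹
            * Real.exp (-(Real.log x - μ) ^ 2 / (2 * σ ^ 2))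
        else 0)))
    (z : ℝ) (hz0 : 0 < z) (hz : z ≤ Real.exp μ) :
    P {ω | (∑ i, X i ω) / n ≤ z} ≤
      ENNReal.ofReal (Real.exp (-(n / 2) * ((μ - Real.log z) / σ) ^ 2)) := by
  have hlaw (i : Fin n) : HasLaw (X i) (lognormalReal μ σ) P := ⟨(hmeas i).aemeasurable, hdist i⟩
  have hpos : ∀ᵐ ω ∂P, ∀ i, 0 < X i ω :=
    ae_all_iff.2 fun i ↦
      ae_of_ae_map (hmeas i).aemeasurable ((hlaw i).map_eq ▸ ae_lognormalReal_pos)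
  have hevent : {ω | (∑ i, X i ω) / n ≤ z} ≤ᵐ[P] {ω | ∑ i, log (X i ω) ≤ n * log z} := by
    filter_upwards [hpos] with ω hω hmean
    have hmean_pos : 0 < (∑ i, X i ω) / n := by
      have hsum_pos := Finset.sum_pos (fun i _ ↦ hω i) ⟨⟨0, hn⟩, Finset.mem_univ _⟩
      positivity
    calc ∑ i, log (X i ω) ≤ n * log ((∑ i, X i ω) / n) := by
          simpa using Real.sum_log_le_card_mul_log_mean Finset.univ fun i _ ↦ hω i
      _ ≤ n * log z := by gcongr; exact hmean
  have htail := measureReal_sum_le_card_mul_le_of_iIndepFun_gaussianReal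
    (hindep.comp (fun _ ↦ log) fun _ ↦ measurable_log) (fun i ↦ (hlaw i).log_of_lognormalReal hσ)
    Finset.univ (a := log z) (by simpa using log_le_log hz0 hz)
  rw [Finset.card_univ, Fintype.card_fin, Real.coe_toNNReal _ (sq_nonneg σ)] at htail
  calc P {ω | (∑ i, X i ω) / n ≤ z}
      ≤ P {ω | ∑ i, log (X i ω) ≤ n * log z} := measure_mono_ae hevent
    _ = ENNReal.ofReal (P.real {ω | ∑ i, log (X i ω) ≤ n * log z}) := (ofReal_measureReal).symm
    _ ≤ ENNReal.ofReal (exp (-(n / 2) * ((μ - log z) / σ) ^ 2)) := by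
      refine ENNReal.ofReal_le_ofReal (htail.trans_eq (congrArg exp ?_))
      field_simp
end

section
/- Let X₁, …, Xₙ be i.i.d. random variables with the Nakagami distribution of parameters m ≥ 1/2 and σ > 0, and let X̄ₙ = (1/n)∑_{i=1}^n Xᵢ. Then: (i) for every ϑ with 0 < ϑ ≤ m, Pr{ X̄ₙ ≤ σ·Γ(ϑ+1/2)/Γ(ϑ) } ≤ [ (Γ(ϑ)/Γ(m)) · (Γ(ϑ+1/2)/Γ(ϑ))^{2(m−ϑ)} ]ⁿ; (ii) for every z ≥ √m·σ, Pr{X̄ₙ ≥ z} ≤ [ (z²/(mσ²))^m · exp(m − z²/σ²) ]ⁿ. -/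
/-!
Both bounds are Chernoff bounds. For independent `Xᵢ` and any `ψ`, Markov's inequality applied to
`∏ᵢ exp (ψ (Xᵢ))` bounds the probability of an event on which `∑ᵢ ψ (Xᵢ) ≥ 0` by
`(𝔼 exp (ψ (X₁)))ⁿ`. For the Nakagami law, `𝔼 exp (a + p log X + t X²)` is a Gamma integral.
For the lower tail, take `ψ x = 2(m - ϑ) (log c - log x)`. Since `log y ≤ y - 1`, `∑ log Xᵢ ≤ n log c`
whenever `X̄ₙ ≤ c`. For the upper tail, take `ψ x = t (x² - z²)` with `t = 1/σ² - m/z²`. By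
Cauchy–Schwarz, `∑ Xᵢ² ≥ n z²` whenever `X̄ₙ ≥ z`.
-/

open MeasureTheory ProbabilityTheory Real Set
open scoped ENNReal

noncomputable def nakagamiPDF (m σ x : ℝ) : ℝ :=
  if 0 < x then 2 / Gamma m * (x ^ (2 * m - 1) / σ ^ (2 * m)) * exp (-x ^ 2 / σ ^ 2) else 0

noncomputable def nakagamiMeasure (m σ : ℝ) : Measure ℝ :=
  volume.withDensity fun x => ENNReal.ofReal (nakagamiPDF m σ x)

section Nakagami

variable {m σ : ℝ}

@[fun_prop]
lemma measurable_nakagamiPDF : Measurable (nakagamiPDF m σ) :=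
  Measurable.ite measurableSet_Ioi (by fun_prop) measurable_const

lemma ae_pos_nakagamiMeasure : ∀ᵐ x ∂nakagamiMeasure m σ, 0 < x := by
  rw [nakagamiMeasure, ae_withDensity_iff (by fun_prop)]
  refine ae_of_all _ fun x hx => ?_
  by_contra h
  simp [nakagamiPDF, h] at hx

lemma nakagamiPDF_mul_exp (hσ : 0 < σ) (a p t : ℝ) {x : ℝ} (hx : 0 < x) :
    nakagamiPDF m σ x * exp (a + p * log x + t * x ^ 2) =
      2 * exp a / (Gamma m * σ ^ (2 * m)) *
        (x ^ (2 * m + p - 1) * exp (-((1 - t * σ ^ 2) / σ ^ 2) * x ^ (2 : ℝ))) := by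
  have hxp : exp (p * log x) = x ^ p := by rw [rpow_def_of_pos hx, mul_comm]
  have hpow : x ^ (2 * m + p - 1) = x ^ (2 * m - 1) * x ^ p := by
    rw [← rpow_add hx]; ring_nf
  have hexp : exp (-x ^ 2 / σ ^ 2) * exp (t * x ^ 2) =
      exp (-((1 - t * σ ^ 2) / σ ^ 2) * x ^ 2) := by
    rw [← exp_add]; congr 1; field_simp; ring
  rw [nakagamiPDF, if_pos hx, exp_add, exp_add, hxp, hpow, rpow_two, ← hexp]
  field_simp

theorem lintegral_exp_nakagamiMeasure (hm : 0 < m) (hσ : 0 < σ) (a : ℝ) {p t : ℝ}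
    (hp : 0 < m + p / 2) (ht : t * σ ^ 2 < 1) :
    ∫⁻ x, ENNReal.ofReal (exp (a + p * log x + t * x ^ 2)) ∂nakagamiMeasure m σ =
      ENNReal.ofReal (exp a * Gamma (m + p / 2) / Gamma m * σ ^ p *
        (1 - t * σ ^ 2) ^ (-(m + p / 2))) := by
  set b := (1 - t * σ ^ 2) / σ ^ 2
  set C := 2 * exp a / (Gamma m * σ ^ (2 * m))
  have hb : 0 < b := div_pos (by linarith) (by positivity)
  have hΓ := Gamma_pos_of_pos hm
  set g : ℝ → ℝ := fun x => C * (x ^ (2 * m + p - 1) * exp (-b * x ^ (2 : ℝ)))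
  have hg : IntegrableOn g (Ioi 0) :=
    (integrableOn_rpow_mul_exp_neg_mul_rpow (by linarith) two_pos hb).const_mul C
  have hg_nonneg : ∀ᵐ x ∂volume.restrict (Ioi 0), 0 ≤ g x :=
    (ae_restrict_iff' measurableSet_Ioi).2 (ae_of_all _ fun x (hx : 0 < x) => by positivity)
  calc ∫⁻ x, ENNReal.ofReal (exp (a + p * log x + t * x ^ 2)) ∂nakagamiMeasure m σ
      = ∫⁻ x in Ioi 0, ENNReal.ofReal (g x) := by
        rw [nakagamiMeasure, lintegral_withDensity_eq_lintegral_mul _ (by fun_prop) (by fun_prop),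
          ← lintegral_indicator measurableSet_Ioi]
        refine lintegral_congr fun x => ?_
        by_cases hx : 0 < x
        · rw [indicator_of_mem (show x ∈ Ioi 0 from hx), Pi.mul_apply, ← ENNReal.ofReal_mul,
            nakagamiPDF_mul_exp hσ a p t hx]
          simp only [nakagamiPDF, if_pos hx]; positivity
        · simp [nakagamiPDF, hx]
    _ = ENNReal.ofReal (∫ x in Ioi 0, g x) :=
        (ofReal_integral_eq_lintegral_ofReal hg hg_nonneg).symm
    _ = _ := by
        congr 1
        rw [integral_const_mul, integral_rpow_mul_exp_neg_mul_rpow two_pos (by linarith) hb]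
        have hq : (2 * m + p - 1 + 1) / 2 = m + p / 2 := by ring
        have hσq : (σ ^ 2) ^ (-(m + p / 2)) = (σ ^ p * σ ^ (2 * m))⁻¹ := by
          rw [← rpow_add hσ, ← rpow_neg hσ.le, ← rpow_natCast, ← rpow_mul hσ.le]
          norm_num; ring_nf
        rw [neg_div, hq, div_rpow (by linarith) (by positivity), hσq]
        simp only [C]
        field_simp

end Nakagami

theorem measure_le_lintegral_exp_pow_of_sum_nonneg {Ω ι β : Type*} [MeasurableSpace Ω]
    [MeasurableSpace β] [Fintype ι] {P : Measure Ω} {X : ι → Ω → β} (hX : ∀ i, Measurable (X i))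
    (hindep : iIndepFun X P) {μ : Measure β} (hlaw : ∀ i, P.map (X i) = μ) {ψ : β → ℝ}
    (hψ : Measurable ψ) {A : Set Ω} (hA : ∀ᵐ ω ∂P, ω ∈ A → 0 ≤ ∑ i, ψ (X i ω)) :
    P A ≤ (∫⁻ x, ENNReal.ofReal (exp (ψ x)) ∂μ) ^ Fintype.card ι := by
  set φ : β → ℝ≥0∞ := fun x => ENNReal.ofReal (exp (ψ x))
  have hφ : Measurable φ := by fun_prop
  have hprod : ∀ ω, ∏ i, φ (X i ω) = ENNReal.ofReal (exp (∑ i, ψ (X i ω))) := fun ω => by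
    rw [exp_sum, ENNReal.ofReal_prod_of_nonneg fun i _ => (exp_pos _).le]
  calc P A ≤ P {ω | 1 ≤ ∏ i, φ (X i ω)} := by
        refine measure_mono_ae (hA.mono fun ω hω hωA => ?_)
        change 1 ≤ ∏ i, φ (X i ω)
        rw [hprod]
        exact ENNReal.one_le_ofReal.2 (one_le_exp (hω hωA))
    _ ≤ ∫⁻ ω, ∏ i, φ (X i ω) ∂P := by
        simpa using mul_meas_ge_le_lintegral₀ (by fun_prop) 1
    _ = ∏ i, ∫⁻ ω, φ (X i ω) ∂P :=
        lintegral_prod_eq_prod_lintegral_of_indepFun _ _ (hindep.comp _ fun _ => hφ)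
          fun i => hφ.comp (hX i)
    _ = (∫⁻ x, φ x ∂μ) ^ Fintype.card ι := by
        rw [← Finset.card_univ, ← Finset.prod_const]
        exact Finset.prod_congr rfl fun i _ => by rw [← hlaw i, lintegral_map hφ (hX i)]

lemma Finset.sum_log_le_card_mul_log_of_sum_div_card_le {ι : Type*} {s : Finset ι} {x : ι → ℝ}
    {c : ℝ} (hc : 0 < c) (hx : ∀ i ∈ s, 0 < x i) (hmean : (∑ i ∈ s, x i) / s.card ≤ c) :
    ∑ i ∈ s, log (x i) ≤ s.card * log c := by
  obtain rfl | hs := s.eq_empty_or_nonempty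
  · simp
  have hsum : (∑ i ∈ s, x i) / c ≤ s.card := by
    rw [div_le_iff₀ (by positivity)] at hmean
    rw [div_le_iff₀ hc]; linarith
  calc ∑ i ∈ s, log (x i) = ∑ i ∈ s, (log (x i / c) + log c) :=
        Finset.sum_congr rfl fun i hi => by rw [log_div (hx i hi).ne' hc.ne']; ring
    _ ≤ ∑ i ∈ s, (x i / c - 1 + log c) := by
        gcongr with i hi
        exact log_le_sub_one_of_pos (div_pos (hx i hi) hc)
    _ = (∑ i ∈ s, x i) / c - s.card + s.card * log c := by
        simp [Finset.sum_add_distrib, Finset.sum_sub_distrib, Finset.sum_div]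
    _ ≤ s.card * log c := by linarith

lemma Finset.card_mul_sq_le_sum_sq_of_le_sum_div_card {ι 𝕜 : Type*} [Field 𝕜] [LinearOrder 𝕜]
    [IsStrictOrderedRing 𝕜] {s : Finset ι} {f : ι → 𝕜} {z : 𝕜} (hz : 0 ≤ z)
    (hmean : z ≤ (∑ i ∈ s, f i) / s.card) : s.card * z ^ 2 ≤ ∑ i ∈ s, f i ^ 2 := by
  obtain rfl | hs := s.eq_empty_or_nonempty
  · simp
  calc (s.card : 𝕜) * z ^ 2 ≤ s.card * ((∑ i ∈ s, f i) / s.card) ^ 2 := by gcongr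
    _ ≤ s.card * ((∑ i ∈ s, f i ^ 2) / s.card) := by
        gcongr; exact sum_div_card_sq_le_sum_sq_div_card
    _ = ∑ i ∈ s, f i ^ 2 := mul_div_cancel₀ _ (by positivity)

section SampleMean

variable {Ω : Type*} [MeasurableSpace Ω] {P : Measure Ω} {n : ℕ} {X : Fin n → Ω → ℝ} {m σ : ℝ}

theorem measure_sampleMean_le_le_of_nakagami (hσ : 0 < σ) (hX : ∀ i, Measurable (X i))
    (hindep : iIndepFun X P) (hlaw : ∀ i, P.map (X i) = nakagamiMeasure m σ) {ϑ : ℝ}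
    (hϑ : 0 < ϑ) (hϑm : ϑ ≤ m) :
    P {ω | (∑ i, X i ω) / n ≤ Gamma (ϑ + 1 / 2) / Gamma ϑ * σ} ≤
      ENNReal.ofReal ((Gamma ϑ / Gamma m * (Gamma (ϑ + 1 / 2) / Gamma ϑ) ^ (2 * (m - ϑ))) ^ n) := by
  have hm : 0 < m := hϑ.trans_le hϑm
  set r := Gamma (ϑ + 1 / 2) / Gamma ϑ
  have hr : 0 < r := div_pos (Gamma_pos_of_pos (by linarith)) (Gamma_pos_of_pos hϑ)
  set s := 2 * (m - ϑ)
  have hs : 0 ≤ s := by linarith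
  have hpos : ∀ᵐ ω ∂P, ∀ i, 0 < X i ω := ae_all_iff.2 fun i =>
    ae_of_ae_map (hX i).aemeasurable (by rw [hlaw i]; exact ae_pos_nakagamiMeasure)
  have hmoment : exp (s * log (r * σ)) * Gamma (m + -s / 2) / Gamma m * σ ^ (-s) *
      (1 - 0 * σ ^ 2) ^ (-(m + -s / 2)) = Gamma ϑ / Gamma m * r ^ s := by
    rw [show m + -s / 2 = ϑ by ring, mul_comm s, ← rpow_def_of_pos (mul_pos hr hσ),
      mul_rpow hr.le hσ.le, rpow_neg hσ.le]
    have := rpow_pos_of_pos hσ s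
    field_simp
    simp
  have hB : 0 ≤ Gamma ϑ / Gamma m * r ^ s :=
    mul_nonneg (div_pos (Gamma_pos_of_pos hϑ) (Gamma_pos_of_pos hm)).le (by positivity)
  calc P _ ≤ (∫⁻ x, ENNReal.ofReal (exp (s * log (r * σ) + -s * log x + 0 * x ^ 2))
          ∂nakagamiMeasure m σ) ^ Fintype.card (Fin n) := by
        refine measure_le_lintegral_exp_pow_of_sum_nonneg hX hindep hlaw (by fun_prop)
          (hpos.mono fun ω hω hA => ?_)
        have hlog := Finset.univ.sum_log_le_card_mul_log_of_sum_div_card_le (mul_pos hr hσ)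
          (fun i _ => hω i) (by simpa using hA)
        simp only [zero_mul, add_zero, Finset.sum_add_distrib, Finset.sum_const,
          Finset.card_univ, Fintype.card_fin, nsmul_eq_mul, ← Finset.mul_sum] at hlog ⊢
        nlinarith [mul_le_mul_of_nonneg_left hlog hs]
    _ = _ := by
        rw [lintegral_exp_nakagamiMeasure hm hσ _ (by linarith) (by simp), Fintype.card_fin,
          hmoment, ENNReal.ofReal_pow hB]

theorem measure_le_sampleMean_le_of_nakagami (hm : 0 < m) (hσ : 0 < σ)
    (hX : ∀ i, Measurable (X i)) (hindep : iIndepFun X P)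
    (hlaw : ∀ i, P.map (X i) = nakagamiMeasure m σ) {z : ℝ} (hz : √m * σ ≤ z) :
    P {ω | z ≤ (∑ i, X i ω) / n} ≤
      ENNReal.ofReal (((z ^ 2 / (m * σ ^ 2)) ^ m * exp (m - z ^ 2 / σ ^ 2)) ^ n) := by
  have hz0 : 0 < z := lt_of_lt_of_le (by positivity) hz
  have hz2 : m * σ ^ 2 ≤ z ^ 2 := by
    simpa [mul_pow, sq_sqrt hm.le] using pow_le_pow_left₀ (by positivity) hz 2
  set t := (1 - m * σ ^ 2 / z ^ 2) / σ ^ 2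
  have ht : 0 ≤ t :=
    div_nonneg (by rw [sub_nonneg, div_le_one (by positivity)]; exact hz2) (by positivity)
  have htσ : 1 - t * σ ^ 2 = m * σ ^ 2 / z ^ 2 := by simp only [t]; field_simp; ring
  have htσ_lt : t * σ ^ 2 < 1 := by
    have : 0 < m * σ ^ 2 / z ^ 2 := by positivity
    linarith
  have hmoment : exp (-(t * z ^ 2)) * Gamma (m + 0 / 2) / Gamma m * σ ^ (0 : ℝ) *
      (1 - t * σ ^ 2) ^ (-(m + 0 / 2)) = (z ^ 2 / (m * σ ^ 2)) ^ m * exp (m - z ^ 2 / σ ^ 2) := by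
    have hexp : -(t * z ^ 2) = m - z ^ 2 / σ ^ 2 := by simp only [t]; field_simp; ring
    rw [htσ, zero_div, add_zero, rpow_zero, rpow_neg (by positivity), ← inv_rpow (by positivity),
      inv_div, hexp, mul_div_cancel_right₀ _ (Gamma_pos_of_pos hm).ne']
    ring
  calc P _ ≤ (∫⁻ x, ENNReal.ofReal (exp (-(t * z ^ 2) + 0 * log x + t * x ^ 2))
          ∂nakagamiMeasure m σ) ^ Fintype.card (Fin n) := by
        refine measure_le_lintegral_exp_pow_of_sum_nonneg hX hindep hlaw (by fun_prop)
          (ae_of_all _ fun ω hA => ?_)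
        have hsq := Finset.univ.card_mul_sq_le_sum_sq_of_le_sum_div_card hz0.le
          (f := fun i => X i ω) (by simpa using hA)
        simp only [zero_mul, add_zero, Finset.sum_add_distrib, Finset.sum_const,
          Finset.card_univ, Fintype.card_fin, nsmul_eq_mul, ← Finset.mul_sum] at hsq ⊢
        nlinarith [mul_le_mul_of_nonneg_left hsq ht]
    _ = _ := by
        rw [lintegral_exp_nakagamiMeasure hm hσ _ (by simpa using hm) htσ_lt, Fintype.card_fin,
          hmoment, ENNReal.ofReal_pow (by positivity)]

end SampleMean

theorem nakagami_sample_mean_tail_general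
    {Ω : Type*} [MeasurableSpace Ω] (P : Measure Ω)
    (n : ℕ) (X : Fin n → Ω → ℝ) (m σ : ℝ) (hm : 1 / 2 ≤ m) (hσ : 0 < σ)
    (hmeas : ∀ i, Measurable (X i))
    (hindep : iIndepFun X P)
    (hdist : ∀ i, Measure.map (X i) P =
      volume.withDensity (fun x => ENNReal.ofReal
        (if 0 < x then
          2 / Real.Gamma m * (x ^ (2 * m - 1) / σ ^ (2 * m)) * Real.exp (-x ^ 2 / σ ^ 2)
        else 0)))
    :
    (∀ ϑ : ℝ, 0 < ϑ → ϑ ≤ m →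
      P {ω | (∑ i, X i ω) / n ≤ Real.Gamma (ϑ + 1 / 2) / Real.Gamma ϑ * σ} ≤
        ENNReal.ofReal
          ((Real.Gamma ϑ / Real.Gamma m
            * (Real.Gamma (ϑ + 1 / 2) / Real.Gamma ϑ) ^ (2 * (m - ϑ))) ^ n)) ∧
    (∀ z : ℝ, Real.sqrt m * σ ≤ z →
      P {ω | z ≤ (∑ i, X i ω) / n} ≤
        ENNReal.ofReal
          (((z ^ 2 / (m * σ ^ 2)) ^ m * Real.exp (m - z ^ 2 / σ ^ 2)) ^ n)) := by
  have hlaw : ∀ i, P.map (X i) = nakagamiMeasure m σ := hdist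
  exact ⟨fun ϑ hϑ hϑm => measure_sampleMean_le_le_of_nakagami hσ hmeas hindep hlaw hϑ hϑm,
    fun z hz => measure_le_sampleMean_le_of_nakagami (by linarith) hσ hmeas hindep hlaw hz⟩

/-- Tail bounds for the sample mean of `n` i.i.d. Nakagami random variables
with parameters `m ≥ 1/2` and `σ > 0`. -/
theorem nakagami_sample_mean_tail
    {Ω : Type*} [MeasurableSpace Ω] (P : Measure Ω) [IsProbabilityMeasure P]
    (n : ℕ) (hn : 0 < n) (X : Fin n → Ω → ℝ) (m σ : ℝ) (hm : 1 / 2 ≤ m) (hσ : 0 < σ)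
    (hmeas : ∀ i, Measurable (X i))
    (hindep : iIndepFun X P)
    (hdist : ∀ i, Measure.map (X i) P =
      volume.withDensity (fun x => ENNReal.ofReal
        (if 0 < x then
          2 / Real.Gamma m * (x ^ (2 * m - 1) / σ ^ (2 * m)) * Real.exp (-x ^ 2 / σ ^ 2)
        else 0)))
    :
    (∀ ϑ : ℝ, 0 < ϑ → ϑ ≤ m →
      P {ω | (∑ i, X i ω) / n ≤ Real.Gamma (ϑ + 1 / 2) / Real.Gamma ϑ * σ} ≤
        ENNReal.ofReal
          ((Real.Gamma ϑ / Real.Gamma m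
            * (Real.Gamma (ϑ + 1 / 2) / Real.Gamma ϑ) ^ (2 * (m - ϑ))) ^ n)) ∧
    (∀ z : ℝ, Real.sqrt m * σ ≤ z →
      P {ω | z ≤ (∑ i, X i ω) / n} ≤
        ENNReal.ofReal
          (((z ^ 2 / (m * σ ^ 2)) ^ m * Real.exp (m - z ^ 2 / σ ^ 2)) ^ n)) :=
  nakagami_sample_mean_tail_general P n X m σ hm hσ hmeas hindep hdist
end

section
/- Let X₁, …, Xₙ be i.i.d. random variables with the Pareto distribution of parameters a > 0 and θ > 1, let X̄ₙ = (1/n)∑_{i=1}^n Xᵢ, and let μ = θa/(θ−1). Then for all ρ with 1 − 1/θ < ρ ≤ (1 − 1/θ)·exp(1/θ), Pr{X̄ₙ ≤ ρμ} ≤ [ eθ·((θ−1)/(ρθ))^θ · ln(ρθ/(θ−1)) ]ⁿ. -/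
/-!
On the event `X̄ₙ ≤ ρμ` the AM-GM inequality gives `∑ log Xᵢ ≤ n log (ρμ)`, so it suffices to
bound the lower tail of `∑ log Xᵢ`. Since `log X - log a` is exponential with rate `θ`,
`E[X ^ t] = θ a ^ t / (θ - t)` for `t < θ`, and the Chernoff bound at `t = θ - 1 / log r`, where
`r = ρμ / a = ρθ / (θ - 1)`, gives the claim; this `t` is nonpositive, as the lower-tail Chernoff
bound requires, exactly when `r ≤ exp (1 / θ)`.
-/

open MeasureTheory ProbabilityTheory Real Set

lemma withDensity_eq_paretoMeasure {a : ℝ} (ha : 0 < a) (θ : ℝ) :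
    volume.withDensity (fun x => ENNReal.ofReal
      (if a < x then θ / a * (a / x) ^ (θ + 1) else 0)) = paretoMeasure a θ := by
  refine withDensity_congr_ae ?_
  filter_upwards [volume.ae_ne a] with x hxa
  rw [paretoPDF_eq]
  rcases hxa.lt_or_gt with hx | hx
  · rw [if_neg hx.not_gt, if_neg hx.not_ge]
  · have hx0 : 0 < x := ha.trans hx
    rw [if_pos hx, if_pos hx.le, div_rpow ha.le hx0.le, rpow_add_one ha.ne', rpow_neg hx0.le]
    field_simp

lemma paretoMeasure_ae_le (a θ : ℝ) : ∀ᵐ x ∂paretoMeasure a θ, a ≤ x := by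
  simp only [ae_iff, not_le]
  change paretoMeasure a θ (Iio a) = 0
  rw [paretoMeasure, withDensity_apply _ measurableSet_Iio]
  exact lintegral_paretoPDF_of_le (r := θ) le_rfl

lemma measurable_paretoPDF (a θ : ℝ) : Measurable (paretoPDF a θ) :=
  (measurable_paretoPDFReal a θ).ennreal_ofReal

lemma paretoPDFReal_mul_exp_mul_log {a : ℝ} (ha : 0 < a) (θ t : ℝ) :
    (fun x => paretoPDFReal a θ x * exp (t * log x)) =
      (Ici a).indicator fun x => θ * a ^ θ * x ^ (t - θ - 1) := by
  ext x
  by_cases hx : a ≤ x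
  · have hx0 : 0 < x := ha.trans_le hx
    rw [indicator_of_mem (mem_Ici.2 hx), paretoPDFReal, if_pos hx, mul_comm t,
      ← rpow_def_of_pos hx0, mul_assoc, ← rpow_add hx0]
    ring_nf
  · simp [paretoPDFReal, hx]

lemma integrable_exp_mul_log_paretoMeasure {a θ t : ℝ} (ha : 0 < a) (hθ : 0 ≤ θ) (ht : t < θ) :
    Integrable (fun x => exp (t * log x)) (paretoMeasure a θ) := by
  rw [paretoMeasure, integrable_withDensity_iff_integrable_smul' (measurable_paretoPDF a θ)
    (by simp [paretoPDF])]
  simp_rw [paretoPDF, ENNReal.toReal_ofReal (paretoPDFReal_nonneg ha.le hθ _), smul_eq_mul]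
  rw [paretoPDFReal_mul_exp_mul_log ha, integrable_indicator_iff measurableSet_Ici,
    integrableOn_Ici_iff_integrableOn_Ioi]
  exact (integrableOn_Ioi_rpow_of_lt (by linarith) ha).const_mul _

lemma mgf_log_paretoMeasure {a θ t : ℝ} (ha : 0 < a) (hθ : 0 ≤ θ) (ht : t < θ) :
    mgf log (paretoMeasure a θ) t = θ / (θ - t) * a ^ t := by
  rw [mgf, paretoMeasure,
    integral_withDensity_eq_integral_toReal_smul (measurable_paretoPDF a θ) (by simp [paretoPDF])]
  simp_rw [paretoPDF, ENNReal.toReal_ofReal (paretoPDFReal_nonneg ha.le hθ _), smul_eq_mul]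
  rw [paretoPDFReal_mul_exp_mul_log ha, integral_indicator measurableSet_Ici,
    integral_Ici_eq_integral_Ioi, integral_const_mul, integral_Ioi_rpow_of_lt (by linarith) ha,
    sub_add_cancel, rpow_sub ha]
  have : a ^ θ ≠ 0 := (rpow_pos_of_pos ha θ).ne'
  have : θ - t ≠ 0 := (sub_pos.2 ht).ne'
  rw [← neg_sub θ t]
  field_simp

lemma ProbabilityTheory.iIndepFun.measureReal_sum_le_le_exp_mul_prod_mgf {Ω ι : Type*}
    [MeasurableSpace Ω] {μ : Measure Ω} [Fintype ι] {Y : ι → Ω → ℝ} (hindep : iIndepFun Y μ)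
    (hmeas : ∀ i, Measurable (Y i)) {t : ℝ} (ht : t ≤ 0)
    (hint : ∀ i, Integrable (fun ω => exp (t * Y i ω)) μ) (ε : ℝ) :
    μ.real {ω | ∑ i, Y i ω ≤ ε} ≤ exp (-t * ε) * ∏ i, mgf (Y i) μ t := by
  have := hindep.isProbabilityMeasure
  have h := measure_le_le_exp_mul_mgf (X := ∑ i, Y i) ε ht
    (hindep.integrable_exp_mul_sum hmeas (s := Finset.univ) fun i _ => hint i)
  rwa [hindep.mgf_sum hmeas, Finset.sum_fn] at h

lemma Real.sum_log_le_card_mul_log_of_mean_le {ι : Type*} {s : Finset ι} {x : ι → ℝ} {c : ℝ}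
    (hx : ∀ i ∈ s, 0 < x i) (hc : (∑ i ∈ s, x i) / s.card ≤ c) :
    ∑ i ∈ s, log (x i) ≤ s.card * log c := by
  rcases s.eq_empty_or_nonempty with rfl | hs
  · simp
  have hcard : (0 : ℝ) < s.card := by exact_mod_cast hs.card_pos
  have hmean : 0 < (∑ i ∈ s, x i) / s.card := div_pos (Finset.sum_pos hx hs) hcard
  have jensen := strictConcaveOn_log_Ioi.concaveOn.le_map_sum (t := s)
    (w := fun _ => (s.card : ℝ)⁻¹) (p := x) (fun _ _ => by positivity)
    (by simp [hcard.ne']) hx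
  rw [← Finset.smul_sum, ← Finset.smul_sum, smul_eq_mul, smul_eq_mul, inv_mul_eq_div,
    inv_mul_eq_div, div_le_iff₀ hcard] at jensen
  exact jensen.trans (by rw [mul_comm]; gcongr)

-- `t = θ - (log r)⁻¹` minimises the Chernoff factor `r ^ (-t) * θ / (θ - t)` over `t < θ`.
lemma exp_neg_mul_log_mul_mgf_log_pareto_eq {a r t : ℝ} (ha : 0 < a) (hr : 1 < r) {θ : ℝ}
    (ht : θ - t = (log r)⁻¹) :
    exp (-t * log (a * r)) * (θ / (θ - t) * a ^ t) = exp 1 * θ * r⁻¹ ^ θ * log r := by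
  obtain rfl : t = θ - (log r)⁻¹ := by linarith
  have hL : log r ≠ 0 := (log_pos hr).ne'
  have hr0 : 0 < r := zero_lt_one.trans hr
  rw [sub_sub_cancel, div_inv_eq_mul, rpow_def_of_pos ha, inv_rpow hr0.le, ← rpow_neg hr0.le,
    rpow_def_of_pos hr0, log_mul ha.ne' hr0.ne']
  calc exp (-(θ - (log r)⁻¹) * (log a + log r)) * (θ * log r * exp (log a * (θ - (log r)⁻¹)))
      = θ * log r * exp (-(θ - (log r)⁻¹) * (log a + log r) + log a * (θ - (log r)⁻¹)) := by
        rw [exp_add]; ring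
    _ = θ * log r * exp (1 + log r * -θ) := by congr 2; field_simp; ring
    _ = exp 1 * θ * exp (log r * -θ) * log r := by rw [exp_add]; ring

theorem measure_mean_le_le_of_map_eq_paretoMeasure {Ω : Type*} [MeasurableSpace Ω]
    {P : Measure Ω} [IsProbabilityMeasure P] {n : ℕ} {X : Fin n → Ω → ℝ} {a θ r : ℝ}
    (ha : 0 < a) (hθ : 0 < θ) (hmeas : ∀ i, Measurable (X i)) (hindep : iIndepFun X P)
    (hX : ∀ i, P.map (X i) = paretoMeasure a θ) (hr : 1 < r) (hrθ : log r ≤ θ⁻¹) :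
    P {ω | (∑ i, X i ω) / n ≤ a * r} ≤ ENNReal.ofReal ((exp 1 * θ * r⁻¹ ^ θ * log r) ^ n) := by
  set t := θ - (log r)⁻¹
  have ht0 : t ≤ 0 := sub_nonpos.2 ((le_inv_comm₀ hθ (log_pos hr)).2 hrθ)
  have htθ : t < θ := sub_lt_self θ (inv_pos.2 (log_pos hr))
  have hint : ∀ i, Integrable (fun ω => exp (t * (log ∘ X i) ω)) P := fun i => by
    have := integrable_exp_mul_log_paretoMeasure ha hθ.le htθ
    rwa [← hX i, integrable_map_measure (by fun_prop) (hmeas i).aemeasurable] at this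
  have hmgf : ∀ i, mgf (log ∘ X i) P t = θ / (θ - t) * a ^ t := fun i => by
    rw [← mgf_log_paretoMeasure ha hθ.le htθ, ← hX i,
      mgf_map (hmeas i).aemeasurable (by fun_prop)]
  have hpos : ∀ᵐ ω ∂P, ∀ i, 0 < X i ω := ae_all_iff.2 fun i =>
    (ae_of_ae_map (hmeas i).aemeasurable (hX i ▸ paretoMeasure_ae_le a θ)).mono
      fun _ h => ha.trans_le h
  have hsub : ∀ᵐ ω ∂P, ω ∈ {ω | (∑ i, X i ω) / n ≤ a * r} →
      ω ∈ {ω | ∑ i, (log ∘ X i) ω ≤ n * log (a * r)} := by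
    filter_upwards [hpos] with ω hω hmean
    simpa using Real.sum_log_le_card_mul_log_of_mean_le (s := Finset.univ) (fun i _ => hω i)
      (by simpa using hmean)
  have hchernoff := (hindep.comp (fun _ => log) fun _ => measurable_log)
    |>.measureReal_sum_le_le_exp_mul_prod_mgf (fun i => measurable_log.comp (hmeas i)) ht0 hint
      (n * log (a * r))
  calc P _ ≤ P {ω | ∑ i, (log ∘ X i) ω ≤ n * log (a * r)} := measure_mono_ae hsub
    _ = ENNReal.ofReal (P.real {ω | ∑ i, (log ∘ X i) ω ≤ n * log (a * r)}) :=
        (ofReal_measureReal).symm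
    _ ≤ _ := ENNReal.ofReal_le_ofReal hchernoff
    _ = _ := by
      rw [Finset.prod_congr rfl fun i _ => hmgf i, Finset.prod_const, Finset.card_univ,
        Fintype.card_fin, show -t * (n * log (a * r)) = n * (-t * log (a * r)) by ring,
        exp_nat_mul, ← mul_pow,
        exp_neg_mul_log_mul_mgf_log_pareto_eq ha hr (sub_sub_cancel _ _)]

theorem pareto_sample_mean_tail_general
    {Ω : Type*} [MeasurableSpace Ω] (P : Measure Ω) [IsProbabilityMeasure P]
    (n : ℕ) (X : Fin n → Ω → ℝ) (a θ : ℝ) (ha : 0 < a) (hθ : 1 < θ)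
    (hmeas : ∀ i, Measurable (X i))
    (hindep : iIndepFun X P)
    (hdist : ∀ i, Measure.map (X i) P =
      volume.withDensity (fun x => ENNReal.ofReal
        (if a < x then θ / a * (a / x) ^ (θ + 1) else 0)))
    (ρ : ℝ) (hρ1 : 1 - 1 / θ < ρ) (hρ2 : ρ ≤ (1 - 1 / θ) * Real.exp (1 / θ)) :
    P {ω | (∑ i, X i ω) / n ≤ ρ * (θ * a / (θ - 1))} ≤
      ENNReal.ofReal
        ((Real.exp 1 * θ * ((θ - 1) / (ρ * θ)) ^ θ
          * Real.log (ρ * θ / (θ - 1))) ^ n) := by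
  have hθ0 : 0 < θ := by linarith
  have hθ1 : 0 < θ - 1 := by linarith
  set r := ρ * θ / (θ - 1) with hr
  have hr1 : 1 < r := by
    rw [hr, one_lt_div hθ1]
    calc θ - 1 = (1 - 1 / θ) * θ := by field_simp
      _ < ρ * θ := by gcongr
  have hlogr : log r ≤ θ⁻¹ := by
    rw [log_le_iff_le_exp (by positivity), hr, div_le_iff₀ hθ1, ← one_div]
    calc ρ * θ ≤ (1 - 1 / θ) * exp (1 / θ) * θ := by gcongr
      _ = exp (1 / θ) * (θ - 1) := by field_simp
  rw [show ρ * (θ * a / (θ - 1)) = a * r by rw [hr]; ring, ← inv_div]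
  exact measure_mean_le_le_of_map_eq_paretoMeasure ha hθ0 hmeas hindep
    (fun i => (hdist i).trans (withDensity_eq_paretoMeasure ha θ)) hr1 hlogr

/-- Lower tail bound for the sample mean of `n` i.i.d. Pareto random variables
with scale `a > 0` and shape `θ > 1`, relative to the mean `μ = θa/(θ−1)`. -/
theorem pareto_sample_mean_tail
    {Ω : Type*} [MeasurableSpace Ω] (P : Measure Ω) [IsProbabilityMeasure P]
    (n : ℕ) (hn : 0 < n) (X : Fin n → Ω → ℝ) (a θ : ℝ) (ha : 0 < a) (hθ : 1 < θ)
    (hmeas : ∀ i, Measurable (X i))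
    (hindep : iIndepFun X P)
    (hdist : ∀ i, Measure.map (X i) P =
      volume.withDensity (fun x => ENNReal.ofReal
        (if a < x then θ / a * (a / x) ^ (θ + 1) else 0)))
    (ρ : ℝ) (hρ1 : 1 - 1 / θ < ρ) (hρ2 : ρ ≤ (1 - 1 / θ) * Real.exp (1 / θ)) :
    P {ω | (∑ i, X i ω) / n ≤ ρ * (θ * a / (θ - 1))} ≤
      ENNReal.ofReal
        ((Real.exp 1 * θ * ((θ - 1) / (ρ * θ)) ^ θ
          * Real.log (ρ * θ / (θ - 1))) ^ n) :=
  pareto_sample_mean_tail_general P n X a θ ha hθ hmeas hindep hdist ρ hρ1 hρ2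
end

section
/- Let X be a random variable with Student's t-distribution with n degrees of freedom. Then: (i) for all z ≥ 1, Pr{|X| ≥ z} ≤ z·((n+1)/(n+z²))^{(n+1)/2}; (ii) for all z with 0 < z ≤ 1, Pr{|X| ≤ z} ≤ z·((n+1)/(n+z²))^{(n+1)/2}. -/
/-!
Write `f` for the density, `q z = (ν + 1) / (ν + z²)`, `p = (ν + 1) / 2` and `g z = z q(z)^p`
for the bound. Log-convexity of `Γ` gives `Γ(x + 1/2) ≤ √x Γ(x)`, whence `f ≤ 1/2`, so
`P(|X| ≤ z) ≤ z ≤ g z` for `z ≤ 1`. For the upper tail, `G z = g z - P(|X| ≥ z)` satisfies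
`G 1 ≥ 0` and `G → 0` at infinity. Since `f = f(1) q^p` and `g' = q^p ν (q - 1)`, the
derivative `G' = q^p (ν (q - 1) + 2 f(1))` is a positive weight times a decreasing function, so
`G` first increases and then decreases on `[1, ∞)` and is therefore nonnegative there.
-/

open MeasureTheory Real Set Filter Topology

theorem Real.Gamma_add_half_le_sqrt_mul_Gamma {x : ℝ} (hx : 0 < x) :
    Gamma (x + 1 / 2) ≤ √x * Gamma x := by
  have hΓ := Gamma_pos_of_pos hx
  have h := Gamma_mul_add_mul_le_rpow_Gamma_mul_rpow_Gamma hx (by linarith : 0 < x + 1)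
    (by norm_num : (0 : ℝ) < 1 / 2) (by norm_num : (0 : ℝ) < 1 / 2) (by norm_num)
  rw [Gamma_add_one hx.ne', mul_rpow hx.le hΓ.le, ← sqrt_eq_rpow, ← sqrt_eq_rpow] at h
  calc Gamma (x + 1 / 2) = Gamma (1 / 2 * x + 1 / 2 * (x + 1)) := by ring_nf
    _ ≤ √(Gamma x) * (√x * √(Gamma x)) := h
    _ = √x * Gamma x := by rw [mul_left_comm, mul_self_sqrt hΓ.le]

theorem nonneg_of_hasDerivAt_mul_of_antitoneOn {G w H : ℝ → ℝ} {a z : ℝ}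
    (hG : ∀ x, a ≤ x → HasDerivAt G (w x * H x) x) (hw : ∀ x, a ≤ x → 0 ≤ w x)
    (hH : AntitoneOn H (Ici a)) (ha : 0 ≤ G a) (hlim : Tendsto G atTop (𝓝 0)) (hz : a ≤ z) :
    0 ≤ G z := by
  have hcont : ContinuousOn G (Ici a) := fun x hx => (hG x hx).continuousAt.continuousWithinAt
  by_cases hHz : H z ≤ 0
  · have hanti : AntitoneOn G (Ici z) := by
      refine antitoneOn_of_hasDerivWithinAt_nonpos (f' := fun x => w x * H x) (convex_Ici z)
        (hcont.mono (Ici_subset_Ici.2 hz)) (fun x hx => ?_) fun x hx => ?_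
      all_goals rw [interior_Ici] at hx
      · exact (hG x (hz.trans hx.out.le)).hasDerivWithinAt
      · exact mul_nonpos_of_nonneg_of_nonpos (hw x (hz.trans hx.out.le))
          ((hH (mem_Ici.2 hz) (mem_Ici.2 (hz.trans hx.out.le)) hx.out.le).trans hHz)
    exact le_of_tendsto hlim (eventually_atTop.2 ⟨z, fun y hy => hanti self_mem_Ici hy hy⟩)
  · have hmono : MonotoneOn G (Icc a z) := by
      refine monotoneOn_of_hasDerivWithinAt_nonneg (f' := fun x => w x * H x) (convex_Icc a z)
        (hcont.mono Icc_subset_Ici_self) (fun x hx => ?_) fun x hx => ?_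
      all_goals rw [interior_Icc] at hx
      · exact (hG x hx.1.le).hasDerivWithinAt
      · exact mul_nonneg (hw x hx.1.le)
          ((not_le.1 hHz).le.trans (hH (mem_Ici.2 hx.1.le) (mem_Ici.2 hz) hx.2.le))
    exact ha.trans (hmono (left_mem_Icc.2 hz) (right_mem_Icc.2 hz) hz)

theorem hasDerivAt_integral_Ioi {E : Type*} [NormedAddCommGroup E] [NormedSpace ℝ E]
    [CompleteSpace E] {f : ℝ → E} (hf : Continuous f) (hint : Integrable f) (z : ℝ) :
    HasDerivAt (fun z => ∫ x in Ioi z, f x) (-f z) z := by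
  have hsplit : (fun z => ∫ x in Ioi z, f x) = fun z => (∫ x in Ioi 0, f x) - ∫ x in 0..z, f x :=
    funext fun z => eq_sub_of_add_eq'
      (intervalIntegral.integral_interval_add_Ioi hint.integrableOn hint.integrableOn)
  rw [hsplit]
  exact (hf.integral_hasStrictDerivAt 0 z).hasDerivAt.const_sub _

theorem setIntegral_abs_ge_eq_two_mul_setIntegral_Ioi {f : ℝ → ℝ}
    (heven : ∀ x, f (-x) = f x) {z : ℝ} (hz : 0 < z) :
    ∫ x in {x | z ≤ |x|}, f x = 2 * ∫ x in Ioi z, f x := by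
  have hind : ∀ x, {x : ℝ | z ≤ |x|}.indicator f x = (Ici z).indicator f |x| := by
    intro x
    rcases abs_choice x with h | h <;> simp [indicator, h, heven]
  rw [← integral_indicator (measurableSet_le measurable_const measurable_abs), funext hind,
    integral_comp_abs (f := (Ici z).indicator f), setIntegral_indicator measurableSet_Ici,
    inter_eq_right.2 (Ici_subset_Ioi.2 hz), integral_Ici_eq_integral_Ioi]

theorem integral_eq_one_of_isProbabilityMeasure_withDensity {α : Type*} [MeasurableSpace α]
    {μ : Measure α} {f : α → ℝ}
    [IsProbabilityMeasure (μ.withDensity fun x => ENNReal.ofReal (f x))]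
    (hf : AEStronglyMeasurable f μ) (hf0 : 0 ≤ᵐ[μ] f) : ∫ x, f x ∂μ = 1 := by
  rw [integral_eq_lintegral_of_nonneg_ae hf0 hf, ← setLIntegral_univ,
    ← withDensity_apply _ MeasurableSet.univ, measure_univ, ENNReal.toReal_one]

theorem measure_preimage_eq_ofReal_setIntegral {Ω α : Type*} [MeasurableSpace Ω]
    [MeasurableSpace α] {P : Measure Ω} {μ : Measure α} {X : Ω → α} {f : α → ℝ}
    (hX : Measurable X) (hdist : P.map X = μ.withDensity fun x => ENNReal.ofReal (f x))
    (hf : Integrable f μ) (hf0 : 0 ≤ᵐ[μ] f) {s : Set α} (hs : MeasurableSet s) :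
    P (X ⁻¹' s) = ENNReal.ofReal (∫ x in s, f x ∂μ) := by
  rw [← Measure.map_apply hX hs, hdist, withDensity_apply _ hs,
    ofReal_integral_eq_lintegral_ofReal hf.integrableOn (ae_restrict_of_ae hf0)]

noncomputable def studentTPDFReal (ν x : ℝ) : ℝ :=
  Gamma ((ν + 1) / 2) / (√(ν * π) * Gamma (ν / 2) * (1 + x ^ 2 / ν) ^ ((ν + 1) / 2))

section

variable {ν : ℝ}

theorem studentTPDFReal_neg (x : ℝ) : studentTPDFReal ν (-x) = studentTPDFReal ν x := by
  simp [studentTPDFReal]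

theorem studentTPDFReal_pos (hν : 0 < ν) (x : ℝ) : 0 < studentTPDFReal ν x := by
  unfold studentTPDFReal
  have := Gamma_pos_of_pos (by positivity : 0 < (ν + 1) / 2)
  have := Gamma_pos_of_pos (by positivity : 0 < ν / 2)
  positivity

theorem continuous_studentTPDFReal (hν : 0 < ν) : Continuous (studentTPDFReal ν) := by
  unfold studentTPDFReal
  refine continuous_const.div (continuous_const.mul
    ((continuous_const.add ((continuous_pow 2).div_const ν)).rpow_const fun x => ?_)) fun x => ?_
  · right; positivity
  · have := Gamma_pos_of_pos (by positivity : 0 < ν / 2)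
    positivity

theorem studentTPDFReal_le_half (hν : 0 < ν) (x : ℝ) : studentTPDFReal ν x ≤ 1 / 2 := by
  have hΓ := Gamma_pos_of_pos (by positivity : 0 < ν / 2)
  have hB : 0 < √(ν * π) * Gamma (ν / 2) := by positivity
  have hGamma : 2 * Gamma ((ν + 1) / 2) ≤ √(ν * π) * Gamma (ν / 2) := calc
    2 * Gamma ((ν + 1) / 2) = 2 * Gamma (ν / 2 + 1 / 2) := by ring_nf
    _ ≤ 2 * (√(ν / 2) * Gamma (ν / 2)) := by
      gcongr; exact Gamma_add_half_le_sqrt_mul_Gamma (by positivity)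
    _ = √(2 * ν) * Gamma (ν / 2) := by
      rw [← mul_assoc, show 2 * ν = 2 ^ 2 * (ν / 2) by ring, sqrt_mul (by norm_num),
        sqrt_sq (by norm_num)]
    _ ≤ √(ν * π) * Gamma (ν / 2) :=
      mul_le_mul_of_nonneg_right (sqrt_le_sqrt (by nlinarith [pi_gt_three])) hΓ.le
  calc studentTPDFReal ν x
      ≤ Gamma ((ν + 1) / 2) / (√(ν * π) * Gamma (ν / 2)) := by
        refine div_le_div_of_nonneg_left (Gamma_pos_of_pos (by positivity)).le hB
          (le_mul_of_one_le_right hB.le (one_le_rpow ?_ (by positivity)))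
        exact le_add_of_nonneg_right (by positivity)
    _ ≤ 1 / 2 := by rw [div_le_iff₀ hB]; linarith

theorem studentTPDFReal_eq_mul_rpow (hν : 0 < ν) (x : ℝ) :
    studentTPDFReal ν x =
      studentTPDFReal ν 1 * ((ν + 1) / (ν + x ^ 2)) ^ ((ν + 1) / 2) := by
  have hbase : ∀ y : ℝ, 1 + y ^ 2 / ν = (ν + y ^ 2) / ν := fun y => by field_simp
  simp only [studentTPDFReal, hbase]
  rw [div_rpow (by positivity) hν.le, div_rpow (by positivity) hν.le,
    div_rpow (by positivity) (by positivity)]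
  have := Gamma_pos_of_pos (by positivity : 0 < ν / 2)
  have : 0 < (ν + 1) ^ ((ν + 1) / 2) := by positivity
  have : 0 < (ν + x ^ 2) ^ ((ν + 1) / 2) := by positivity
  have : 0 < ν ^ ((ν + 1) / 2) := by positivity
  field_simp

noncomputable def studentTTailBound (ν z : ℝ) : ℝ :=
  z * ((ν + 1) / (ν + z ^ 2)) ^ ((ν + 1) / 2)

theorem studentTTailBound_one (hν : ν + 1 ≠ 0) : studentTTailBound ν 1 = 1 := by
  simp [studentTTailBound, hν]

theorem le_studentTTailBound (hν : 0 < ν) {z : ℝ} (hz₀ : 0 ≤ z) (hz₁ : z ≤ 1) :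
    z ≤ studentTTailBound ν z :=
  le_mul_of_one_le_right hz₀ <| one_le_rpow ((one_le_div (by positivity)).2 (by nlinarith))
    (by positivity)

theorem hasDerivAt_studentTTailBound (hν : 0 < ν) (z : ℝ) :
    HasDerivAt (studentTTailBound ν)
      (((ν + 1) / (ν + z ^ 2)) ^ ((ν + 1) / 2) * (ν * ((ν + 1) / (ν + z ^ 2) - 1))) z := by
  have hA : 0 < ν + z ^ 2 := by positivity
  have hq : HasDerivAt (fun y => (ν + 1) / (ν + y ^ 2))
      ((ν + 1) * (-(2 * z) / (ν + z ^ 2) ^ 2)) z := by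
    simpa [div_eq_mul_inv] using (((hasDerivAt_pow 2 z).const_add ν).inv hA.ne').const_mul (ν + 1)
  refine ((hasDerivAt_id' z).mul (hq.rpow_const (Or.inl (by positivity)))).congr_deriv ?_
  rw [rpow_sub_one (by positivity)]
  field_simp
  ring

theorem tendsto_studentTTailBound_atTop (hν : 0 < ν) :
    Tendsto (studentTTailBound ν) atTop (𝓝 0) := by
  set p := (ν + 1) / 2
  have hdecay : Tendsto (fun z : ℝ => (ν + 1) ^ p * z ^ (-ν)) atTop (𝓝 0) := by
    simpa using (tendsto_rpow_neg_atTop hν).const_mul ((ν + 1) ^ p)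
  refine squeeze_zero' ?_ ?_ hdecay
  · filter_upwards [eventually_ge_atTop 0] with z hz
    exact mul_nonneg hz (by positivity)
  · filter_upwards [eventually_gt_atTop 0] with z hz
    calc z * ((ν + 1) / (ν + z ^ 2)) ^ p ≤ z * ((ν + 1) / z ^ 2) ^ p := by
          gcongr
          linarith
      _ = (ν + 1) ^ p * z ^ (-ν) := by
          rw [div_rpow (by positivity) (by positivity), ← rpow_natCast, ← rpow_mul hz.le,
            show -ν = 1 - (2 : ℕ) * p by push_cast; ring, rpow_sub hz, rpow_one]
          ring

theorem setIntegral_Icc_studentTPDFReal_le (hν : 0 < ν) {z : ℝ} (hz : 0 ≤ z) :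
    ∫ x in Icc (-z) z, studentTPDFReal ν x ≤ z := by
  calc ∫ x in Icc (-z) z, studentTPDFReal ν x ≤ ∫ _ in Icc (-z) z, (1 / 2 : ℝ) :=
        setIntegral_mono (continuous_studentTPDFReal hν).integrableOn_Icc (by simp)
          (studentTPDFReal_le_half hν)
    _ = z := by simp [hz]; ring

theorem setIntegral_abs_ge_studentTPDFReal_le (hν : 0 < ν)
    (hone : ∫ x, studentTPDFReal ν x = 1) {z : ℝ} (hz : 1 ≤ z) :
    ∫ x in {x | z ≤ |x|}, studentTPDFReal ν x ≤ studentTTailBound ν z := by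
  set f := studentTPDFReal ν
  have hint : Integrable f := .of_integral_ne_zero (by simp [hone])
  have htail (y : ℝ) (hy : 0 < y) : ∫ x in {x | y ≤ |x|}, f x = 2 * ∫ x in Ioi y, f x :=
    setIntegral_abs_ge_eq_two_mul_setIntegral_Ioi studentTPDFReal_neg hy
  rw [htail z (by linarith), ← sub_nonneg]
  refine nonneg_of_hasDerivAt_mul_of_antitoneOn
    (G := fun y => studentTTailBound ν y - 2 * ∫ x in Ioi y, f x)
    (w := fun x => ((ν + 1) / (ν + x ^ 2)) ^ ((ν + 1) / 2))
    (H := fun x => ν * ((ν + 1) / (ν + x ^ 2) - 1) + 2 * f 1)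
    (fun x _ => ?_) (fun x _ => by positivity) ?_ ?_ ?_ hz
  · have hderivTail := hasDerivAt_integral_Ioi (continuous_studentTPDFReal hν) hint x
    refine ((hasDerivAt_studentTTailBound hν x).sub (hderivTail.const_mul 2)).congr_deriv ?_
    rw [studentTPDFReal_eq_mul_rpow hν x]
    ring
  · intro a ha b _ hab
    have hsq : a ^ 2 ≤ b ^ 2 := by nlinarith [ha.out]
    dsimp only
    gcongr
  · rw [studentTTailBound_one (by positivity), sub_nonneg, ← htail 1 one_pos, ← hone]
    exact setIntegral_le_integral hint (ae_of_all _ fun x => (studentTPDFReal_pos hν x).le)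
  · simpa using (tendsto_studentTTailBound_atTop hν).sub
      ((tendsto_integral_Ioi_zero (f := f) tendsto_id).const_mul 2)

end

/-- Two-sided tail bounds for a Student's t random variable with `n` degrees of freedom. -/
theorem studentT_tail
    {Ω : Type*} [MeasurableSpace Ω] (P : Measure Ω) [IsProbabilityMeasure P]
    (n : ℕ) (hn : 0 < n) (X : Ω → ℝ)
    (hmeas : Measurable X)
    (hdist : Measure.map X P =
      volume.withDensity (fun x => ENNReal.ofReal
        (Real.Gamma (((n : ℝ) + 1) / 2)
          / (Real.sqrt (n * π) * Real.Gamma ((n : ℝ) / 2)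
              * (1 + x ^ 2 / n) ^ (((n : ℝ) + 1) / 2))))) :
    (∀ z : ℝ, 1 ≤ z →
      P {ω | z ≤ |X ω|} ≤
        ENNReal.ofReal
          (z * (((n : ℝ) + 1) / (n + z ^ 2)) ^ (((n : ℝ) + 1) / 2))) ∧
    (∀ z : ℝ, 0 < z → z ≤ 1 →
      P {ω | |X ω| ≤ z} ≤
        ENNReal.ofReal
          (z * (((n : ℝ) + 1) / (n + z ^ 2)) ^ (((n : ℝ) + 1) / 2))) := by
  have hν : (0 : ℝ) < n := by exact_mod_cast hn
  change P.map X = volume.withDensity fun x => ENNReal.ofReal (studentTPDFReal n x) at hdist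
  have hf₀ : 0 ≤ᵐ[volume] studentTPDFReal n :=
    ae_of_all _ fun x => (studentTPDFReal_pos hν x).le
  have hone : ∫ x, studentTPDFReal n x = 1 := by
    have : IsProbabilityMeasure
        (volume.withDensity fun x => ENNReal.ofReal (studentTPDFReal n x)) :=
      hdist ▸ Measure.isProbabilityMeasure_map hmeas.aemeasurable
    exact integral_eq_one_of_isProbabilityMeasure_withDensity
      (continuous_studentTPDFReal hν).aestronglyMeasurable hf₀
  have hint : Integrable (studentTPDFReal n) := .of_integral_ne_zero (by simp [hone])
  have hP {s : Set ℝ} (hs : MeasurableSet s) :=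
    measure_preimage_eq_ofReal_setIntegral hmeas hdist hint hf₀ hs
  refine ⟨fun z hz => ?_, fun z hz₀ hz₁ => ?_⟩
  · rw [show {ω | z ≤ |X ω|} = X ⁻¹' {x | z ≤ |x|} from rfl,
      hP (measurableSet_le measurable_const measurable_abs)]
    exact ENNReal.ofReal_le_ofReal (setIntegral_abs_ge_studentTPDFReal_le hν hone hz)
  · rw [show {ω | |X ω| ≤ z} = X ⁻¹' Icc (-z) z by ext; simp [abs_le], hP measurableSet_Icc]
    exact ENNReal.ofReal_le_ofReal ((setIntegral_Icc_studentTPDFReal_le hν hz₀.le).trans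
      (le_studentTTailBound hν hz₀.le hz₁))
end

section
/- Let X₁, …, Xₙ be i.i.d. random variables, each uniformly distributed on the interval [0,1], and let X̄ₙ = (1/n)∑_{i=1}^n Xᵢ. Then: (i) for all z with 1/2 < z < 1, Pr{X̄ₙ ≥ z} ≤ ( (e^ϑ − 1)/(ϑ·e^{ϑz}) )ⁿ ≤ exp(−6n(z − 1/2)²), where ϑ > 0 satisfies z = 1 + 1/(e^ϑ − 1) − 1/ϑ; (ii) for all z with 0 < z < 1/2, Pr{X̄ₙ ≤ z} ≤ ( (e^ϑ − 1)/(ϑ·e^{ϑz}) )ⁿ ≤ exp(−6n(z − 1/2)²), where ϑ < 0 satisfies z = 1 + 1/(e^ϑ − 1) − 1/ϑ. -/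
/-!
Write `U` for a uniform variable on `[0,1]` and `B(ϑ, z) = (e^ϑ - 1)/(ϑ e^{ϑz}) = E e^{ϑ(U - z)}`.
The Chernoff bound gives `Pr{X̄ₙ ≥ z} ≤ B(ϑ, z)ⁿ` for `ϑ > 0` (and the lower tail for `ϑ < 0`).
The relation `z = 1 + 1/(e^ϑ - 1) - 1/ϑ` says that `z` is the mean of the law of `U` tilted by
`e^{ϑu}`; hence `ϑ` minimises `t ↦ E e^{t(U - z)}`. Since `E e^{t(U - 1/2)} = sinh(t/2)/(t/2)
≤ e^{t²/24}` (comparing power series), evaluating at `t = 12(z - 1/2)` gives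
`B(ϑ, z) ≤ e^{-6(z - 1/2)²}`.
-/

open MeasureTheory ProbabilityTheory Real Set

open Nat in
lemma six_pow_mul_factorial_le_factorial_two_mul_add_one (n : ℕ) :
    6 ^ n * n ! ≤ (2 * n + 1)! := by
  induction n with
  | zero => simp
  | succ n ih =>
    calc 6 ^ (n + 1) * (n + 1)! = (6 * (n + 1)) * (6 ^ n * n !) := by
          rw [factorial_succ]; ring
      _ ≤ ((2 * n + 3) * (2 * n + 2)) * (2 * n + 1)! := Nat.mul_le_mul (by nlinarith) ih
      _ = (2 * (n + 1) + 1)! := by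
          rw [show 2 * (n + 1) + 1 = 2 * n + 1 + 1 + 1 by ring, factorial_succ (2 * n + 1 + 1),
            factorial_succ (2 * n + 1)]
          ring

open Nat in
lemma sinh_le_mul_exp_sq_div_six {x : ℝ} (hx : 0 ≤ x) : sinh x ≤ x * exp (x ^ 2 / 6) := by
  rw [sinh_eq_tsum, exp_eq_exp_ℝ, NormedSpace.exp_eq_tsum ℝ, ← tsum_mul_left]
  refine x.hasSum_sinh.summable.tsum_le_tsum (fun i ↦ ?_)
    ((NormedSpace.expSeries_summable' (x ^ 2 / 6)).mul_left x)
  have hfac : ((6 ^ i * i ! : ℕ) : ℝ) ≤ (2 * i + 1)! :=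
    mod_cast six_pow_mul_factorial_le_factorial_two_mul_add_one i
  push_cast at hfac
  calc x ^ (2 * i + 1) / (2 * i + 1)! = x * (x ^ 2) ^ i / (2 * i + 1)! := by ring
    _ ≤ x * (x ^ 2) ^ i / (6 ^ i * i !) := by gcongr
    _ = x * ((i ! : ℝ)⁻¹ • (x ^ 2 / 6) ^ i) := by rw [smul_eq_mul, div_pow]; ring

lemma sinh_div_self_le (x : ℝ) : sinh x / x ≤ exp (x ^ 2 / 6) := by
  wlog hx : 0 < x generalizing x
  · rcases (not_lt.mp hx).lt_or_eq with hx | rfl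
    · simpa [neg_div_neg_eq] using this (-x) (neg_pos.mpr hx)
    · simp
  rw [div_le_iff₀' hx]
  exact sinh_le_mul_exp_sq_div_six hx.le

lemma integral_exp_mul_sub {t : ℝ} (ht : t ≠ 0) (z : ℝ) :
    ∫ u in (0 : ℝ)..1, exp (t * (u - z)) = (exp t - 1) / (t * exp (t * z)) := by
  have hsplit (u : ℝ) : exp (t * (u - z)) = (exp (t * z))⁻¹ * exp (t * u) := by
    rw [← exp_neg, ← exp_add]; ring_nf
  simp only [hsplit, intervalIntegral.integral_const_mul,
    intervalIntegral.integral_comp_mul_left _ ht, mul_zero, mul_one, integral_exp, exp_zero,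
    smul_eq_mul]
  field_simp

lemma integral_sub_mul_exp_mul_sub {ϑ z : ℝ} (hϑ : ϑ ≠ 0)
    (hz : z = 1 + 1 / (exp ϑ - 1) - 1 / ϑ) :
    ∫ u in (0 : ℝ)..1, (u - z) * exp (ϑ * (u - z)) = 0 := by
  have hderiv (u : ℝ) : HasDerivAt (fun u ↦ exp (ϑ * (u - z)) * ((u - z) / ϑ - 1 / ϑ ^ 2))
      ((u - z) * exp (ϑ * (u - z))) u := by
    have hlin : HasDerivAt (fun u : ℝ ↦ ϑ * (u - z)) ϑ u := by
      simpa using ((hasDerivAt_id u).sub_const z).const_mul ϑ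
    have hpoly : HasDerivAt (fun u : ℝ ↦ (u - z) / ϑ - 1 / ϑ ^ 2) (1 / ϑ) u := by
      simpa using (((hasDerivAt_id u).sub_const z).div_const ϑ).sub_const (1 / ϑ ^ 2)
    exact (hlin.exp.mul hpoly).congr_deriv (by field_simp; ring)
  rw [intervalIntegral.integral_eq_sub_of_hasDerivAt (fun u _ ↦ hderiv u)
    (Continuous.intervalIntegrable (by fun_prop) _ _)]
  have hE : exp ϑ - 1 ≠ 0 := sub_ne_zero.mpr (by simpa using hϑ)
  have hshift : exp (ϑ * (1 - z)) = exp ϑ * exp (ϑ * (0 - z)) := by rw [← exp_add]; ring_nf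
  rw [hshift, hz]
  field_simp
  ring

/-- Integrate `e^y ≥ 1 + y`, `y = (t - ϑ)(u - z)`, against the law tilted by `e^{ϑu}`, whose mean
is `z`. -/
lemma le_integral_exp_mul_sub {ϑ z : ℝ} (hϑ : ϑ ≠ 0)
    (hz : z = 1 + 1 / (exp ϑ - 1) - 1 / ϑ) (t : ℝ) :
    (exp ϑ - 1) / (ϑ * exp (ϑ * z)) ≤ ∫ u in (0 : ℝ)..1, exp (t * (u - z)) := calc
  (exp ϑ - 1) / (ϑ * exp (ϑ * z))
      = ∫ u in (0 : ℝ)..1, exp (ϑ * (u - z)) + (t - ϑ) * ((u - z) * exp (ϑ * (u - z))) := by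
    rw [intervalIntegral.integral_add (Continuous.intervalIntegrable (by fun_prop) _ _)
      (Continuous.intervalIntegrable (by fun_prop) _ _), intervalIntegral.integral_const_mul,
      integral_sub_mul_exp_mul_sub hϑ hz, integral_exp_mul_sub hϑ, mul_zero, add_zero]
  _ ≤ ∫ u in (0 : ℝ)..1, exp (t * (u - z)) := by
    refine intervalIntegral.integral_mono_on zero_le_one
      (Continuous.intervalIntegrable (by fun_prop) _ _)
      (Continuous.intervalIntegrable (by fun_prop) _ _) fun u _ ↦ ?_
    calc exp (ϑ * (u - z)) + (t - ϑ) * ((u - z) * exp (ϑ * (u - z)))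
        = exp (ϑ * (u - z)) * ((t - ϑ) * (u - z) + 1) := by ring
      _ ≤ exp (ϑ * (u - z)) * exp ((t - ϑ) * (u - z)) := by gcongr; exact add_one_le_exp _
      _ = exp (t * (u - z)) := by rw [← exp_add]; ring_nf

lemma integral_exp_mul_sub_le (t z : ℝ) :
    ∫ u in (0 : ℝ)..1, exp (t * (u - z)) ≤ exp (-(t * (z - 1 / 2)) + t ^ 2 / 24) := by
  rcases eq_or_ne t 0 with rfl | ht
  · simp
  have hsinh : (exp t - 1) / (t * exp (t * z)) =
      exp (-(t * (z - 1 / 2))) * (sinh (t / 2) / (t / 2)) := by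
    have hsq : exp t = exp (t / 2) ^ 2 := by rw [← exp_nat_mul]; ring_nf
    have hshift : exp (t * z) = exp (t * (z - 1 / 2)) * exp (t / 2) := by
      rw [← exp_add]; ring_nf
    rw [sinh_eq, exp_neg, exp_neg, hsq, hshift]
    field_simp
  rw [integral_exp_mul_sub ht, hsinh, exp_add]
  gcongr
  exact (sinh_div_self_le (t / 2)).trans_eq (by ring_nf)

lemma exp_sub_one_div_mul_exp_pow_le {ϑ z : ℝ} (hϑ : ϑ ≠ 0)
    (hz : z = 1 + 1 / (exp ϑ - 1) - 1 / ϑ) (n : ℕ) :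
    ((exp ϑ - 1) / (ϑ * exp (ϑ * z))) ^ n ≤ exp (-(6 * n * (z - 1 / 2) ^ 2)) := by
  have hnonneg : 0 ≤ (exp ϑ - 1) / (ϑ * exp (ϑ * z)) := integral_exp_mul_sub hϑ z ▸
    intervalIntegral.integral_nonneg zero_le_one fun u _ ↦ (exp_pos _).le
  have hle : (exp ϑ - 1) / (ϑ * exp (ϑ * z)) ≤ exp (-(6 * (z - 1 / 2) ^ 2)) :=
    (le_integral_exp_mul_sub hϑ hz (12 * (z - 1 / 2))).trans
      ((integral_exp_mul_sub_le _ _).trans_eq (by ring_nf))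
  calc ((exp ϑ - 1) / (ϑ * exp (ϑ * z))) ^ n ≤ exp (-(6 * (z - 1 / 2) ^ 2)) ^ n :=
        pow_le_pow_left₀ hnonneg hle n
    _ = exp (-(6 * n * (z - 1 / 2) ^ 2)) := by rw [← exp_nat_mul]; ring_nf

lemma withDensity_ofReal_ite_eq_restrict_Icc :
    volume.withDensity (fun x ↦ ENNReal.ofReal (if 0 ≤ x ∧ x ≤ 1 then (1 : ℝ) else 0)) =
      volume.restrict (Icc (0 : ℝ) 1) := by
  have hdens : (fun x : ℝ ↦ ENNReal.ofReal (if 0 ≤ x ∧ x ≤ 1 then (1 : ℝ) else 0)) =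
      (Icc (0 : ℝ) 1).indicator 1 := by
    ext x
    by_cases hx : 0 ≤ x ∧ x ≤ 1 <;> simp [indicator, hx]
  rw [hdens, withDensity_indicator measurableSet_Icc, withDensity_one]

section UniformLaw

variable {Ω : Type*} [MeasurableSpace Ω] {P : Measure Ω}

lemma integrable_exp_mul_of_map_eq_restrict_Icc {X : Ω → ℝ} (hX : Measurable X)
    (hlaw : P.map X = volume.restrict (Icc 0 1)) (t : ℝ) :
    Integrable (fun ω ↦ exp (t * X ω)) P := by
  have hcont : Continuous fun x : ℝ ↦ exp (t * x) := by fun_prop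
  have h : Integrable (fun x : ℝ ↦ exp (t * x)) (P.map X) := hlaw ▸ hcont.integrableOn_Icc
  exact h.comp_measurable hX

lemma mgf_of_map_eq_restrict_Icc {X : Ω → ℝ} (hX : Measurable X)
    (hlaw : P.map X = volume.restrict (Icc 0 1)) {t : ℝ} (ht : t ≠ 0) :
    mgf X P t = (exp t - 1) / t := by
  have hcont : Continuous fun x : ℝ ↦ exp (t * x) := by fun_prop
  rw [mgf, ← integral_map hX.aemeasurable hcont.aestronglyMeasurable, hlaw,
    integral_Icc_eq_integral_Ioc, ← intervalIntegral.integral_of_le zero_le_one]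
  simpa using integral_exp_mul_sub ht 0

variable {n : ℕ} {X : Fin n → Ω → ℝ}

lemma exp_neg_mul_mgf_sum_of_map_eq_restrict_Icc (hmeas : ∀ i, Measurable (X i))
    (hindep : iIndepFun X P) (hlaw : ∀ i, P.map (X i) = volume.restrict (Icc 0 1))
    {ϑ : ℝ} (hϑ : ϑ ≠ 0) (z : ℝ) :
    exp (-ϑ * (n * z)) * mgf (∑ i, X i) P ϑ = ((exp ϑ - 1) / (ϑ * exp (ϑ * z))) ^ n := by
  simp only [hindep.mgf_sum hmeas, mgf_of_map_eq_restrict_Icc (hmeas _) (hlaw _) hϑ,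
    Finset.prod_const, Finset.card_univ, Fintype.card_fin]
  rw [show -ϑ * (n * z) = n * -(ϑ * z) by ring, exp_nat_mul, exp_neg, ← mul_pow]
  field_simp

lemma measure_le_sum_div_le_of_map_eq_restrict_Icc [IsProbabilityMeasure P] (hn : 0 < n)
    (hmeas : ∀ i, Measurable (X i)) (hindep : iIndepFun X P)
    (hlaw : ∀ i, P.map (X i) = volume.restrict (Icc 0 1)) {ϑ : ℝ} (hϑ : 0 < ϑ) (z : ℝ) :
    P {ω | z ≤ (∑ i, X i ω) / n} ≤
      ENNReal.ofReal (((exp ϑ - 1) / (ϑ * exp (ϑ * z))) ^ n) := by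
  have hset : {ω | z ≤ (∑ i, X i ω) / n} = {ω | n * z ≤ (∑ i, X i) ω} := by
    ext ω
    simp [le_div_iff₀ ((Nat.cast_pos (α := ℝ)).mpr hn), mul_comm]
  rw [hset, ← ofReal_measureReal, ← exp_neg_mul_mgf_sum_of_map_eq_restrict_Icc hmeas hindep hlaw
    hϑ.ne' z]
  exact ENNReal.ofReal_le_ofReal <| measure_ge_le_exp_mul_mgf _ hϑ.le <|
    hindep.integrable_exp_mul_sum hmeas fun i _ ↦
      integrable_exp_mul_of_map_eq_restrict_Icc (hmeas i) (hlaw i) ϑ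

lemma measure_sum_div_le_le_of_map_eq_restrict_Icc [IsProbabilityMeasure P] (hn : 0 < n)
    (hmeas : ∀ i, Measurable (X i)) (hindep : iIndepFun X P)
    (hlaw : ∀ i, P.map (X i) = volume.restrict (Icc 0 1)) {ϑ : ℝ} (hϑ : ϑ < 0) (z : ℝ) :
    P {ω | (∑ i, X i ω) / n ≤ z} ≤
      ENNReal.ofReal (((exp ϑ - 1) / (ϑ * exp (ϑ * z))) ^ n) := by
  have hset : {ω | (∑ i, X i ω) / n ≤ z} = {ω | (∑ i, X i) ω ≤ n * z} := by
    ext ω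
    simp [div_le_iff₀ ((Nat.cast_pos (α := ℝ)).mpr hn), mul_comm]
  rw [hset, ← ofReal_measureReal, ← exp_neg_mul_mgf_sum_of_map_eq_restrict_Icc hmeas hindep hlaw
    hϑ.ne z]
  exact ENNReal.ofReal_le_ofReal <| measure_le_le_exp_mul_mgf _ hϑ.le <|
    hindep.integrable_exp_mul_sum hmeas fun i _ ↦
      integrable_exp_mul_of_map_eq_restrict_Icc (hmeas i) (hlaw i) ϑ

end UniformLaw

/-- Tail bounds for the sample mean of `n` i.i.d. random variables uniformly
distributed on `[0,1]`. -/
theorem uniform_sample_mean_tail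
    {Ω : Type*} [MeasurableSpace Ω] (P : Measure Ω) [IsProbabilityMeasure P]
    (n : ℕ) (hn : 0 < n) (X : Fin n → Ω → ℝ)
    (hmeas : ∀ i, Measurable (X i))
    (hindep : iIndepFun X P)
    (hdist : ∀ i, Measure.map (X i) P =
      volume.withDensity (fun x => ENNReal.ofReal
        (if 0 ≤ x ∧ x ≤ 1 then (1 : ℝ) else 0))) :
    (∀ z ϑ : ℝ, 1 / 2 < z → z < 1 → 0 < ϑ →
      z = 1 + 1 / (Real.exp ϑ - 1) - 1 / ϑ →
      P {ω | z ≤ (∑ i, X i ω) / n} ≤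
        ENNReal.ofReal (((Real.exp ϑ - 1) / (ϑ * Real.exp (ϑ * z))) ^ n) ∧
      ((Real.exp ϑ - 1) / (ϑ * Real.exp (ϑ * z))) ^ n ≤
        Real.exp (-(6 * n * (z - 1 / 2) ^ 2))) ∧
    (∀ z ϑ : ℝ, 0 < z → z < 1 / 2 → ϑ < 0 →
      z = 1 + 1 / (Real.exp ϑ - 1) - 1 / ϑ →
      P {ω | (∑ i, X i ω) / n ≤ z} ≤
        ENNReal.ofReal (((Real.exp ϑ - 1) / (ϑ * Real.exp (ϑ * z))) ^ n) ∧
      ((Real.exp ϑ - 1) / (ϑ * Real.exp (ϑ * z))) ^ n ≤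
        Real.exp (-(6 * n * (z - 1 / 2) ^ 2))) := by
  have hlaw (i : Fin n) : P.map (X i) = volume.restrict (Icc 0 1) :=
    (hdist i).trans withDensity_ofReal_ite_eq_restrict_Icc
  refine ⟨fun z ϑ _ _ hϑ hz ↦ ⟨?_, exp_sub_one_div_mul_exp_pow_le hϑ.ne' hz n⟩,
    fun z ϑ _ _ hϑ hz ↦ ⟨?_, exp_sub_one_div_mul_exp_pow_le hϑ.ne hz n⟩⟩
  · exact measure_le_sum_div_le_of_map_eq_restrict_Icc hn hmeas hindep hlaw hϑ z
  · exact measure_sum_div_le_le_of_map_eq_restrict_Icc hn hmeas hindep hlaw hϑ z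
end
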